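/- arXiv:quant-ph/0512255 — 11 statements merged into one kernel-verified Lean document; each statement's English description precedes it below -/
import Mathlib

section
/- Fannes' inequality: Let d ≥ 1 and let ρ and σ be density matrices on ℂ^d. If the trace norm ‖ρ − σ‖₁ (defined as the sum of the absolute values of the eigenvalues of the Hermitian matrix ρ − σ) is at most ε, then |S(ρ) − S(σ)| ≤ ε·log d + η(ε). -/
open scoped ComplexOrder

/-- The function `η` from Fannes' inequality: `η ε = -ε log ε` for `ε ≤ 1/e` and `1/e` otherwise. -/
noncomputable def eta (ε : ℝ) : ℝ :=
  if ε ≤ 1 / Real.exp 1 then -ε * Real.log ε else 1 / Real.exp 1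

namespace FannesAux


open Real

/-- Key elementary bound: `-x log x ≤ x log c + 1/c - x` for `c > 0`, `x ≥ 0`. -/
lemma nml_le {c x : ℝ} (hc : 0 < c) (hx : 0 ≤ x) :
    negMulLog x ≤ x * log c + 1 / c - x := by
  rcases eq_or_lt_of_le hx with h | h
  · simp [← h, negMulLog]
    positivity
  · have h1 : log (1 / (c * x)) ≤ 1 / (c * x) - 1 :=
      log_le_sub_one_of_pos (by positivity)
    have h2 : log (1 / (c * x)) = -log c - log x := by
      rw [one_div, Real.log_inv, Real.log_mul (ne_of_gt hc) (ne_of_gt h)]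
      ring
    have h3 : -log x ≤ log c + 1 / (c * x) - 1 := by linarith
    have := mul_le_mul_of_nonneg_left h3 hx
    have hx' : x * (1 / (c * x)) = 1 / c := by
      field_simp
    calc negMulLog x = x * (-log x) := by unfold negMulLog; ring
      _ ≤ x * (log c + 1 / (c * x) - 1) := mul_le_mul_of_nonneg_left h3 hx
      _ = x * log c + x * (1 / (c * x)) - x := by ring
      _ = x * log c + 1 / c - x := by rw [hx']


lemma nml_le_inv_e {x : ℝ} (hx : 0 ≤ x) : negMulLog x ≤ 1 / exp 1 := by
  have := nml_le (Real.exp_pos 1) hx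
  rw [Real.log_exp] at this; linarith

lemma nml_one_sub_le {δ : ℝ} (h0 : 0 ≤ δ) (h1 : δ ≤ 1) : negMulLog (1 - δ) ≤ δ := by
  rcases eq_or_lt_of_le h1 with h | h
  · rw [h]; norm_num [negMulLog]
  · have hpos : 0 < 1 - δ := by linarith
    have h1' : log (1 / (1 - δ)) ≤ 1 / (1 - δ) - 1 := log_le_sub_one_of_pos (by positivity)
    have h2 : log (1 / (1 - δ)) = -log (1 - δ) := by rw [one_div, Real.log_inv]
    have h3 : -log (1 - δ) ≤ 1 / (1 - δ) - 1 := by linarith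
    have := mul_le_mul_of_nonneg_left h3 (le_of_lt hpos)
    have he : (1 - δ) * (1 / (1 - δ) - 1) = δ := by field_simp; ring
    calc negMulLog (1 - δ) = (1 - δ) * (-log (1 - δ)) := by unfold negMulLog; ring
      _ ≤ (1 - δ) * (1 / (1 - δ) - 1) := mul_le_mul_of_nonneg_left h3 (le_of_lt hpos)
      _ = δ := he

lemma le_nml {δ : ℝ} (h0 : 0 ≤ δ) (h1 : δ ≤ 1 / exp 1) : δ ≤ negMulLog δ := by
  rcases eq_or_lt_of_le h0 with h | h
  · simp [← h]
  · have hlog : log δ ≤ -1 := by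
      have h2 : log δ ≤ log (1 / exp 1) := Real.log_le_log h h1
      rwa [one_div, Real.log_inv, Real.log_exp] at h2
    have : δ * 1 ≤ δ * (-log δ) := by
      apply mul_le_mul_of_nonneg_left _ h0
      linarith
    unfold negMulLog
    nlinarith


lemma nml_mono {a b : ℝ} (h0 : 0 ≤ a) (hab : a ≤ b) (hb : b ≤ 1 / exp 1) :
    negMulLog a ≤ negMulLog b := by
  rcases eq_or_lt_of_le (h0.trans hab) with h | hbpos
  · have : a = 0 := le_antisymm (h ▸ hab) h0
    simp [this, ← h]
  · set lam := a / b with hlam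
    have hlam0 : 0 ≤ lam := div_nonneg h0 hbpos.le
    have hlam1 : lam ≤ 1 := div_le_one_of_le₀ hab hbpos.le
    have ha : a = lam * b := by rw [hlam]; field_simp
    have hid : negMulLog (lam * b) = b * negMulLog lam + lam * negMulLog b :=
      negMulLog_mul lam b
    have hb0 : 0 ≤ negMulLog b := by
      apply negMulLog_nonneg hbpos.le
      calc b ≤ 1 / exp 1 := hb
        _ ≤ 1 := by rw [div_le_one (exp_pos 1)]; exact one_le_exp (by norm_num)
    have hkey : b * negMulLog lam ≤ (1 - lam) * negMulLog b := by
      have h1 : negMulLog lam ≤ 1 - lam := by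
        rcases eq_or_lt_of_le hlam0 with h' | h'
        · simp [← h']
        · have := log_le_sub_one_of_pos (show (0:ℝ) < 1/lam by positivity)
          rw [one_div, Real.log_inv] at this
          have h2 : -log lam ≤ 1/lam - 1 := by rw [one_div]; exact this
          have := mul_le_mul_of_nonneg_left h2 hlam0
          have he : lam * (1/lam - 1) = 1 - lam := by field_simp
          unfold negMulLog
          nlinarith
      have h2 : b ≤ negMulLog b := le_nml hbpos.le hb
      calc b * negMulLog lam ≤ b * (1 - lam) := by
            apply mul_le_mul_of_nonneg_left h1 hbpos.le
        _ ≤ negMulLog b * (1 - lam) := by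
            apply mul_le_mul_of_nonneg_right h2 (by linarith)
        _ = (1 - lam) * negMulLog b := by ring
    rw [ha, hid]
    nlinarith

lemma nml_subadd {s δ : ℝ} (hs : 0 ≤ s) (hδ : 0 ≤ δ) :
    negMulLog (s + δ) ≤ negMulLog s + negMulLog δ := by
  have key : ∀ x y : ℝ, 0 ≤ x → 0 ≤ y → -x * log (x + y) ≤ negMulLog x := by
    intro x y hx hy
    rcases eq_or_lt_of_le hx with h | h
    · simp [← h, negMulLog]
    · unfold negMulLog
      have : log x ≤ log (x + y) := Real.log_le_log h (by linarith)
      nlinarith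
  have h1 := key s δ hs hδ
  have h2 := key δ s hδ hs
  rw [add_comm δ s] at h2
  have : negMulLog (s + δ) = -s * log (s + δ) + -δ * log (s + δ) := by
    unfold negMulLog; ring
  linarith

lemma nml_lower {s δ : ℝ} (hs : 0 ≤ s) (hδ : 0 ≤ δ) (h1 : s + δ ≤ 1) :
    negMulLog s - negMulLog (s + δ) ≤ negMulLog (1 - δ) := by
  rcases eq_or_lt_of_le (by linarith : (0:ℝ) ≤ s + δ) with h | hpos
  · have hs0 : s = 0 := by linarith
    have hδ0 : δ = 0 := by linarith
    simp [hs0, hδ0]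
  · set a := s + δ with ha
    set mu := δ / a with hmu
    have hmu0 : 0 ≤ mu := div_nonneg hδ hpos.le
    have hmu1 : mu ≤ 1 := div_le_one_of_le₀ (by linarith) hpos.le
    have hamu : a * mu = δ := by rw [hmu]; field_simp
    have hsa : s = (1 - mu) * a := by
      have : a * mu = δ := hamu
      have : s = a - δ := by rw [ha]; ring
      rw [this, ← hamu]; ring
    have hid : negMulLog ((1 - mu) * a) =
        a * negMulLog (1 - mu) + (1 - mu) * negMulLog a := negMulLog_mul (1 - mu) a
    have ha0 : 0 ≤ negMulLog a := negMulLog_nonneg hpos.le (by linarith)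
    -- concavity: a • η(1-mu) + (1-a) • η(1) ≤ η(a(1-mu) + (1-a))
    have hconc := concaveOn_negMulLog.2 (Set.mem_Ici.2 (by linarith : (0:ℝ) ≤ 1 - mu))
      (Set.mem_Ici.2 (by norm_num : (0:ℝ) ≤ 1)) (le_of_lt hpos)
      (by linarith : (0:ℝ) ≤ 1 - a) (by ring : a + (1 - a) = 1)
    simp only [smul_eq_mul, negMulLog_one, mul_zero, add_zero] at hconc
    have heq : a * (1 - mu) + (1 - a) * 1 = 1 - δ := by
      have := hamu
      nlinarith [hamu]
    rw [heq] at hconc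
    -- η s - η a ≤ a η(1-mu) ≤ η(1-δ)
    rw [hsa, hid]
    nlinarith

lemma nml_diff_max {s δ : ℝ} (hs : 0 ≤ s) (hδ : 0 ≤ δ) (h1 : s + δ ≤ 1) :
    |negMulLog (s + δ) - negMulLog s| ≤ max (negMulLog δ) (negMulLog (1 - δ)) := by
  rw [abs_sub_le_iff]
  constructor
  · have := nml_subadd hs hδ
    have hsle : negMulLog (s + δ) - negMulLog s ≤ negMulLog δ := by linarith
    exact hsle.trans (le_max_left _ _)
  · exact (nml_lower hs hδ h1).trans (le_max_right _ _)

lemma nml_one_sub_le_log_two {δ : ℝ} (h0 : 1/2 ≤ δ) (h1 : δ ≤ 1) :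
    negMulLog (1 - δ) ≤ δ * log 2 := by
  have hlog2 : 1/2 ≤ log 2 := by
    have := Real.log_two_gt_d9
    linarith
  have := nml_le (show (0:ℝ) < 2 by norm_num) (show (0:ℝ) ≤ 1 - δ by linarith)
  -- negMulLog (1-δ) ≤ (1-δ) log 2 + 1/2 - (1-δ)
  nlinarith [this]

lemma eta_nonneg {ε : ℝ} (hε : 0 ≤ ε) : 0 ≤ eta ε := by
  unfold eta
  split_ifs with h
  · have : (-ε) * log ε = negMulLog ε := rfl
    rw [this]
    apply negMulLog_nonneg hε
    calc ε ≤ 1 / exp 1 := h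
      _ ≤ 1 := by rw [div_le_one (exp_pos 1)]; exact one_le_exp (by norm_num)
  · positivity

lemma nml_le_eta {T ε : ℝ} (hT : 0 ≤ T) (hTe : T ≤ ε) : negMulLog T ≤ eta ε := by
  unfold eta
  split_ifs with h
  · have : (-ε) * log ε = negMulLog ε := rfl
    rw [this]
    exact nml_mono hT hTe h
  · exact nml_le_inv_e hT


lemma classical_fannes {d : ℕ} (p q : Fin d → ℝ)
    (hp0 : ∀ i, 0 ≤ p i) (hq0 : ∀ i, 0 ≤ q i)
    (hp1 : ∑ i, p i = 1) (hq1 : ∑ i, q i = 1)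
    {ε : ℝ} (hεd : ∑ i, |p i - q i| ≤ ε) :
    |(∑ i, negMulLog (p i)) - ∑ i, negMulLog (q i)| ≤ ε * log d + eta ε := by
  classical
  have hd : 0 < d := by
    rcases Nat.eq_zero_or_pos d with h | h
    · subst h; simp at hp1
    · exact h
  set δ : Fin d → ℝ := fun i => |p i - q i| with hδdef
  set T : ℝ := ∑ i, δ i with hTdef
  have hδ0 : ∀ i, 0 ≤ δ i := fun i => abs_nonneg _
  have hT0 : 0 ≤ T := Finset.sum_nonneg fun i _ => hδ0 i
  have hTε : T ≤ ε := hεd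
  have hε0 : 0 ≤ ε := hT0.trans hTε
  have hp_le1 : ∀ i, p i ≤ 1 := by
    intro i
    calc p i ≤ ∑ j, p j := Finset.single_le_sum (fun j _ => hp0 j) (Finset.mem_univ i)
      _ = 1 := hp1
  have hq_le1 : ∀ i, q i ≤ 1 := by
    intro i
    calc q i ≤ ∑ j, q j := Finset.single_le_sum (fun j _ => hq0 j) (Finset.mem_univ i)
      _ = 1 := hq1
  have hδ1 : ∀ i, δ i ≤ 1 := by
    intro i
    rw [hδdef]
    rw [abs_le]
    constructor
    · have := hp0 i; have := hq_le1 i; linarith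
    · have := hq0 i; have := hp_le1 i; linarith
  have hδT : ∀ i, δ i ≤ T := by
    intro i
    exact Finset.single_le_sum (fun j _ => hδ0 j) (Finset.mem_univ i)
  have hlogd : 0 ≤ log d := Real.log_nonneg (by exact_mod_cast hd)
  have hperm : ∀ i, |negMulLog (p i) - negMulLog (q i)| ≤
      max (negMulLog (δ i)) (negMulLog (1 - δ i)) := by
    intro i
    rcases le_total (q i) (p i) with h | h
    · have hδi : δ i = p i - q i := abs_of_nonneg (by linarith)
      have := nml_diff_max (hq0 i) (by linarith : 0 ≤ p i - q i)
        (by have := hp_le1 i; linarith : q i + (p i - q i) ≤ 1)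
      rw [show q i + (p i - q i) = p i from by ring] at this
      rw [hδi]
      exact this
    · have hδi : δ i = q i - p i := by
        show |p i - q i| = q i - p i
        rw [abs_sub_comm]; exact abs_of_nonneg (by linarith)
      have := nml_diff_max (hp0 i) (by linarith : 0 ≤ q i - p i)
        (by have := hq_le1 i; linarith : p i + (q i - p i) ≤ 1)
      rw [show p i + (q i - p i) = q i from by ring] at this
      rw [hδi, abs_sub_comm]
      exact this
  have htri : |(∑ i, negMulLog (p i)) - ∑ i, negMulLog (q i)| ≤
      ∑ i, |negMulLog (p i) - negMulLog (q i)| := by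
    rw [← Finset.sum_sub_distrib]
    exact Finset.abs_sum_le_sum_abs _ _
  rcases le_or_gt T (1 / exp 1) with hTcase | hTcase
  · -- small T case
    have hmax : ∀ i, max (negMulLog (δ i)) (negMulLog (1 - δ i)) ≤ negMulLog (δ i) := by
      intro i
      apply max_le le_rfl
      calc negMulLog (1 - δ i) ≤ δ i := nml_one_sub_le (hδ0 i) (hδ1 i)
        _ ≤ negMulLog (δ i) := le_nml (hδ0 i) ((hδT i).trans hTcase)
    have hbound : |(∑ i, negMulLog (p i)) - ∑ i, negMulLog (q i)| ≤ ∑ i, negMulLog (δ i) := by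
      refine htri.trans (Finset.sum_le_sum fun i _ => (hperm i).trans (hmax i))
    rcases eq_or_lt_of_le hT0 with hT | hT
    · -- T = 0
      have hall : ∀ i ∈ Finset.univ, δ i = 0 := by
        intro i _
        have := (Finset.sum_eq_zero_iff_of_nonneg (fun j _ => hδ0 j)).1 hT.symm
        exact this i (Finset.mem_univ i)
      have : ∑ i, negMulLog (δ i) = 0 := by
        apply Finset.sum_eq_zero
        intro i hi
        rw [hall i hi, negMulLog_zero]
      rw [this] at hbound
      refine hbound.trans ?_
      have := eta_nonneg hε0
      nlinarith
    · -- T > 0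
      have hc : (0:ℝ) < (d:ℝ) / T := by positivity
      have hsum2 : ∑ i, negMulLog (δ i) ≤ T * log ((d:ℝ)/T) := by
        calc ∑ i, negMulLog (δ i) ≤ ∑ i, (δ i * log ((d:ℝ)/T) + T/(d:ℝ) - δ i) := by
              apply Finset.sum_le_sum
              intro i _
              have := nml_le hc (hδ0 i)
              calc negMulLog (δ i) ≤ δ i * log ((d:ℝ)/T) + 1/((d:ℝ)/T) - δ i := this
                _ = δ i * log ((d:ℝ)/T) + T/(d:ℝ) - δ i := by
                    rw [one_div_div]
          _ = T * log ((d:ℝ)/T) + (d:ℝ) * (T/(d:ℝ)) - T := by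
              rw [Finset.sum_sub_distrib, Finset.sum_add_distrib, ← Finset.sum_mul,
                Finset.sum_const, Finset.card_univ, Fintype.card_fin, ← hTdef]
              push_cast
              ring
          _ = T * log ((d:ℝ)/T) := by
              field_simp; ring
      have hlogdiv : T * log ((d:ℝ)/T) = T * log d + negMulLog T := by
        rw [Real.log_div (by positivity) (ne_of_gt hT)]
        unfold negMulLog
        ring
      have hfin : ∑ i, negMulLog (δ i) ≤ ε * log d + eta ε := by
        rw [hlogdiv] at hsum2
        have h1 : T * log d ≤ ε * log d := by
          apply mul_le_mul_of_nonneg_right hTε hlogd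
        have h2 : negMulLog T ≤ eta ε := nml_le_eta hT0 hTε
        linarith
      exact hbound.trans hfin
  · -- large T case
    have hd2 : 2 ≤ d := by
      by_contra hcon
      push_neg at hcon
      have hd1 : d = 1 := by omega
      subst hd1
      · have hp' : p 0 = 1 := by rw [← hp1]; simp
        have hq' : q 0 = 1 := by rw [← hq1]; simp
        have : T = 0 := by
          rw [hTdef]
          simp [hδdef, hp', hq']
        rw [this] at hTcase
        have := exp_pos 1
        have : (0:ℝ) < 1 / exp 1 := by positivity
        linarith
    have hd2' : (2:ℝ) ≤ (d:ℝ) := by exact_mod_cast hd2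
    have hlog2d : log 2 ≤ log d := Real.log_le_log (by norm_num) hd2'
    have hmax : ∀ i, max (negMulLog (δ i)) (negMulLog (1 - δ i)) ≤
        δ i * log d + 1/((d:ℝ) * exp 1) := by
      intro i
      apply max_le
      · have := nml_le (show (0:ℝ) < (d:ℝ) * exp 1 by positivity) (hδ0 i)
        have hlog : log ((d:ℝ) * exp 1) = log d + 1 := by
          rw [Real.log_mul (by positivity) (ne_of_gt (exp_pos 1)), Real.log_exp]
        rw [hlog] at this
        calc negMulLog (δ i) ≤ δ i * (log d + 1) + 1/((d:ℝ) * exp 1) - δ i := this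
          _ = δ i * log d + 1/((d:ℝ) * exp 1) := by ring
      · rcases le_or_gt (δ i) (1/2) with h | h
        · have h1 : negMulLog (1 - δ i) ≤ δ i := nml_one_sub_le (hδ0 i) (hδ1 i)
          refine h1.trans ?_
          -- δ ≤ δ log d + 1/(d e)
          rcases lt_or_ge ((d:ℝ)) 3 with hd3 | hd3
          · -- d = 2
            have hdeq : (d:ℝ) = 2 := by
              have h3 : d < 3 := by exact_mod_cast hd3
              have : d = 2 := by omega
              rw [this]; norm_num
            rw [hdeq]
            have hl2 := Real.log_two_gt_d9
            have he := Real.exp_one_lt_d9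
            have hepos := exp_pos 1
            have h1l2 : (0:ℝ) ≤ 1 - log 2 := by
              have := Real.log_two_lt_d9; linarith
            have step1 : δ i * (1 - log 2) ≤ (1/2) * (1 - log 2) :=
              mul_le_mul_of_nonneg_right h h1l2
            have step3 : 0 ≤ δ i * (1 - log 2) := mul_nonneg (hδ0 i) h1l2
            have hkey : (δ i) * (1 - log 2) * (2 * exp 1) ≤ 1 := by
              nlinarith [step1, step3, hl2, he, hepos]
            have h2e : (0:ℝ) < 2 * exp 1 := by positivity
            rw [show (2:ℝ) * exp 1 = 2 * exp 1 from rfl]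
            have : δ i * (1 - log 2) ≤ 1 / (2 * exp 1) := by
              rw [le_div_iff₀ h2e]
              exact hkey
            linarith
          · -- log d ≥ 1
            have h1d : (1:ℝ) ≤ log d := by
              have he3 : exp 1 ≤ 3 := by
                have := Real.exp_one_lt_d9
                linarith
              calc (1:ℝ) = log (exp 1) := (Real.log_exp 1).symm
                _ ≤ log 3 := Real.log_le_log (exp_pos 1) he3
                _ ≤ log d := Real.log_le_log (by norm_num) hd3
            have : 0 ≤ δ i * (log d - 1) := mul_nonneg (hδ0 i) (by linarith)
            have hpos : (0:ℝ) < 1/((d:ℝ) * exp 1) := by positivity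
            nlinarith
        · have h1 : negMulLog (1 - δ i) ≤ δ i * log 2 :=
            nml_one_sub_le_log_two h.le (hδ1 i)
          have h2 : δ i * log 2 ≤ δ i * log d :=
            mul_le_mul_of_nonneg_left hlog2d (hδ0 i)
          have hpos : (0:ℝ) < 1/((d:ℝ) * exp 1) := by positivity
          linarith
    have hbound : |(∑ i, negMulLog (p i)) - ∑ i, negMulLog (q i)| ≤
        T * log d + 1/exp 1 := by
      refine htri.trans ?_
      calc ∑ i, |negMulLog (p i) - negMulLog (q i)|
          ≤ ∑ i, (δ i * log d + 1/((d:ℝ) * exp 1)) :=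
            Finset.sum_le_sum fun i _ => (hperm i).trans (hmax i)
        _ = T * log d + (d:ℝ) * (1/((d:ℝ) * exp 1)) := by
            rw [Finset.sum_add_distrib, ← Finset.sum_mul, Finset.sum_const, Finset.card_univ,
              Fintype.card_fin, ← hTdef]
            push_cast
            ring
        _ = T * log d + 1/exp 1 := by
            congr 1
            have : (d:ℝ) ≠ 0 := by positivity
            field_simp
    have hetaε : eta ε = 1 / exp 1 := by
      unfold eta
      rw [if_neg]
      push_neg
      linarith
    rw [hetaε]
    refine hbound.trans ?_
    have : T * log d ≤ ε * log d := mul_le_mul_of_nonneg_right hTε hlogd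
    linarith



open Matrix

variable {n : ℕ}

/-- Diagonal entries of `star U * A * U` as convex combinations of eigenvalues of `A`. -/
lemma conj_diag_repr (A : Matrix (Fin n) (Fin n) ℂ) (hA : A.IsHermitian)
    (U : Matrix (Fin n) (Fin n) ℂ) (hU1 : U * star U = 1) (hU2 : star U * U = 1) :
    ∃ c : Fin n → Fin n → ℝ, (∀ i j, 0 ≤ c i j) ∧ (∀ i, ∑ j, c i j = 1) ∧
      (∀ j, ∑ i, c i j = 1) ∧
      (∀ i, ((star U * A * U) i i).re = ∑ j, hA.eigenvalues j * c i j) := by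
  classical
  set W : Matrix (Fin n) (Fin n) ℂ := (hA.eigenvectorUnitary : Matrix (Fin n) (Fin n) ℂ) with hW
  have hW1 : W * star W = 1 := (Matrix.mem_unitaryGroup_iff).mp hA.eigenvectorUnitary.2
  have hW2 : star W * W = 1 := (Matrix.mem_unitaryGroup_iff').mp hA.eigenvectorUnitary.2
  set V : Matrix (Fin n) (Fin n) ℂ := star U * W with hV
  have hVstar : star V = star W * U := by
    rw [hV, Matrix.star_mul, star_star]
  have hVV : V * star V = 1 := by
    rw [hV, hVstar, Matrix.mul_assoc, ← Matrix.mul_assoc W (star W) U, hW1, Matrix.one_mul, hU2]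
  have hVV' : star V * V = 1 := by
    rw [hV, hVstar, Matrix.mul_assoc, ← Matrix.mul_assoc U (star U) W, hU1, Matrix.one_mul, hW2]
  refine ⟨fun i j => Complex.normSq (V i j), fun i j => Complex.normSq_nonneg _, ?_, ?_, ?_⟩
  · intro i
    have h1 : (V * star V) i i = 1 := by rw [hVV]; simp
    rw [Matrix.mul_apply] at h1
    have h2 : ∀ j, V i j * (star V) j i = (Complex.normSq (V i j) : ℂ) := by
      intro j
      rw [Matrix.star_apply, ← Complex.mul_conj]
      rfl
    rw [Finset.sum_congr rfl (fun j _ => h2 j)] at h1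
    have := congrArg Complex.re h1
    rw [Complex.re_sum] at this
    simpa using this
  · intro j
    have h1 : (star V * V) j j = 1 := by rw [hVV']; simp
    rw [Matrix.mul_apply] at h1
    have h2 : ∀ i, (star V) j i * V i j = (Complex.normSq (V i j) : ℂ) := by
      intro i
      rw [Matrix.star_apply, mul_comm, ← Complex.mul_conj]
      rfl
    rw [Finset.sum_congr rfl (fun i _ => h2 i)] at h1
    have := congrArg Complex.re h1
    rw [Complex.re_sum] at this
    simpa using this
  · intro i
    have hkey : star U * A * U = V * diagonal (RCLike.ofReal ∘ hA.eigenvalues) * star V := by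
      conv_lhs => rw [hA.spectral_theorem, Unitary.conjStarAlgAut_apply]
      rw [hV, hVstar]
      simp only [Matrix.mul_assoc, Unitary.coe_star]
      rw [hW]
    rw [hkey, Matrix.mul_apply, Complex.re_sum]
    apply Finset.sum_congr rfl
    intro j _
    rw [Matrix.mul_diagonal, Matrix.star_apply]
    have h3 : V i j * (RCLike.ofReal ∘ hA.eigenvalues) j * star (V i j)
        = ((hA.eigenvalues j * Complex.normSq (V i j) : ℝ) : ℂ) := by
      simp only [Function.comp_apply, RCLike.star_def, Complex.ofReal_mul]
      rw [mul_comm (V i j) _, mul_assoc, Complex.mul_conj]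
      push_cast
      rfl
    rw [h3, Complex.ofReal_re]


lemma diag_abs_le (A : Matrix (Fin n) (Fin n) ℂ) (hA : A.IsHermitian)
    (U : Matrix (Fin n) (Fin n) ℂ) (hU1 : U * star U = 1) (hU2 : star U * U = 1) :
    ∑ i, |((star U * A * U) i i).re| ≤ ∑ j, |hA.eigenvalues j| := by
  obtain ⟨c, hc0, hrow, hcol, hre⟩ := conj_diag_repr A hA U hU1 hU2
  calc ∑ i, |((star U * A * U) i i).re| = ∑ i, |∑ j, hA.eigenvalues j * c i j| := by
        apply Finset.sum_congr rfl
        intro i _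
        rw [hre i]
    _ ≤ ∑ i, ∑ j, |hA.eigenvalues j| * c i j := by
        apply Finset.sum_le_sum
        intro i _
        refine (Finset.abs_sum_le_sum_abs _ _).trans ?_
        apply Finset.sum_le_sum
        intro j _
        rw [abs_mul, abs_of_nonneg (hc0 i j)]
    _ = ∑ j, |hA.eigenvalues j| * ∑ i, c i j := by
        rw [Finset.sum_comm]
        apply Finset.sum_congr rfl
        intro j _
        rw [Finset.mul_sum]
    _ = ∑ j, |hA.eigenvalues j| := by
        apply Finset.sum_congr rfl
        intro j _
        rw [hcol j, mul_one]

lemma sum_eigenvalues_eq_one {A : Matrix (Fin n) (Fin n) ℂ} (hA : A.IsHermitian)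
    (htr : A.trace = 1) : ∑ i, hA.eigenvalues i = 1 := by
  classical
  have h : star (hA.eigenvectorUnitary : Matrix (Fin n) (Fin n) ℂ) * A * (hA.eigenvectorUnitary : Matrix (Fin n) (Fin n) ℂ) =
      diagonal (RCLike.ofReal ∘ hA.eigenvalues) := by
    simpa [Unitary.conjStarAlgAut_star_apply] using hA.conjStarAlgAut_star_eigenvectorUnitary
  have htr2 := congrArg Matrix.trace h
  set W : Matrix (Fin n) (Fin n) ℂ := (hA.eigenvectorUnitary : Matrix (Fin n) (Fin n) ℂ) with hWdef
  have hW1 : W * star W = 1 := (Matrix.mem_unitaryGroup_iff).mp hA.eigenvectorUnitary.2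
  have hcyc : (star W * A * W).trace = A.trace := by
    rw [Matrix.trace_mul_cycle, hW1, Matrix.one_mul]
  rw [hcyc, htr, Matrix.trace_diagonal] at htr2
  simp only [Function.comp_apply] at htr2
  have h2 : ((∑ i, hA.eigenvalues i : ℝ) : ℂ) = 1 := by
    push_cast
    exact htr2.symm
  exact_mod_cast h2

/-- Measurement in any orthonormal basis increases entropy, and measurement
probabilities of a density matrix form a probability vector. -/
lemma measurement_entropy {A : Matrix (Fin n) (Fin n) ℂ} (hA : A.PosSemidef)
    (htr : A.trace = 1) (U : Matrix (Fin n) (Fin n) ℂ)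
    (hU1 : U * star U = 1) (hU2 : star U * U = 1) :
    (∀ i, 0 ≤ ((star U * A * U) i i).re) ∧
    (∑ i, ((star U * A * U) i i).re) = 1 ∧
    (∑ i, Real.negMulLog (hA.1.eigenvalues i)) ≤
      ∑ i, Real.negMulLog (((star U * A * U) i i).re) := by
  obtain ⟨c, hc0, hrow, hcol, hre⟩ := conj_diag_repr A hA.1 U hU1 hU2
  have hlam0 : ∀ j, 0 ≤ hA.1.eigenvalues j := hA.eigenvalues_nonneg
  have hlam1 : ∑ j, hA.1.eigenvalues j = 1 := sum_eigenvalues_eq_one hA.1 htr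
  refine ⟨?_, ?_, ?_⟩
  · intro i
    rw [hre i]
    exact Finset.sum_nonneg fun j _ => mul_nonneg (hlam0 j) (hc0 i j)
  · calc ∑ i, ((star U * A * U) i i).re = ∑ i, ∑ j, hA.1.eigenvalues j * c i j := by
          exact Finset.sum_congr rfl fun i _ => hre i
      _ = ∑ j, hA.1.eigenvalues j * ∑ i, c i j := by
          rw [Finset.sum_comm]
          exact Finset.sum_congr rfl fun j _ => (Finset.mul_sum _ _ _).symm
      _ = 1 := by
          rw [← hlam1]
          exact Finset.sum_congr rfl fun j _ => by rw [hcol j, mul_one]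
  · have hjen : ∀ i, ∑ j, c i j * Real.negMulLog (hA.1.eigenvalues j) ≤
        Real.negMulLog (((star U * A * U) i i).re) := by
      intro i
      have := Real.concaveOn_negMulLog.le_map_sum (t := Finset.univ)
        (w := fun j => c i j) (p := fun j => hA.1.eigenvalues j)
        (fun j _ => hc0 i j) (hrow i) (fun j _ => Set.mem_Ici.2 (hlam0 j))
      simp only [smul_eq_mul] at this
      refine this.trans ?_
      have : ∑ j, c i j * hA.1.eigenvalues j = ((star U * A * U) i i).re := by
        rw [hre i]
        exact Finset.sum_congr rfl fun j _ => mul_comm _ _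
      rw [this]
    calc ∑ j, Real.negMulLog (hA.1.eigenvalues j)
        = ∑ j, (∑ i, c i j) * Real.negMulLog (hA.1.eigenvalues j) := by
          exact Finset.sum_congr rfl fun j _ => by rw [hcol j, one_mul]
      _ = ∑ i, ∑ j, c i j * Real.negMulLog (hA.1.eigenvalues j) := by
          rw [Finset.sum_comm]
          exact Finset.sum_congr rfl fun j _ => by rw [Finset.sum_mul]
      _ ≤ ∑ i, Real.negMulLog (((star U * A * U) i i).re) :=
          Finset.sum_le_sum fun i _ => hjen i


open Real in
lemma fannes_one_side {d : ℕ} (ρ σ : Matrix (Fin d) (Fin d) ℂ)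
    (hρ : ρ.PosSemidef) (hρtr : ρ.trace = 1)
    (hσ : σ.PosSemidef) (hσtr : σ.trace = 1)
    (ε : ℝ)
    (h : ∀ U : Matrix (Fin d) (Fin d) ℂ, U * star U = 1 → star U * U = 1 →
      ∑ i, |((star U * (ρ - σ) * U) i i).re| ≤ ε) :
    (∑ i, Real.negMulLog (hρ.1.eigenvalues i)) - ∑ i, Real.negMulLog (hσ.1.eigenvalues i) ≤
      ε * Real.log d + eta ε := by
  classical
  set U : Matrix (Fin d) (Fin d) ℂ := (hσ.1.eigenvectorUnitary : Matrix (Fin d) (Fin d) ℂ)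
    with hUdef
  have hU1 : U * star U = 1 := (Matrix.mem_unitaryGroup_iff).mp hσ.1.eigenvectorUnitary.2
  have hU2 : star U * U = 1 := (Matrix.mem_unitaryGroup_iff').mp hσ.1.eigenvectorUnitary.2
  obtain ⟨hq0, hq1, hSρ⟩ := measurement_entropy hρ hρtr U hU1 hU2
  set q : Fin d → ℝ := fun i => ((star U * ρ * U) i i).re with hqdef
  set p : Fin d → ℝ := fun i => hσ.1.eigenvalues i with hpdef
  have hp0 : ∀ i, 0 ≤ p i := hσ.eigenvalues_nonneg
  have hp1 : ∑ i, p i = 1 := sum_eigenvalues_eq_one hσ.1 hσtr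
  have hdiagσ : ∀ i, ((star U * σ * U) i i).re = p i := by
    intro i
    rw [show star U * σ * U = diagonal (RCLike.ofReal ∘ hσ.1.eigenvalues) from by
      rw [hUdef]; simpa [Unitary.conjStarAlgAut_star_apply] using hσ.1.conjStarAlgAut_star_eigenvectorUnitary]
    rw [Matrix.diagonal_apply_eq]
    simp [hpdef]
  have hdist : ∑ i, |q i - p i| ≤ ε := by
    have hsub : ∀ i, q i - p i = ((star U * (ρ - σ) * U) i i).re := by
      intro i
      rw [← hdiagσ i]
      rw [Matrix.mul_sub, Matrix.sub_mul, Matrix.sub_apply, Complex.sub_re]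
    calc ∑ i, |q i - p i| = ∑ i, |((star U * (ρ - σ) * U) i i).re| := by
          exact Finset.sum_congr rfl fun i _ => by rw [hsub i]
      _ ≤ ε := h U hU1 hU2
  have hcl := classical_fannes q p hq0 hp0 hq1 hp1 hdist
  have habs : (∑ i, Real.negMulLog (q i)) - ∑ i, Real.negMulLog (p i) ≤
      ε * Real.log d + eta ε := (abs_le.mp hcl).2 |> fun _ => (le_abs_self _).trans hcl
  calc (∑ i, Real.negMulLog (hρ.1.eigenvalues i)) - ∑ i, Real.negMulLog (hσ.1.eigenvalues i)
      ≤ (∑ i, Real.negMulLog (q i)) - ∑ i, Real.negMulLog (p i) := by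
        have : ∑ i, Real.negMulLog (hσ.1.eigenvalues i) = ∑ i, Real.negMulLog (p i) := rfl
        rw [this]
        have h2 : ∑ i, Real.negMulLog (hρ.1.eigenvalues i) ≤ ∑ i, Real.negMulLog (q i) := hSρ
        linarith
    _ ≤ ε * Real.log d + eta ε := habs

end FannesAux

/-- **Fannes' inequality.** If two density matrices on `ℂ^d` are at trace distance at most `ε`,
then their von Neumann entropies differ by at most `ε log d + η ε`. -/
theorem fannes_inequality {d : ℕ} (hd : 1 ≤ d)
    (ρ σ : Matrix (Fin d) (Fin d) ℂ)
    (hρ : ρ.PosSemidef) (hρtr : ρ.trace = 1)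
    (hσ : σ.PosSemidef) (hσtr : σ.trace = 1)
    (ε : ℝ)
    (hdist : ∑ i, |(hρ.1.sub hσ.1).eigenvalues i| ≤ ε) :
    |(∑ i, Real.negMulLog (hρ.1.eigenvalues i)) -
        ∑ i, Real.negMulLog (hσ.1.eigenvalues i)| ≤
      ε * Real.log d + eta ε := by
  have hdiag : ∀ U : Matrix (Fin d) (Fin d) ℂ, U * star U = 1 → star U * U = 1 →
      ∑ i, |((star U * (ρ - σ) * U) i i).re| ≤ ε := by
    intro U hU1 hU2
    exact (FannesAux.diag_abs_le (ρ - σ) (hρ.1.sub hσ.1) U hU1 hU2).trans hdist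
  have hdiag' : ∀ U : Matrix (Fin d) (Fin d) ℂ, U * star U = 1 → star U * U = 1 →
      ∑ i, |((star U * (σ - ρ) * U) i i).re| ≤ ε := by
    intro U hU1 hU2
    have hneg : star U * (σ - ρ) * U = -(star U * (ρ - σ) * U) := by
      rw [show σ - ρ = -(ρ - σ) from (neg_sub ρ σ).symm]
      rw [Matrix.mul_neg, Matrix.neg_mul]
    have : ∑ i, |((star U * (σ - ρ) * U) i i).re| =
        ∑ i, |((star U * (ρ - σ) * U) i i).re| := by
      apply Finset.sum_congr rfl
      intro i _
      rw [hneg, Matrix.neg_apply, Complex.neg_re, abs_neg]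
    rw [this]
    exact hdiag U hU1 hU2
  have hupper := FannesAux.fannes_one_side ρ σ hρ hρtr hσ hσtr ε hdiag
  have hlower := FannesAux.fannes_one_side σ ρ hσ hσtr hρ hρtr ε hdiag'
  rw [abs_sub_le_iff]
  exact ⟨hupper, hlower⟩
end

section
/- Let ρ and σ be density matrices on ℂ^{d_A} with trace norm ‖ρ − σ‖₁ ≤ ε, and let σ' be a density matrix on ℂ^{d_A} ⊗ ℂ^{d_B} (a matrix indexed by Fin d_A × Fin d_B) whose partial trace over the second factor equals σ. Then there exists a density matrix ρ' on ℂ^{d_A} ⊗ ℂ^{d_B} whose partial trace over the second factor equals ρ and such that ‖ρ' − σ'‖₁ ≤ 2·√ε. -/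
open scoped ComplexOrder
open Matrix

namespace CloseExt

variable {n : Type*} [Fintype n] [DecidableEq n]

/-- Functional calculus via the spectral decomposition of a Hermitian matrix. -/
noncomputable def fcal {A : Matrix n n ℂ} (hA : A.IsHermitian) (f : ℝ → ℝ) : Matrix n n ℂ :=
  (hA.eigenvectorUnitary : Matrix n n ℂ) *
    diagonal (fun i => (f (hA.eigenvalues i) : ℂ)) *
    star (hA.eigenvectorUnitary : Matrix n n ℂ)

variable {A : Matrix n n ℂ} (hA : A.IsHermitian)

lemma star_mul_self_eigen : star (hA.eigenvectorUnitary : Matrix n n ℂ) *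
    (hA.eigenvectorUnitary : Matrix n n ℂ) = 1 := by
  simpa using unitary.coe_star_mul_self hA.eigenvectorUnitary

lemma self_mul_star_eigen : (hA.eigenvectorUnitary : Matrix n n ℂ) *
    star (hA.eigenvectorUnitary : Matrix n n ℂ) = 1 := by
  simpa using unitary.coe_mul_star_self hA.eigenvectorUnitary

lemma fcal_mul_fcal (f g : ℝ → ℝ) :
    fcal hA f * fcal hA g = fcal hA (fun x => f x * g x) := by
  unfold fcal
  rw [show ∀ (V D E W : Matrix n n ℂ), V * D * W * (V * E * W) = V * (D * (W * V) * E) * W by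
    intros; noncomm_ring, star_mul_self_eigen hA]
  simp [diagonal_mul_diagonal]

lemma fcal_eq_of {f g : ℝ → ℝ} (h : ∀ i, f (hA.eigenvalues i) = g (hA.eigenvalues i)) :
    fcal hA f = fcal hA g := by
  unfold fcal
  congr 2
  ext i j
  simp [diagonal, h]

lemma fcal_id : fcal hA (fun x => x) = A := by
  conv_rhs => rw [hA.spectral_theorem]
  rfl

lemma fcal_one : fcal hA (fun _ => 1) = 1 := by
  unfold fcal
  simpa [diagonal_one] using self_mul_star_eigen hA

lemma fcal_add (f g : ℝ → ℝ) : fcal hA f + fcal hA g = fcal hA (fun x => f x + g x) := by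
  unfold fcal
  rw [← add_mul, ← mul_add]
  congr 2
  rw [diagonal_add]
  congr 1
  ext i
  push_cast
  ring

lemma fcal_sub (f g : ℝ → ℝ) : fcal hA f - fcal hA g = fcal hA (fun x => f x - g x) := by
  unfold fcal
  rw [← sub_mul, ← mul_sub]
  congr 2
  rw [diagonal_sub]
  congr 1
  ext i
  push_cast
  ring

lemma fcal_herm (f : ℝ → ℝ) : (fcal hA f).IsHermitian := by
  unfold fcal Matrix.IsHermitian
  simp only [conjTranspose_mul, conjTranspose_conjTranspose, star_eq_conjTranspose,
    diagonal_conjTranspose]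
  rw [mul_assoc]
  congr 2
  ext i j
  simp only [diagonal, of_apply, Pi.star_apply]
  split <;> simp

lemma fcal_psd {f : ℝ → ℝ} (h : ∀ i, 0 ≤ f (hA.eigenvalues i)) : (fcal hA f).PosSemidef := by
  unfold fcal
  apply Matrix.PosSemidef.mul_mul_conjTranspose_same
  · exact Matrix.posSemidef_diagonal_iff.mpr fun i => by
      simpa using Complex.zero_le_real.mpr (h i)

lemma fcal_trace (f : ℝ → ℝ) : (fcal hA f).trace = ∑ i, (f (hA.eigenvalues i) : ℂ) := by
  unfold fcal
  rw [trace_mul_cycle, star_mul_self_eigen hA, one_mul, trace_diagonal]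

lemma conj_sandwich_apply (V B : Matrix n n ℂ) (i : n) :
    (star V * B * V) i i = star (fun a => V a i) ⬝ᵥ (B *ᵥ fun a => V a i) := by
  simp only [mul_apply, star_apply, dotProduct, mulVec, Finset.sum_mul, Finset.mul_sum,
    Pi.star_apply]
  rw [Finset.sum_comm]
  apply Finset.sum_congr rfl
  intro a _
  apply Finset.sum_congr rfl
  intro b _
  ring

lemma trace_mul_diagonal' (M : Matrix n n ℂ) (d : n → ℂ) :
    (M * diagonal d).trace = ∑ i, d i * M i i := by
  simp [trace, diag, mul_apply, diagonal, Finset.sum_ite_eq, mul_comm]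

lemma trace_fcal_mul (f : ℝ → ℝ) (B : Matrix n n ℂ) :
    (fcal hA f * B).trace = ∑ i, (f (hA.eigenvalues i) : ℂ) *
      ((star (hA.eigenvectorUnitary : Matrix n n ℂ) * B *
        (hA.eigenvectorUnitary : Matrix n n ℂ)) i i) := by
  unfold fcal
  set V : Matrix n n ℂ := (hA.eigenvectorUnitary : Matrix n n ℂ) with hV
  set D : Matrix n n ℂ := diagonal (fun i => (f (hA.eigenvalues i) : ℂ)) with hD
  rw [show (V * D * star V * B).trace = ((star V * B * V) * D).trace by
    calc (V * D * star V * B).trace = ((V * D) * (star V * B)).trace := by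
          congr 1; noncomm_ring
      _ = ((star V * B) * (V * D)).trace := trace_mul_comm _ _
      _ = ((star V * B * V) * D).trace := by congr 1; noncomm_ring]
  rw [trace_mul_diagonal']

lemma re_quad_nonneg {B : Matrix n n ℂ} (hB : B.PosSemidef) (V : Matrix n n ℂ) (i : n) :
    0 ≤ ((star V * B * V) i i).re := by
  rw [conj_sandwich_apply]
  exact hB.re_dotProduct_nonneg _

lemma quad_one (i : n) :
    ((star (hA.eigenvectorUnitary : Matrix n n ℂ) * (1 : Matrix n n ℂ) *
      (hA.eigenvectorUnitary : Matrix n n ℂ)) i i) = (1 : ℂ) := by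
  rw [mul_one, star_mul_self_eigen hA, one_apply_eq]

/-- duality upper bound: `Re tr(C Δ) ≤ ∑ |eig Δ|` for a Hermitian contraction `C`. -/
lemma re_trace_mul_le {Δ C : Matrix n n ℂ} (hΔ : Δ.IsHermitian)
    (hC1 : (1 - C).PosSemidef) (hC2 : (1 + C).PosSemidef) :
    ((C * Δ).trace).re ≤ ∑ i, |hΔ.eigenvalues i| := by
  rw [trace_mul_comm]
  have hrw : (Δ * C).trace = (fcal hΔ (fun x => x) * C).trace := by rw [fcal_id]
  rw [hrw, trace_fcal_mul hΔ _ C]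
  set V : Matrix n n ℂ := (hΔ.eigenvectorUnitary : Matrix n n ℂ) with hV
  rw [Complex.re_sum]
  apply Finset.sum_le_sum
  intro i _
  set w := ((star V * C * V) i i) with hw
  have hVV : star V * V = 1 := star_mul_self_eigen hΔ
  have hw1 : w.re ≤ 1 := by
    have h0 := re_quad_nonneg hC1 V i
    rw [show star V * (1 - C) * V = star V * V - star V * C * V from by noncomm_ring, hVV] at h0
    simp only [Matrix.sub_apply, one_apply_eq, Complex.sub_re, Complex.one_re, ← hw] at h0
    linarith
  have hw2 : -1 ≤ w.re := by
    have h0 := re_quad_nonneg hC2 V i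
    rw [show star V * (1 + C) * V = star V * V + star V * C * V from by noncomm_ring, hVV] at h0
    simp only [Matrix.add_apply, one_apply_eq, Complex.add_re, Complex.one_re, ← hw] at h0
    linarith
  have : ((hΔ.eigenvalues i : ℂ) * w).re = hΔ.eigenvalues i * w.re := by
    simp [Complex.mul_re]
  rw [this]
  calc hΔ.eigenvalues i * w.re ≤ |hΔ.eigenvalues i * w.re| := le_abs_self _
    _ = |hΔ.eigenvalues i| * |w.re| := abs_mul _ _
    _ ≤ |hΔ.eigenvalues i| * 1 := by
        apply mul_le_mul_of_nonneg_left _ (abs_nonneg _)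
        exact abs_le.mpr ⟨hw2, hw1⟩
    _ = |hΔ.eigenvalues i| := mul_one _

/-- the sign function -/
noncomputable def sgn (x : ℝ) : ℝ := if x < 0 then -1 else if x = 0 then 0 else 1

lemma sgn_mul_self (x : ℝ) : sgn x * x = |x| := by
  unfold sgn
  rcases lt_trichotomy x 0 with h | h | h
  · simp [h, abs_of_neg h]
  · simp [h]
  · rw [if_neg (by linarith), if_neg (by linarith), one_mul, abs_of_pos h]

lemma sgn_bounds (x : ℝ) : 0 ≤ 1 - sgn x ∧ 0 ≤ 1 + sgn x ∧ 0 ≤ 1 - sgn x * sgn x := by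
  unfold sgn
  rcases lt_trichotomy x 0 with h | h | h
  · simp [h]
  · simp [h]
  · rw [if_neg (by linarith), if_neg (by linarith)]; norm_num

/-- there is a Hermitian contraction achieving the trace-norm. -/
lemma exists_sign_matrix {Δ : Matrix n n ℂ} (hΔ : Δ.IsHermitian) :
    ∃ C : Matrix n n ℂ, (1 - C).PosSemidef ∧ (1 + C).PosSemidef ∧
      (1 - C * C).PosSemidef ∧ ((C * Δ).trace).re = ∑ i, |hΔ.eigenvalues i| := by
  refine ⟨fcal hΔ sgn, ?_, ?_, ?_, ?_⟩
  · rw [← fcal_one hΔ, fcal_sub hΔ]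
    exact fcal_psd hΔ fun i => (sgn_bounds _).1
  · rw [← fcal_one hΔ, fcal_add hΔ]
    exact fcal_psd hΔ fun i => (sgn_bounds _).2.1
  · rw [← fcal_one hΔ, fcal_mul_fcal hΔ, fcal_sub hΔ]
    exact fcal_psd hΔ fun i => (sgn_bounds _).2.2
  · have hΔ2 : fcal hΔ sgn * Δ = fcal hΔ sgn * fcal hΔ (fun x => x) := by rw [fcal_id]
    rw [hΔ2, fcal_mul_fcal hΔ]
    rw [fcal_eq_of hΔ (g := fun x => |x|) (fun i => sgn_mul_self _), fcal_trace hΔ]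
    rw [Complex.re_sum]
    simp

/-- trace of a product of PSD matrices is (re-)nonnegative. -/
lemma re_trace_psd_mul_psd {P Q : Matrix n n ℂ} (hP : P.PosSemidef) (hQ : Q.PosSemidef) :
    0 ≤ ((P * Q).trace).re := by
  have hrw : (P * Q).trace = (fcal hP.1 (fun x => x) * Q).trace := by rw [fcal_id]
  rw [hrw, trace_fcal_mul hP.1 _ Q, Complex.re_sum]
  apply Finset.sum_nonneg
  intro i _
  have h1 : 0 ≤ hP.1.eigenvalues i := hP.eigenvalues_nonneg i
  have h2 := re_quad_nonneg hQ (hP.1.eigenvectorUnitary : Matrix n n ℂ) i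
  rw [Complex.re_ofReal_mul]
  exact mul_nonneg h1 h2

/-- contraction decreases trace against PSD matrices. -/
lemma re_trace_contract_le {P C : Matrix n n ℂ} (hP : P.PosSemidef)
    (hC1 : (1 - C).PosSemidef) : ((C * P).trace).re ≤ (P.trace).re := by
  have h0 := re_trace_psd_mul_psd hC1 hP
  have : (1 - C) * P = P - C * P := by noncomm_ring
  rw [this, trace_sub, Complex.sub_re] at h0
  linarith

/-- Frobenius Cauchy–Schwarz. -/
lemma frobenius_cs (X Y : Matrix n n ℂ) :
    |((Xᴴ * Y).trace).re| ≤ Real.sqrt ((Xᴴ * X).trace).re * Real.sqrt ((Yᴴ * Y).trace).re := by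
  have htr : ∀ (U W : Matrix n n ℂ), ((Uᴴ * W).trace) = ∑ p : n × n,
      (starRingEnd ℂ) (U p.1 p.2) * W p.1 p.2 := by
    intro U W
    rw [Fintype.sum_prod_type]
    rw [trace]
    rw [Finset.sum_comm]
    apply Finset.sum_congr rfl
    intro a _
    simp [diag, mul_apply, conjTranspose_apply]
  have habs : ∀ (U : Matrix n n ℂ), ((Uᴴ * U).trace).re = ∑ p : n × n, ‖U p.1 p.2‖ ^ 2 := by
    intro U
    rw [htr, Complex.re_sum]
    apply Finset.sum_congr rfl
    intro p _
    rw [Complex.sq_norm]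
    rw [show (starRingEnd ℂ) (U p.1 p.2) * U p.1 p.2 = U p.1 p.2 * (starRingEnd ℂ) (U p.1 p.2) from mul_comm _ _, Complex.mul_conj]
    simp
  rw [htr, habs, habs]
  calc |(∑ p : n × n, (starRingEnd ℂ) (X p.1 p.2) * Y p.1 p.2).re|
      ≤ ‖∑ p : n × n, (starRingEnd ℂ) (X p.1 p.2) * Y p.1 p.2‖ :=
        Complex.abs_re_le_norm _
    _ ≤ ∑ p : n × n, ‖(starRingEnd ℂ) (X p.1 p.2) * Y p.1 p.2‖ :=
        norm_sum_le _ _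
    _ = ∑ p : n × n, ‖X p.1 p.2‖ * ‖Y p.1 p.2‖ := by
        apply Finset.sum_congr rfl; intro p _
        rw [norm_mul, Complex.norm_conj]
    _ ≤ Real.sqrt (∑ p : n × n, ‖X p.1 p.2‖ ^ 2) *
        Real.sqrt (∑ p : n × n, ‖Y p.1 p.2‖ ^ 2) := by
        have h := Finset.sum_mul_sq_le_sq_mul_sq Finset.univ
          (fun p : n × n => ‖X p.1 p.2‖) (fun p => ‖Y p.1 p.2‖)
        have hnn : (0:ℝ) ≤ ∑ p : n × n, ‖X p.1 p.2‖ * ‖Y p.1 p.2‖ :=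
          Finset.sum_nonneg fun p _ => mul_nonneg (norm_nonneg _) (norm_nonneg _)
        rw [← Real.sqrt_mul (Finset.sum_nonneg fun p _ => sq_nonneg _)]
        rw [← Real.sqrt_sq hnn]
        exact Real.sqrt_le_sqrt h

/-- Cauchy–Schwarz for the PSD-weighted trace form. -/
lemma cs_weighted {W : Matrix n n ℂ} (hW : W.PosSemidef) (P Q : Matrix n n ℂ) :
    |((P * W * Qᴴ).trace).re| ≤
      Real.sqrt ((P * W * Pᴴ).trace).re * Real.sqrt ((Q * W * Qᴴ).trace).re := by
  obtain ⟨B, hB⟩ : ∃ B : Matrix n n ℂ, W = Bᴴ * B := ⟨fcal hW.1 Real.sqrt, by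
    rw [(fcal_herm hW.1 _).eq, fcal_mul_fcal, fcal_eq_of hW.1 (g := fun x => x)
      (fun i => Real.mul_self_sqrt (hW.eigenvalues_nonneg i)), fcal_id]⟩
  have key : ∀ (P₁ Q₁ : Matrix n n ℂ), P₁ * W * Q₁ᴴ = (B * P₁ᴴ)ᴴ * (B * Q₁ᴴ) := by
    intro P₁ Q₁
    rw [hB, conjTranspose_mul, conjTranspose_conjTranspose]
    noncomm_ring
  rw [key P Q, key P P, key Q Q]
  exact frobenius_cs _ _

/-- Powers–Størmer inequality: `tr (√ρ - √σ)² ≤ ‖ρ - σ‖₁`. -/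
lemma powers_stormer {r s : Matrix n n ℂ} (hr : r.PosSemidef) (hs : s.PosSemidef)
    (hΔ : (r * r - s * s).IsHermitian) :
    (((r - s) * (r - s)).trace).re ≤ ∑ i, |hΔ.eigenvalues i| := by
  have hA : (r - s).IsHermitian := hr.1.sub hs.1
  set V : Matrix n n ℂ := (hA.eigenvectorUnitary : Matrix n n ℂ) with hV
  set U := fcal hA sgn with hU
  have habs : ∀ i, sgn (hA.eigenvalues i) * hA.eigenvalues i = |hA.eigenvalues i| :=
    fun i => sgn_mul_self _
  -- U * (r-s) = (r-s) * U = fcal |x|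
  have hUA : U * (r - s) = fcal hA (fun x => |x|) := by
    have h1 : U * (r - s) = U * fcal hA (fun x => x) := by rw [fcal_id]
    rw [h1, hU, fcal_mul_fcal hA]
    exact fcal_eq_of hA habs
  have hAU : (r - s) * U = fcal hA (fun x => |x|) := by
    have h1 : (r - s) * U = fcal hA (fun x => x) * U := by rw [fcal_id]
    rw [h1, hU, fcal_mul_fcal hA]
    exact fcal_eq_of hA fun i => by rw [mul_comm]; exact habs i
  -- trace identity
  have key : (U * (r * r - s * s)).trace = (fcal hA (fun x => |x|) * (r + s)).trace := by
    have hAB : (r - s) * (r + s) + (r + s) * (r - s) = (r * r - s * s) + (r * r - s * s) := by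
      noncomm_ring
    have h2 : (U * (r * r - s * s)).trace + (U * (r * r - s * s)).trace
        = (fcal hA (fun x => |x|) * (r + s)).trace + (fcal hA (fun x => |x|) * (r + s)).trace := by
      calc (U * (r * r - s * s)).trace + (U * (r * r - s * s)).trace
          = (U * ((r - s) * (r + s) + (r + s) * (r - s))).trace := by
            rw [hAB]; rw [mul_add, trace_add]
        _ = ((U * (r - s)) * (r + s)).trace + (U * ((r + s) * (r - s))).trace := by
            rw [mul_add, trace_add, mul_assoc]
        _ = (fcal hA (fun x => |x|) * (r + s)).trace
            + (((r - s) * U) * (r + s)).trace := by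
            rw [hUA]
            congr 1
            calc (U * ((r + s) * (r - s))).trace = ((U * (r + s)) * (r - s)).trace := by
                  rw [mul_assoc]
              _ = ((r - s) * (U * (r + s))).trace := trace_mul_comm _ _
              _ = (((r - s) * U) * (r + s)).trace := by rw [mul_assoc]
        _ = (fcal hA (fun x => |x|) * (r + s)).trace
            + (fcal hA (fun x => |x|) * (r + s)).trace := by rw [hAU]
    have := h2
    rw [← two_mul, ← two_mul] at this
    exact mul_left_cancel₀ (two_ne_zero) this
  -- lower bound for the trace against r+s
  have hdiag : star V * (r - s) * V = diagonal (fun i => ((hA.eigenvalues i : ℝ) : ℂ)) := by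
    have := hA.conjStarAlgAut_star_eigenvectorUnitary
    rw [Unitary.conjStarAlgAut_star_apply] at this
    rw [← hV] at this
    exact this
  have hBc : ∀ i, |hA.eigenvalues i| ≤ ((star V * (r + s) * V) i i).re := by
    intro i
    have hAii : ((star V * (r - s) * V) i i).re = hA.eigenvalues i := by
      rw [hdiag]; simp
    have hup : hA.eigenvalues i ≤ ((star V * (r + s) * V) i i).re := by
      have hps : ((r + s) - (r - s)).PosSemidef := by
        have : (r + s) - (r - s) = s + s := by noncomm_ring
        rw [this]; exact hs.add hs
      have h0 := re_quad_nonneg hps V i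
      rw [show star V * ((r + s) - (r - s)) * V
          = star V * (r + s) * V - star V * (r - s) * V from by noncomm_ring] at h0
      rw [Matrix.sub_apply, Complex.sub_re, hAii] at h0
      linarith
    have hdn : -hA.eigenvalues i ≤ ((star V * (r + s) * V) i i).re := by
      have hps : ((r + s) + (r - s)).PosSemidef := by
        have : (r + s) + (r - s) = r + r := by noncomm_ring
        rw [this]; exact hr.add hr
      have h0 := re_quad_nonneg hps V i
      rw [show star V * ((r + s) + (r - s)) * V
          = star V * (r + s) * V + star V * (r - s) * V from by noncomm_ring] at h0
      rw [Matrix.add_apply, Complex.add_re, hAii] at h0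
      linarith
    exact abs_le.mpr ⟨by linarith, hup⟩
  have hlow : (((r - s) * (r - s)).trace).re ≤ ((U * (r * r - s * s)).trace).re := by
    rw [key]
    have hAA : ((r - s) * (r - s)).trace = (fcal hA (fun x => x * x)).trace := by
      have h1 : (r - s) * (r - s) = fcal hA (fun x => x) * fcal hA (fun x => x) := by
        rw [fcal_id]
      rw [h1, fcal_mul_fcal hA]
    rw [hAA, fcal_trace hA, trace_fcal_mul hA, Complex.re_sum, Complex.re_sum]
    apply Finset.sum_le_sum
    intro i _
    rw [Complex.re_ofReal_mul]
    have h1 := hBc i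
    have h2 : |hA.eigenvalues i| * |hA.eigenvalues i|
        ≤ |hA.eigenvalues i| * ((star V * (r + s) * V) i i).re :=
      mul_le_mul_of_nonneg_left h1 (abs_nonneg _)
    calc ((((hA.eigenvalues i) * (hA.eigenvalues i) : ℝ) : ℂ)).re
        = hA.eigenvalues i * hA.eigenvalues i := by simp
      _ = |hA.eigenvalues i| * |hA.eigenvalues i| := (abs_mul_abs_self _).symm
      _ ≤ _ := h2
  -- upper bound by trace norm
  have hub : ((U * (r * r - s * s)).trace).re ≤ ∑ i, |hΔ.eigenvalues i| := by
    apply re_trace_mul_le hΔ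
    · rw [hU, ← fcal_one hA, fcal_sub hA]
      exact fcal_psd hA fun i => (sgn_bounds _).1
    · rw [hU, ← fcal_one hA, fcal_add hA]
      exact fcal_psd hA fun i => (sgn_bounds _).2.1
  linarith

open Kronecker

section Kron

variable {m p : Type*} [Fintype m] [DecidableEq m] [Fintype p] [DecidableEq p]

lemma kron_conjT (A : Matrix m m ℂ) (B : Matrix p p ℂ) : (A ⊗ₖ B)ᴴ = Aᴴ ⊗ₖ Bᴴ := by
  ext ⟨i, k⟩ ⟨j, l⟩
  simp [conjTranspose_apply, kroneckerMap_apply, mul_comm]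

lemma sub_kron_one (M : Matrix m m ℂ) :
    (M - 1) ⊗ₖ (1 : Matrix p p ℂ) = M ⊗ₖ (1 : Matrix p p ℂ) - 1 := by
  ext ⟨i, k⟩ ⟨j, l⟩
  by_cases h : k = l <;>
    simp [kroneckerMap_apply, one_apply, Matrix.sub_apply, h, Prod.ext_iff] <;> ring_nf <;> simp [h]

lemma kron_one_mul_apply (P : Matrix m m ℂ) (X : Matrix (m × p) (m × p) ℂ)
    (i : m) (k : p) (y : m × p) :
    ((P ⊗ₖ (1 : Matrix p p ℂ)) * X) (i, k) y = ∑ a, P i a * X (a, k) y := by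
  rw [mul_apply, Fintype.sum_prod_type]
  simp [kroneckerMap_apply, one_apply, ite_mul, mul_ite, Finset.sum_ite_eq]

lemma mul_kron_one_apply (Q : Matrix m m ℂ) (X : Matrix (m × p) (m × p) ℂ)
    (j : m) (l : p) (y : m × p) :
    (X * (Q ⊗ₖ (1 : Matrix p p ℂ))) y (j, l) = ∑ b, X y (b, l) * Q b j := by
  rw [mul_apply, Fintype.sum_prod_type]
  simp [kroneckerMap_apply, one_apply, ite_mul, mul_ite, Finset.sum_ite_eq']

lemma sandwich_apply (P Q : Matrix m m ℂ) (X : Matrix (m × p) (m × p) ℂ)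
    (i j : m) (k l : p) :
    ((P ⊗ₖ (1 : Matrix p p ℂ)) * X * (Q ⊗ₖ (1 : Matrix p p ℂ))) (i, k) (j, l)
      = ∑ a, ∑ b, P i a * X (a, k) (b, l) * Q b j := by
  rw [mul_assoc, kron_one_mul_apply]
  apply Finset.sum_congr rfl
  intro a _
  rw [mul_kron_one_apply, Finset.mul_sum]
  apply Finset.sum_congr rfl
  intro b _
  ring

lemma pt_sandwich {X : Matrix (m × p) (m × p) ℂ} {σA : Matrix m m ℂ}
    (hpt : ∀ i j, ∑ k, X (i, k) (j, k) = σA i j) (P Q : Matrix m m ℂ) (i j : m) :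
    ∑ k, ((P ⊗ₖ (1 : Matrix p p ℂ)) * X * (Q ⊗ₖ (1 : Matrix p p ℂ))) (i, k) (j, k)
      = (P * σA * Q) i j := by
  simp_rw [sandwich_apply]
  rw [Finset.sum_comm]
  have : ∀ a, ∑ k : p, ∑ b, P i a * X (a, k) (b, k) * Q b j
      = ∑ b, P i a * σA a b * Q b j := by
    intro a
    rw [Finset.sum_comm]
    apply Finset.sum_congr rfl
    intro b _
    rw [← hpt a b, Finset.mul_sum, Finset.sum_mul]
  simp_rw [this]
  rw [Finset.sum_comm, mul_apply]
  apply Finset.sum_congr rfl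
  intro b _
  rw [mul_apply, Finset.sum_mul]

lemma trace_sandwich {X : Matrix (m × p) (m × p) ℂ} {σA : Matrix m m ℂ}
    (hpt : ∀ i j, ∑ k, X (i, k) (j, k) = σA i j) (P Q : Matrix m m ℂ) :
    ((P ⊗ₖ (1 : Matrix p p ℂ)) * X * (Q ⊗ₖ (1 : Matrix p p ℂ))).trace
      = (P * σA * Q).trace := by
  rw [trace, trace]
  rw [show ∀ f : (m × p) → ℂ, ∑ y : m × p, f y = ∑ i : m, ∑ k : p, f (i, k) from
    fun f => Fintype.sum_prod_type f]
  · apply Finset.sum_congr rfl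
    intro i _
    exact pt_sandwich hpt P Q i i

lemma pt_kron (D : Matrix m m ℂ) (τ : Matrix p p ℂ) (i j : m) :
    ∑ k, (D ⊗ₖ τ) (i, k) (j, k) = D i j * τ.trace := by
  simp only [kroneckerMap_apply, trace, diag]
  rw [Finset.mul_sum]

end Kron

end CloseExt

lemma eig_sum_congr {n : Type*} [Fintype n] [DecidableEq n] {A B : Matrix n n ℂ} (h : A = B)
    (hA : A.IsHermitian) (hB : B.IsHermitian) :
    ∑ i, |hA.eigenvalues i| = ∑ i, |hB.eigenvalues i| := by subst h; rfl

open CloseExt Kronecker Matrix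

lemma real_ineq {e u b c : ℝ} (hu0 : 0 ≤ u) (hb : 0 ≤ b) (hc : 0 ≤ c) (hc1 : c ≤ 1)
    (hcsq : c^2 = 1 - u) (hbsq : b^2 ≤ e^2 - u) (he : 0 ≤ e) :
    b*c + b + u ≤ 2*e := by
  have hu1 : u ≤ 1 := by nlinarith [sq_nonneg c]
  have hue2 : u ≤ e^2 := by nlinarith [sq_nonneg b]
  have hue : u ≤ e := by nlinarith [sq_nonneg (u - e), sq_nonneg (u + e)]
  have h2eu : 0 ≤ 2*e - u := by linarith
  have hpoly : (e^2 - u) * (1+c)^2 ≤ (2*e - u)^2 := by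
    nlinarith [sq_nonneg (1 - c), sq_nonneg (e - 1),
      mul_nonneg hu0 (by nlinarith [sq_nonneg (e-1)] : (0:ℝ) ≤ 2*(e-1)^2 + 2 - u),
      mul_nonneg (mul_nonneg hu0 hu0) hc, sq_nonneg c]
  have hkey : (b * (1+c))^2 ≤ (2*e - u)^2 := by
    calc (b * (1+c))^2 = b^2 * (1+c)^2 := by ring
      _ ≤ (e^2 - u) * (1+c)^2 := by
          apply mul_le_mul_of_nonneg_right hbsq (sq_nonneg _)
      _ ≤ (2*e - u)^2 := hpoly
  have hfin : b * (1+c) ≤ 2*e - u := by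
    have h1 : 0 ≤ b * (1+c) := mul_nonneg hb (by linarith)
    nlinarith [hkey]
  nlinarith [hfin]

/-- If `ρ` and `σ` are density matrices with `‖ρ - σ‖₁ ≤ ε` and `σ'` is an extension of `σ`
(a density matrix whose partial trace over the second factor is `σ`), then there is an
extension `ρ'` of `ρ` with `‖ρ' - σ'‖₁ ≤ 2√ε`. -/
theorem close_extension_exists {dA dB : ℕ}
    (ρ σ : Matrix (Fin dA) (Fin dA) ℂ)
    (hρ : ρ.PosSemidef) (hρtr : ρ.trace = 1)
    (hσ : σ.PosSemidef) (hσtr : σ.trace = 1)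
    (ε : ℝ)
    (hdist : ∑ i, |(hρ.1.sub hσ.1).eigenvalues i| ≤ ε)
    (σ' : Matrix (Fin dA × Fin dB) (Fin dA × Fin dB) ℂ)
    (hσ' : σ'.PosSemidef) (hσ'tr : σ'.trace = 1)
    (hσ'pt : ∀ i j, ∑ k, σ' (i, k) (j, k) = σ i j) :
    ∃ (ρ' : Matrix (Fin dA × Fin dB) (Fin dA × Fin dB) ℂ) (hρ' : ρ'.PosSemidef),
      ρ'.trace = 1 ∧
      (∀ i j, ∑ k, ρ' (i, k) (j, k) = ρ i j) ∧
      ∑ i, |(hρ'.1.sub hσ'.1).eigenvalues i| ≤ 2 * Real.sqrt ε := by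
  classical
  set T := ∑ i, |(hρ.1.sub hσ.1).eigenvalues i| with hT
  have hT0 : 0 ≤ T := Finset.sum_nonneg fun i _ => abs_nonneg _
  have hε0 : 0 ≤ ε := le_trans hT0 hdist
  set r := fcal hρ.1 Real.sqrt with hr_def
  set s := fcal hσ.1 Real.sqrt with hs_def
  set sinv := fcal hσ.1 (fun x => if x = 0 then 0 else (Real.sqrt x)⁻¹) with hsinv_def
  set Pj := fcal hσ.1 (fun x => if x = 0 then 0 else 1) with hPj_def
  have hrr : r * r = ρ := by
    rw [hr_def, fcal_mul_fcal hρ.1, fcal_eq_of hρ.1 (g := fun x => x)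
      (fun i => Real.mul_self_sqrt (hρ.eigenvalues_nonneg i)), fcal_id]
  have hss : s * s = σ := by
    rw [hs_def, fcal_mul_fcal hσ.1, fcal_eq_of hσ.1 (g := fun x => x)
      (fun i => Real.mul_self_sqrt (hσ.eigenvalues_nonneg i)), fcal_id]
  have hr_psd : r.PosSemidef := fcal_psd hρ.1 fun i => Real.sqrt_nonneg _
  have hs_psd : s.PosSemidef := fcal_psd hσ.1 fun i => Real.sqrt_nonneg _
  have hr_herm : r.IsHermitian := fcal_herm hρ.1 _
  have hsinv_herm : sinv.IsHermitian := fcal_herm hσ.1 _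
  have hPj_herm : Pj.IsHermitian := fcal_herm hσ.1 _
  have hsinvs : ∀ i, (if hσ.1.eigenvalues i = 0 then (0:ℝ) else (Real.sqrt (hσ.1.eigenvalues i))⁻¹)
      * hσ.1.eigenvalues i = Real.sqrt (hσ.1.eigenvalues i) := by
    intro i
    by_cases h : hσ.1.eigenvalues i = 0
    · simp [h]
    · have hpos : 0 < hσ.1.eigenvalues i := lt_of_le_of_ne (hσ.eigenvalues_nonneg i) (Ne.symm h)
      rw [if_neg h, inv_mul_eq_div, div_eq_iff (ne_of_gt (Real.sqrt_pos.mpr hpos))]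
      exact (Real.mul_self_sqrt hpos.le).symm
  have hsinvσ : sinv * σ = s := by
    have h1 : sinv * σ = sinv * fcal hσ.1 (fun x => x) := by rw [fcal_id]
    rw [h1, hsinv_def, fcal_mul_fcal hσ.1, hs_def]
    exact fcal_eq_of hσ.1 hsinvs
  have hσsinv : σ * sinv = s := by
    have h1 : σ * sinv = fcal hσ.1 (fun x => x) * sinv := by rw [fcal_id]
    rw [h1, hsinv_def, fcal_mul_fcal hσ.1, hs_def]
    exact fcal_eq_of hσ.1 fun i => by rw [mul_comm]; exact hsinvs i
  have hssinv : s * sinv = Pj := by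
    rw [hs_def, hsinv_def, fcal_mul_fcal hσ.1, hPj_def]
    apply fcal_eq_of hσ.1
    intro i
    by_cases h : hσ.1.eigenvalues i = 0
    · simp [h]
    · have hpos : 0 < hσ.1.eigenvalues i := lt_of_le_of_ne (hσ.eigenvalues_nonneg i) (Ne.symm h)
      rw [if_neg h, if_neg h, mul_inv_cancel₀ (ne_of_gt (Real.sqrt_pos.mpr hpos))]
  have hPjσ : Pj * σ = σ := by
    have h1 : Pj * σ = Pj * fcal hσ.1 (fun x => x) := by rw [fcal_id]
    conv_lhs => rw [h1, hPj_def, fcal_mul_fcal hσ.1]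
    conv_rhs => rw [show σ = fcal hσ.1 (fun x => x) from (fcal_id hσ.1).symm]
    apply fcal_eq_of hσ.1
    intro i
    by_cases h : hσ.1.eigenvalues i = 0 <;> simp [h]
  have hPjPj : Pj * Pj = Pj := by
    rw [hPj_def, fcal_mul_fcal hσ.1]
    apply fcal_eq_of hσ.1
    intro i
    by_cases h : hσ.1.eigenvalues i = 0 <;> simp [h]
  have hPj_psd : Pj.PosSemidef := fcal_psd hσ.1 fun i => by positivity
  have h1mPj_psd : ((1 : Matrix (Fin dA) (Fin dA) ℂ) - Pj).PosSemidef := by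
    rw [hPj_def, ← fcal_one hσ.1, fcal_sub hσ.1]
    exact fcal_psd hσ.1 fun i => by by_cases h : hσ.1.eigenvalues i = 0 <;> simp [h]
  set M := r * sinv with hM_def
  have hM_ct : Mᴴ = sinv * r := by
    rw [hM_def, conjTranspose_mul, hsinv_herm.eq, hr_herm.eq]
  have hMσ : M * σ = r * s := by rw [hM_def, mul_assoc, hsinvσ]
  have hσMct : σ * Mᴴ = s * r := by rw [hM_ct, ← mul_assoc, hσsinv]
  have hMσM : M * σ * Mᴴ = r * Pj * r := by
    rw [show M * σ * Mᴴ = M * σ * Mᴴ from rfl, hM_ct, hM_def,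
      show r * sinv * σ * (sinv * r) = r * (sinv * σ * sinv) * r from by noncomm_ring,
      show sinv * σ * sinv = s * sinv from by rw [hsinvσ], hssinv]
  set D := ρ - r * Pj * r with hD_def
  set E := ((1 : Matrix (Fin dA) (Fin dA) ℂ) - Pj) * r with hE_def
  have hD_eq : D = Eᴴ * E := by
    have h2 : ((1 : Matrix (Fin dA) (Fin dA) ℂ) - Pj) * (1 - Pj) = 1 - Pj := by
      rw [mul_sub, mul_one, sub_mul, one_mul, hPjPj]
      abel
    rw [hE_def, conjTranspose_mul, h1mPj_psd.1.eq, hr_herm.eq,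
      show r * (1 - Pj) * ((1 - Pj) * r) = r * ((1 - Pj) * (1 - Pj)) * r from by noncomm_ring,
      h2, show r * (1 - Pj) * r = r * r - r * Pj * r from by noncomm_ring, hrr, hD_def]
  have hD_psd : D.PosSemidef := by rw [hD_eq]; exact posSemidef_conjTranspose_mul_self _
  -- the scalar quantities
  set g := ((r * Pj * r).trace).re with hg_def
  set F := ((r * s).trace).re with hF_def
  have htrPjρ : (r * Pj * r).trace = (Pj * ρ).trace := by
    rw [trace_mul_cycle, show r * r * Pj = (r * r) * Pj from rfl, trace_mul_comm, hrr]
  have hg0 : 0 ≤ g := by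
    rw [hg_def, htrPjρ]
    exact re_trace_psd_mul_psd hPj_psd hρ
  have htrD : (D.trace).re = 1 - g := by
    rw [hD_def, trace_sub, Complex.sub_re, hρtr]
    simp [hg_def]
  have hu0 : 0 ≤ 1 - g := by
    rw [← htrD]
    have := re_trace_psd_mul_psd hD_psd (Matrix.PosSemidef.one (n := Fin dA) (R := ℂ))
    rwa [mul_one] at this
  -- u ≤ T
  have hPjσtr : (Pj * σ).trace = 1 := by rw [hPjσ, hσtr]
  have huT : 1 - g ≤ T := by
    have hcontr := re_trace_mul_le (hρ.1.sub hσ.1)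
      (C := (1 : Matrix (Fin dA) (Fin dA) ℂ) - Pj)
      (by rw [sub_sub_cancel]; exact hPj_psd)
      (by rw [show (1 : Matrix (Fin dA) (Fin dA) ℂ) + (1 - Pj) = (1 - Pj) + 1 from by abel]
          exact h1mPj_psd.add (Matrix.PosSemidef.one))
    rw [← hT] at hcontr
    have hexp : (((1 : Matrix (Fin dA) (Fin dA) ℂ) - Pj) * (ρ - σ)).trace
        = (Pj * σ).trace + ((ρ.trace - σ.trace) - (Pj * ρ).trace) := by
      rw [show ((1 : Matrix (Fin dA) (Fin dA) ℂ) - Pj) * (ρ - σ)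
        = (ρ - σ) - (Pj * ρ - Pj * σ) from by noncomm_ring]
      rw [trace_sub, trace_sub, trace_sub]
      ring
    rw [hexp, hPjσtr, hρtr, hσtr] at hcontr
    simp only [Complex.add_re, Complex.sub_re, Complex.one_re, sub_self,
      Complex.zero_re] at hcontr
    rw [hg_def, htrPjρ]
    linarith
  -- Powers-Stormer
  have hΔrs : r * r - s * s = ρ - σ := by rw [hrr, hss]
  have hPS : 2 - 2 * F ≤ T := by
    have hΔ' : (r * r - s * s).IsHermitian := by rw [hΔrs]; exact hρ.1.sub hσ.1
    have hps := powers_stormer hr_psd hs_psd hΔ'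
    rw [eig_sum_congr hΔrs hΔ' (hρ.1.sub hσ.1), ← hT] at hps
    have hexp : ((r - s) * (r - s)).trace
        = (ρ.trace + σ.trace) - ((r * s).trace + ((s * r).trace)) := by
      rw [show (r - s) * (r - s) = (r * r + s * s) - (r * s + s * r) from by noncomm_ring,
        trace_sub, trace_add, trace_add, hrr, hss]
    rw [hexp, hρtr, hσtr, trace_mul_comm s r] at hps
    simp only [Complex.sub_re, Complex.add_re, Complex.one_re, ← hF_def] at hps
    linarith
  -- a = 1 + g - 2F
  have haval : (((M - 1) * σ * (M - 1)ᴴ).trace).re = 1 + g - 2 * F := by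
    have hexp : (M - 1) * σ * (M - 1)ᴴ = (M * σ * Mᴴ + σ) - (M * σ + σ * Mᴴ) := by
      rw [conjTranspose_sub, conjTranspose_one]
      noncomm_ring
    rw [hexp, hMσM, hMσ, hσMct, trace_sub, trace_add, trace_add, Complex.sub_re,
      Complex.add_re, Complex.add_re, hσtr, trace_mul_comm s r]
    simp only [Complex.one_re, ← hg_def, ← hF_def]
    ring
  -- dB > 0
  have hdB : 0 < dB := by
    rcases Nat.eq_zero_or_pos dB with h | h
    · exfalso
      subst h
      have h0 : σ'.trace = 0 := by
        rw [trace]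
        have : (Finset.univ : Finset (Fin dA × Fin 0)) = ∅ := by
          apply Finset.univ_eq_empty
        rw [this, Finset.sum_empty]
      rw [h0] at hσ'tr
      exact one_ne_zero hσ'tr.symm
    · exact h
  set k0 : Fin dB := ⟨0, hdB⟩ with hk0
  set τ := diagonal (Pi.single k0 (1 : ℂ)) with hτ_def
  have hτtr : τ.trace = 1 := by
    rw [hτ_def, trace_diagonal]
    simp [Pi.single_apply]
  have hτct : τᴴ = τ := by
    have hstar : (star (Pi.single k0 (1 : ℂ)) : Fin dB → ℂ) = Pi.single k0 1 := by
      funext k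
      by_cases h : k = k0 <;> simp [Pi.star_apply, Pi.single_apply, h]
    rw [hτ_def, diagonal_conjTranspose, hstar]
  have hττ : τ * τ = τ := by
    have hmul : (fun k => Pi.single k0 (1 : ℂ) k * Pi.single k0 (1 : ℂ) k)
        = Pi.single k0 (1 : ℂ) := by
      funext k
      by_cases h : k = k0 <;> simp [Pi.single_apply, h]
    rw [hτ_def, diagonal_mul_diagonal, hmul]
  set Y := M ⊗ₖ (1 : Matrix (Fin dB) (Fin dB) ℂ) with hY_def
  have hYct : Yᴴ = Mᴴ ⊗ₖ (1 : Matrix (Fin dB) (Fin dB) ℂ) := by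
    rw [hY_def, kron_conjT, conjTranspose_one]
  set Dk := D ⊗ₖ τ with hDk_def
  have hDk_psd : Dk.PosSemidef := by
    rw [hDk_def, hD_eq, show (Eᴴ * E) ⊗ₖ τ = (E ⊗ₖ τ)ᴴ * (E ⊗ₖ τ) from by
      rw [kron_conjT, ← mul_kronecker_mul, hτct, hττ]]
    exact posSemidef_conjTranspose_mul_self _
  set P' := Y * σ' * Yᴴ + Dk with hρ'_def
  have hρ'_psd : P'.PosSemidef := (hσ'.mul_mul_conjTranspose_same Y).add hDk_psd
  have hpt : ∀ i j, ∑ k, P' (i, k) (j, k) = ρ i j := by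
    intro i j
    have h1 : ∑ k, (Y * σ' * Yᴴ) (i, k) (j, k) = (M * σ * Mᴴ) i j := by
      rw [hYct, hY_def]
      exact pt_sandwich hσ'pt M Mᴴ i j
    have h2 : ∑ k, Dk (i, k) (j, k) = D i j := by
      rw [hDk_def, pt_kron, hτtr, mul_one]
    calc ∑ k, P' (i, k) (j, k)
        = ∑ k, ((Y * σ' * Yᴴ) (i, k) (j, k) + Dk (i, k) (j, k)) := by
          apply Finset.sum_congr rfl
          intro k _
          rw [hρ'_def, Matrix.add_apply]
      _ = (M * σ * Mᴴ) i j + D i j := by rw [Finset.sum_add_distrib, h1, h2]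
      _ = ρ i j := by
          rw [hMσM, hD_def, Matrix.sub_apply]
          ring
  have htrρ' : P'.trace = 1 := by
    rw [trace, Fintype.sum_prod_type]
    calc ∑ i, ∑ k, P'.diag (i, k) = ∑ i, ρ i i :=
          Finset.sum_congr rfl fun i _ => by simpa [Matrix.diag] using hpt i i
      _ = ρ.trace := rfl
      _ = 1 := hρtr
  refine ⟨P', hρ'_psd, htrρ', hpt, ?_⟩
  obtain ⟨C, hC1, hC2, hCC, hCtr⟩ := exists_sign_matrix (hρ'_psd.1.sub hσ'.1)
  rw [← hCtr]
  have hCh : C.IsHermitian := by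
    have h := hC1.1
    rw [Matrix.IsHermitian, conjTranspose_sub, conjTranspose_one] at h
    rwa [sub_right_inj] at h
  set N := (Y - 1) * σ' * (Y - 1)ᴴ with hN_def
  have hN_psd : N.PosSemidef := hσ'.mul_mul_conjTranspose_same _
  have hY1 : Y - 1 = (M - 1) ⊗ₖ (1 : Matrix (Fin dB) (Fin dB) ℂ) := (sub_kron_one M).symm
  have hY1ct : (Y - 1)ᴴ = (M - 1)ᴴ ⊗ₖ (1 : Matrix (Fin dB) (Fin dB) ℂ) := by
    rw [hY1, kron_conjT, conjTranspose_one]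
  have haval' : N.trace.re = 1 + g - 2 * F := by
    rw [hN_def, hY1ct]
    conv_lhs => rw [hY1]
    rw [trace_sandwich hσ'pt (M - 1) ((M - 1)ᴴ)]
    exact haval
  have ha0 : 0 ≤ N.trace.re := by
    have h := re_trace_psd_mul_psd hN_psd (Matrix.PosSemidef.one)
    rwa [mul_one] at h
  have hsplit : C * (P' - σ') = C * ((Y - 1) * σ' * Yᴴ) + C * (σ' * (Y - 1)ᴴ) + C * Dk := by
    rw [hρ'_def, conjTranspose_sub, conjTranspose_one]
    noncomm_ring
  have ht1 : ((C * ((Y - 1) * σ' * Yᴴ)).trace).re ≤ Real.sqrt (N.trace.re) * Real.sqrt g := by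
    have hrw : C * ((Y - 1) * σ' * Yᴴ) = (C * (Y - 1)) * σ' * Yᴴ := by noncomm_ring
    have hcs := cs_weighted hσ' (C * (Y - 1)) Y
    have hfac : ((C * (Y - 1)) * σ' * (C * (Y - 1))ᴴ).trace.re ≤ N.trace.re := by
      have h1 : (C * (Y - 1)) * σ' * (C * (Y - 1))ᴴ = C * (N * C) := by
        rw [conjTranspose_mul, hCh.eq, hN_def]
        noncomm_ring
      rw [h1, trace_mul_comm, show N * C * C = N * (C * C) from mul_assoc _ _ _,
        trace_mul_comm]
      exact re_trace_contract_le hN_psd hCC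
    have hYfac : (Y * σ' * Yᴴ).trace.re = g := by
      rw [hYct]
      conv_lhs => rw [hY_def]
      rw [trace_sandwich hσ'pt M Mᴴ, hMσM, ← hg_def]
    rw [hYfac] at hcs
    calc ((C * ((Y - 1) * σ' * Yᴴ)).trace).re
        ≤ |((C * (Y - 1) * σ' * Yᴴ).trace).re| := by rw [hrw]; exact le_abs_self _
      _ ≤ Real.sqrt (((C * (Y - 1)) * σ' * (C * (Y - 1))ᴴ).trace.re) * Real.sqrt g := hcs
      _ ≤ Real.sqrt (N.trace.re) * Real.sqrt g :=
          mul_le_mul_of_nonneg_right (Real.sqrt_le_sqrt hfac) (Real.sqrt_nonneg _)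
  have ht2 : ((C * (σ' * (Y - 1)ᴴ)).trace).re ≤ Real.sqrt (N.trace.re) := by
    have hrw : C * (σ' * (Y - 1)ᴴ) = C * σ' * (Y - 1)ᴴ := by noncomm_ring
    have hcs := cs_weighted hσ' C (Y - 1)
    have hfac : (C * σ' * Cᴴ).trace.re ≤ 1 := by
      rw [hCh.eq, trace_mul_comm, ← mul_assoc]
      have h2 := re_trace_contract_le hσ' hCC
      rw [hσ'tr] at h2
      simpa using h2
    calc ((C * (σ' * (Y - 1)ᴴ)).trace).re
        ≤ |((C * σ' * (Y - 1)ᴴ).trace).re| := by rw [hrw]; exact le_abs_self _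
      _ ≤ Real.sqrt ((C * σ' * Cᴴ).trace.re) * Real.sqrt (((Y - 1) * σ' * (Y - 1)ᴴ).trace.re) :=
          hcs
      _ ≤ 1 * Real.sqrt (N.trace.re) := by
          apply mul_le_mul_of_nonneg_right _ (Real.sqrt_nonneg _)
          exact Real.sqrt_le_one.mpr hfac
      _ = Real.sqrt (N.trace.re) := one_mul _
  have ht3 : ((C * Dk).trace).re ≤ 1 - g := by
    have h1 := re_trace_contract_le hDk_psd hC1
    have hDktr : Dk.trace.re = 1 - g := by
      rw [hDk_def, trace_kronecker, hτtr, mul_one, htrD]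
    linarith only [h1, hDktr]
  have hCsum : ((C * (P' - σ')).trace).re
      = ((C * ((Y - 1) * σ' * Yᴴ)).trace).re + ((C * (σ' * (Y - 1)ᴴ)).trace).re
        + ((C * Dk).trace).re := by
    rw [hsplit, trace_add, trace_add, Complex.add_re, Complex.add_re]
  have hg1 : g ≤ 1 := by linarith only [hu0]
  have final := real_ineq (e := Real.sqrt ε) (u := 1 - g) (b := Real.sqrt (N.trace.re))
    (c := Real.sqrt g) hu0 (Real.sqrt_nonneg _) (Real.sqrt_nonneg _)
    (Real.sqrt_le_one.mpr hg1)
    (by rw [Real.sq_sqrt hg0]; ring)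
    (by rw [Real.sq_sqrt ha0, Real.sq_sqrt hε0, haval']; linarith only [hPS, hdist])
    (Real.sqrt_nonneg _)
  rw [hCsum]
  linarith only [ht1, ht2, ht3, final]
end

section
/- Tail estimate for finite-entropy Schmidt coefficient sequences (key step of the finite-approximation lemma): let λ : ℕ → ℝ be a nonincreasing sequence with λ i ≥ 0 for all i, with ∑' i, λ i = 1 (the series sums to 1), and such that the entropy series ∑ i, Real.negMulLog (λ i) is summable. Then the sequence n ↦ (∑' i, λ (i + n)) · Real.log n converges to 0 as n → ∞. -/
set_option maxHeartbeats 1000000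

private lemma l_le_inv (l : ℕ → ℝ) (hmono : Antitone l) (hpos : ∀ i, 0 ≤ l i)
    (hsum : HasSum l 1) (k : ℕ) : l k ≤ 1 / (k + 1 : ℝ) := by
  have hS : Summable l := hsum.summable
  have h1 : ∑' i, l i = 1 := hsum.tsum_eq
  have hpart : ∑ j ∈ Finset.range (k + 1), l j ≤ 1 := by
    rw [← h1]; exact Summable.sum_le_tsum _ (fun i _ => hpos i) hS
  have hlow : (k + 1 : ℝ) * l k ≤ ∑ j ∈ Finset.range (k + 1), l j := by
    have : ∑ j ∈ Finset.range (k + 1), l k ≤ ∑ j ∈ Finset.range (k + 1), l j :=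
      Finset.sum_le_sum (fun j hj => hmono (Nat.le_of_lt_succ (Finset.mem_range.mp hj)))
    simpa [Finset.sum_const, mul_comm] using this
  have hk : (0 : ℝ) < k + 1 := by positivity
  rw [le_div_iff₀ hk, mul_comm]
  exact hlow.trans hpart

/-- **Tail estimate for finite-entropy Schmidt coefficient sequences.** If `l` is a
nonincreasing nonnegative sequence summing to `1` whose entropy series is summable, then
the tail sums decay faster than `1 / log n`. -/
theorem tail_sum_mul_log_tendsto_zero (l : ℕ → ℝ)
    (hmono : Antitone l) (hpos : ∀ i, 0 ≤ l i)
    (hsum : HasSum l 1)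
    (hent : Summable fun i => Real.negMulLog (l i)) :
    Filter.Tendsto (fun n : ℕ => (∑' i : ℕ, l (i + n)) * Real.log (n : ℝ))
      Filter.atTop (nhds 0) := by
  have hS : Summable l := hsum.summable
  -- pointwise bound
  have key : ∀ (n k : ℕ), n ≤ k → l k * Real.log (n : ℝ) ≤ Real.negMulLog (l k) := by
    intro n k hnk
    rcases eq_or_lt_of_le (hpos k) with h0 | h0
    · simp [← h0, Real.negMulLog]
    · have hle : l k ≤ 1 / (k + 1 : ℝ) := l_le_inv l hmono hpos hsum k
      have hlogn : Real.log (n : ℝ) ≤ Real.log ((k : ℝ) + 1) := by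
        rcases Nat.eq_zero_or_pos n with rfl | hn
        · simpa using Real.log_nonneg (by linarith [Nat.cast_nonneg (α := ℝ) k])
        · apply Real.log_le_log (by exact_mod_cast hn)
          have : (n : ℝ) ≤ (k : ℝ) := by exact_mod_cast hnk
          linarith
      have hlogl : Real.log (l k) ≤ -Real.log ((k : ℝ) + 1) := by
        calc Real.log (l k) ≤ Real.log (1 / ((k : ℝ) + 1)) := Real.log_le_log h0 hle
          _ = -Real.log ((k : ℝ) + 1) := by
              rw [Real.log_div one_ne_zero (by positivity), Real.log_one]; ring
      have : Real.log (n : ℝ) ≤ -Real.log (l k) := by linarith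
      have h2 := mul_le_mul_of_nonneg_left this (hpos k)
      rw [Real.negMulLog]; nlinarith [h2]
  -- summabilities
  have hSn : ∀ n : ℕ, Summable fun i => l (i + n) := fun n =>
    (summable_nat_add_iff n).mpr hS
  have hEn : ∀ n : ℕ, Summable fun i => Real.negMulLog (l (i + n)) := fun n =>
    (summable_nat_add_iff n).mpr hent
  have hEnonneg : ∀ k, 0 ≤ Real.negMulLog (l k) := by
    intro k
    apply Real.negMulLog_nonneg (hpos k)
    exact (l_le_inv l hmono hpos hsum k).trans (by
      rw [div_le_one (by positivity)]; norm_num)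
  have hub : ∀ n : ℕ, (∑' i : ℕ, l (i + n)) * Real.log (n : ℝ)
      ≤ ∑' i : ℕ, Real.negMulLog (l (i + n)) := by
    intro n
    rw [← tsum_mul_right]
    exact Summable.tsum_le_tsum (fun i => key n (i + n) (Nat.le_add_left n i))
      ((hSn n).mul_right _) (hEn n)
  have hlb : ∀ n : ℕ, 0 ≤ (∑' i : ℕ, l (i + n)) * Real.log (n : ℝ) := by
    intro n
    rcases Nat.eq_zero_or_pos n with rfl | hn
    · simp
    · exact mul_nonneg (tsum_nonneg fun i => hpos _)
        (Real.log_nonneg (by exact_mod_cast hn))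
  have htail : Filter.Tendsto (fun n : ℕ => ∑' i : ℕ, Real.negMulLog (l (i + n)))
      Filter.atTop (nhds 0) := tendsto_sum_nat_add (fun i => Real.negMulLog (l i))
  exact squeeze_zero hlb hub htail
end

section
/- Entropy bound from a projective measurement: let ρ be a density matrix on ℂ^d and let Π : Matrix (Fin d) (Fin d) ℂ be an orthogonal projection (Hermitian with Π * Π = Π) of rank k, and set p := Re(trace(Π * ρ)). Then S(ρ) ≤ negMulLog(p) + negMulLog(1 − p) + p·log k + (1 − p)·log(d − k), with all logarithms natural. -/
open scoped ComplexOrder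


lemma log_concave_aux (q x y : ℝ) (hq0 : 0 ≤ q) (hq1 : q ≤ 1) (hx : 0 < x) (hy : 0 < y) :
    q * Real.log x + (1 - q) * Real.log y ≤ Real.log (q * x + (1 - q) * y) := by
  set s := q * x + (1 - q) * y with hs
  have hq1' : 0 ≤ 1 - q := by linarith
  have hspos : 0 < s := by
    rcases lt_or_eq_of_le hq0 with h | h
    · have : 0 < q * x := mul_pos h hx
      nlinarith [mul_nonneg hq1' hy.le]
    · rw [hs, ← h]; simpa using hy
  have hxs : Real.log x = Real.log s + Real.log (x / s) := by
    rw [Real.log_div hx.ne' hspos.ne']; ring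
  have hys : Real.log y = Real.log s + Real.log (y / s) := by
    rw [Real.log_div hy.ne' hspos.ne']; ring
  have h1 : Real.log (x / s) ≤ x / s - 1 := Real.log_le_sub_one_of_pos (div_pos hx hspos)
  have h2 : Real.log (y / s) ≤ y / s - 1 := Real.log_le_sub_one_of_pos (div_pos hy hspos)
  have : q * (x / s) + (1 - q) * (y / s) = 1 := by
    field_simp
    linarith [hs]
  nlinarith [mul_le_mul_of_nonneg_left h1 hq0, mul_le_mul_of_nonneg_left h2 hq1']

lemma negMulLog_le_aux (l s : ℝ) (hl : 0 ≤ l) (hs : 0 < s) :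
    Real.negMulLog l ≤ -(l * Real.log s) + s - l := by
  rcases eq_or_lt_of_le hl with h | h
  · simp [← h, Real.negMulLog, hs.le]
  · have h1 : Real.log (s / l) ≤ s / l - 1 := Real.log_le_sub_one_of_pos (div_pos hs h)
    have h2 : Real.log (s / l) = Real.log s - Real.log l := Real.log_div hs.ne' h.ne'
    rw [Real.negMulLog]
    have := mul_le_mul_of_nonneg_left h1 h.le
    rw [h2] at this
    have hd : l * (s / l - 1) = s - l := by field_simp
    nlinarith

lemma key_aux (l q x y : ℝ) (hl : 0 ≤ l) (hq0 : 0 ≤ q) (hq1 : q ≤ 1)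
    (hx0 : 0 ≤ x) (hy0 : 0 ≤ y)
    (hx : l * q = 0 ∨ 0 < x) (hy : l * (1 - q) = 0 ∨ 0 < y) :
    Real.negMulLog l ≤ -(l * q * Real.log x) - (l * (1 - q) * Real.log y)
      + (q * x + (1 - q) * y - l) := by
  rcases eq_or_lt_of_le hl with h | h
  · simp only [← h, Real.negMulLog, zero_mul, mul_zero, neg_zero, sub_zero, zero_sub,
      neg_neg, sub_zero]
    simp only [← h, zero_mul, neg_zero, sub_zero, zero_add]
    have := mul_nonneg hq0 hx0
    have := mul_nonneg (by linarith : (0:ℝ) ≤ 1 - q) hy0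
    simp [Real.negMulLog]
    linarith
  · rcases hx with hx | hx
    · -- q = 0
      have hq : q = 0 := by
        rcases mul_eq_zero.mp hx with h' | h'
        · exact absurd h' h.ne'
        · exact h'
      subst hq
      have hy' : 0 < y := by
        rcases hy with h' | h'
        · exfalso; simp at h'; exact h.ne' h'
        · exact h'
      have := negMulLog_le_aux l y hl hy'
      simp only [zero_mul, mul_zero, sub_zero, one_mul, mul_one, neg_zero, zero_add]
      nlinarith
    · rcases hy with hy | hy
      · -- q = 1
        have hq : q = 1 := by
          rcases mul_eq_zero.mp hy with h' | h'
          · exact absurd h' h.ne'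
          · linarith
        subst hq
        have := negMulLog_le_aux l x hl hx
        simp only [sub_self, zero_mul, mul_zero, one_mul, mul_one, neg_zero, add_zero, sub_zero]
        nlinarith
      · -- generic
        set s := q * x + (1 - q) * y with hs
        have hspos : 0 < s := by
          rcases lt_or_eq_of_le hq0 with h' | h'
          · nlinarith [mul_nonneg (by linarith : (0:ℝ) ≤ 1 - q) hy0]
          · rw [hs, ← h']; simpa using hy
        have h1 := negMulLog_le_aux l s hl hspos
        have h2 := log_concave_aux q x y hq0 hq1 hx hy
        nlinarith [mul_le_mul_of_nonneg_left h2 h.le]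

-- trace of a Hermitian matrix equals sum of eigenvalues
lemma trace_eq_sum_eigs {n : ℕ} {A : Matrix (Fin n) (Fin n) ℂ} (hA : A.IsHermitian) :
    A.trace = ∑ i, (hA.eigenvalues i : ℂ) := by
  conv_lhs => rw [hA.spectral_theorem, Unitary.conjStarAlgAut_apply]
  rw [Matrix.trace_mul_cycle]
  rw [(Matrix.mem_unitaryGroup_iff').mp hA.eigenvectorUnitary.2]
  rw [Matrix.one_mul, Matrix.trace_diagonal]
  simp



-- diag of PSD nonneg
lemma psd_diag_re_nonneg {n : ℕ} {M : Matrix (Fin n) (Fin n) ℂ} (hM : M.PosSemidef) (i : Fin n) :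
    0 ≤ (M i i).re := by
  have := hM.re_dotProduct_nonneg (Pi.single i 1)
  simpa [dotProduct, Matrix.mulVec, Pi.single_apply, Finset.sum_ite_eq,
    Finset.mul_sum, apply_ite] using this

lemma trace_idem_eq_rank {n : ℕ} {P : Matrix (Fin n) (Fin n) ℂ} (hP : P.IsHermitian)
    (hidem : P * P = P) : P.trace = (P.rank : ℂ) := by
  have heig : ∀ i, hP.eigenvalues i = 0 ∨ hP.eigenvalues i = 1 := by
    intro i
    have hD : star (hP.eigenvectorUnitary : Matrix (Fin n) (Fin n) ℂ) * P * (hP.eigenvectorUnitary : Matrix (Fin n) (Fin n) ℂ)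
        = Matrix.diagonal (RCLike.ofReal ∘ hP.eigenvalues) := by
      have := hP.conjStarAlgAut_star_eigenvectorUnitary
      rwa [Unitary.conjStarAlgAut_star_apply] at this
    set U : Matrix (Fin n) (Fin n) ℂ := (hP.eigenvectorUnitary : Matrix (Fin n) (Fin n) ℂ) with hU
    have hUU : U * star U = 1 := (Matrix.mem_unitaryGroup_iff).mp hP.eigenvectorUnitary.2
    have hDD : (star U * P * U) * (star U * P * U) = star U * (P * P) * U := by
      rw [Matrix.mul_assoc, Matrix.mul_assoc, Matrix.mul_assoc]
      rw [← Matrix.mul_assoc U (star U) _, hUU, Matrix.one_mul]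
      noncomm_ring
    rw [hidem, hD, Matrix.diagonal_mul_diagonal] at hDD
    have := Matrix.ext_iff.mpr hDD i i
    simp only [Matrix.diagonal_apply_eq, Function.comp_apply] at this
    have h2 : hP.eigenvalues i * hP.eigenvalues i = hP.eigenvalues i := by
      exact_mod_cast this
    rcases mul_self_eq_zero.mp (by nlinarith [sq_nonneg (hP.eigenvalues i)] : (hP.eigenvalues i - 1) * (hP.eigenvalues i) * ((hP.eigenvalues i - 1) * (hP.eigenvalues i)) = 0) with h
    rcases mul_eq_zero.mp h with h | h
    · right; linarith
    · left; exact h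
  have hsum : ∑ i, hP.eigenvalues i = (P.rank : ℝ) := by
    classical
    have hone : ∀ i ∈ Finset.filter (fun i => hP.eigenvalues i ≠ 0) Finset.univ,
        hP.eigenvalues i = 1 := by
      intro i hi
      rcases heig i with h | h
      · exact absurd h (Finset.mem_filter.mp hi).2
      · exact h
    rw [← Finset.sum_filter_ne_zero, Finset.sum_congr rfl hone, Finset.sum_const,
      nsmul_eq_mul, mul_one, hP.rank_eq_card_non_zero_eigs, Fintype.card_subtype]
  rw [trace_eq_sum_eigs hP]
  rw [← Complex.ofReal_sum]
  rw [hsum]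
  norm_num


open scoped ComplexOrder


/-- **Entropy bound from a projective measurement.** If `Π` is an orthogonal projection of
rank `k` and `p = Re tr(Π ρ)`, then `S(ρ) ≤ H₂(p) + p log k + (1-p) log (d-k)`. -/
theorem entropy_le_of_projection {d k : ℕ}
    (ρ : Matrix (Fin d) (Fin d) ℂ) (hρ : ρ.PosSemidef) (hρtr : ρ.trace = 1)
    (Proj : Matrix (Fin d) (Fin d) ℂ) (hProj : Proj.IsHermitian)
    (hidem : Proj * Proj = Proj) (hrank : Proj.rank = k) :
    ∑ i, Real.negMulLog (hρ.1.eigenvalues i) ≤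
      Real.negMulLog ((Proj * ρ).trace.re) +
        Real.negMulLog (1 - (Proj * ρ).trace.re) +
        (Proj * ρ).trace.re * Real.log k +
        (1 - (Proj * ρ).trace.re) * Real.log ((d : ℝ) - (k : ℝ)) := by
    classical
  set lam := hρ.1.eigenvalues with hlamdef
  set U : Matrix (Fin d) (Fin d) ℂ := (hρ.1.eigenvectorUnitary : Matrix (Fin d) (Fin d) ℂ)
    with hUdef
  have hUU : U * star U = 1 := (Matrix.mem_unitaryGroup_iff).mp hρ.1.eigenvectorUnitary.2
  have hUU' : star U * U = 1 := (Matrix.mem_unitaryGroup_iff').mp hρ.1.eigenvectorUnitary.2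
  set M := star U * Proj * U with hMdef
  set q : Fin d → ℝ := fun i => (M i i).re with hqdef
  -- positivity facts
  have hProjPSD : Proj.PosSemidef := by
    have h := Matrix.posSemidef_conjTranspose_mul_self Proj
    rwa [show Proj.conjTranspose = Proj from hProj, hidem] at h
  have hQherm : (1 - Proj).conjTranspose = 1 - Proj := by
    simp [Matrix.conjTranspose_sub, show Proj.conjTranspose = Proj from hProj]
  have hQidem : (1 - Proj) * (1 - Proj) = 1 - Proj := by
    have h : (1 - Proj) * (1 - Proj) = 1 - Proj - Proj + Proj * Proj := by noncomm_ring
    rw [h, hidem]; abel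
  have hQPSD : (1 - Proj).PosSemidef := by
    have h := Matrix.posSemidef_conjTranspose_mul_self (1 - Proj)
    rwa [hQherm, hQidem] at h
  have hMPSD : M.PosSemidef := by
    have h := hProjPSD.conjTranspose_mul_mul_same U
    rwa [← Matrix.star_eq_conjTranspose] at h
  have hNPSD : (1 - M).PosSemidef := by
    have h := hQPSD.conjTranspose_mul_mul_same U
    rwa [← Matrix.star_eq_conjTranspose, Matrix.mul_sub, Matrix.sub_mul, Matrix.mul_one,
      hUU'] at h
  -- q bounds
  have hq0 : ∀ i, 0 ≤ q i := fun i => psd_diag_re_nonneg hMPSD i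
  have hq1 : ∀ i, q i ≤ 1 := by
    intro i
    have h := psd_diag_re_nonneg hNPSD i
    simp only [Matrix.sub_apply, Matrix.one_apply_eq, Complex.sub_re, Complex.one_re] at h
    simp only [hqdef]
    linarith
  -- eigenvalue facts
  have hlam0 : ∀ i, 0 ≤ lam i := fun i => hρ.eigenvalues_nonneg i
  have hsum1 : ∑ i, lam i = 1 := by
    have h := trace_eq_sum_eigs hρ.1
    rw [hρtr] at h
    exact_mod_cast h.symm
  -- sum of q
  have hqsum : ∑ i, q i = (k : ℝ) := by
    have htr : M.trace = (k : ℂ) := by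
      rw [hMdef, Matrix.trace_mul_cycle, hUU, Matrix.one_mul,
        trace_idem_eq_rank hProj hidem, hrank]
    have h2 : (∑ i, M i i) = (k : ℂ) := htr
    have h3 := congrArg Complex.re h2
    rw [Complex.re_sum] at h3
    simpa using h3
  -- p as a sum
  set p := (Proj * ρ).trace.re with hpdef
  have hplam : p = ∑ i, lam i * q i := by
    have h1 : (Proj * ρ).trace = (M * Matrix.diagonal (RCLike.ofReal ∘ lam)).trace := by
      conv_lhs => rw [hρ.1.spectral_theorem, Unitary.conjStarAlgAut_apply]
      rw [← Matrix.mul_assoc, ← Matrix.mul_assoc, Matrix.trace_mul_comm, hMdef]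
      rw [← Matrix.mul_assoc, ← Matrix.mul_assoc]
    have h2 : (M * Matrix.diagonal (RCLike.ofReal ∘ lam)).trace
        = ∑ i, M i i * (lam i : ℂ) := by
      simp [Matrix.trace, Matrix.diag, Matrix.mul_diagonal]
    rw [hpdef, h1, h2, Complex.re_sum]
    refine Finset.sum_congr rfl fun i _ => ?_
    simp [Complex.mul_re, mul_comm]
    left; rfl
  -- scalar setup
  set K := (k : ℝ) with hKdef
  set Dr := (d : ℝ) with hDdef
  have hdk : ∑ i, (1 - q i) = Dr - K := by
    rw [Finset.sum_sub_distrib, hqsum]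
    simp [hDdef, Finset.card_univ]
  have hlamle1 : ∀ i, lam i ≤ 1 := by
    intro i
    calc lam i ≤ ∑ j, lam j := Finset.single_le_sum (fun j _ => hlam0 j) (Finset.mem_univ i)
    _ = 1 := hsum1
  have hp0 : 0 ≤ p := by
    rw [hplam]; exact Finset.sum_nonneg fun i _ => mul_nonneg (hlam0 i) (hq0 i)
  have hpK : p ≤ K := by
    rw [hplam, ← hqsum]
    exact Finset.sum_le_sum fun i _ => by nlinarith [hlam0 i, hq0 i, hlamle1 i]
  have h1p : 1 - p = ∑ i, lam i * (1 - q i) := by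
    have h : ∑ i, lam i * (1 - q i) = (∑ i, lam i) - ∑ i, lam i * q i := by
      rw [← Finset.sum_sub_distrib]
      exact Finset.sum_congr rfl fun i _ => by ring
    rw [h, hsum1, ← hplam]
  have hp1 : p ≤ 1 := by
    have h := Finset.sum_nonneg (fun i (_ : i ∈ Finset.univ) =>
      mul_nonneg (hlam0 i) (by linarith [hq1 i] : (0:ℝ) ≤ 1 - q i))
    rw [← h1p] at h; linarith
  have h1pDK : 1 - p ≤ Dr - K := by
    rw [h1p, ← hdk]
    exact Finset.sum_le_sum fun i _ => by nlinarith [hlam0 i, hq1 i, hlamle1 i]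
  have hDK0 : 0 ≤ Dr - K := le_trans (by linarith) h1pDK
  set x := p / K with hxdef
  set y := (1 - p) / (Dr - K) with hydef
  have hx0 : 0 ≤ x := div_nonneg hp0 (by positivity)
  have hy0 : 0 ≤ y := div_nonneg (by linarith) hDK0
  have hKx : K * x = p := by
    rcases eq_or_lt_of_le (by positivity : (0:ℝ) ≤ K) with h | h
    · rw [hxdef, ← h]; simp; linarith [hpK]
    · rw [hxdef]; field_simp
  have hDy : (Dr - K) * y = 1 - p := by
    rcases eq_or_lt_of_le hDK0 with h | h
    · rw [hydef, ← h]; simp; linarith [h1pDK]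
    · rw [hydef]; field_simp
  have hxd : ∀ i, lam i * q i = 0 ∨ 0 < x := by
    intro i
    by_cases hp' : p = 0
    · left
      have h := (Finset.sum_eq_zero_iff_of_nonneg
        (fun j (_ : j ∈ Finset.univ) => mul_nonneg (hlam0 j) (hq0 j))).mp
        (by rw [← hplam, hp'])
      exact h i (Finset.mem_univ i)
    · right
      have hppos : 0 < p := lt_of_le_of_ne hp0 (Ne.symm hp')
      exact div_pos hppos (lt_of_lt_of_le hppos hpK)
  have hyd : ∀ i, lam i * (1 - q i) = 0 ∨ 0 < y := by
    intro i
    by_cases hp' : 1 - p = 0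
    · left
      have h := (Finset.sum_eq_zero_iff_of_nonneg
        (fun j (_ : j ∈ Finset.univ) => mul_nonneg (hlam0 j)
          (by linarith [hq1 j] : (0:ℝ) ≤ 1 - q j))).mp (by rw [← h1p, hp'])
      exact h i (Finset.mem_univ i)
    · right
      have hppos : 0 < 1 - p := lt_of_le_of_ne (by linarith) (Ne.symm hp')
      exact div_pos hppos (lt_of_lt_of_le hppos h1pDK)
  -- per-index bound and summation
  have hmain : ∑ i, Real.negMulLog (lam i) ≤ -(p * Real.log x) - ((1 - p) * Real.log y) := by
    have hstep := Finset.sum_le_sum (fun i (_ : i ∈ Finset.univ) =>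
      key_aux (lam i) (q i) x y (hlam0 i) (hq0 i) (hq1 i) hx0 hy0 (hxd i) (hyd i))
    have hsplit : ∑ i, (-(lam i * q i * Real.log x) - (lam i * (1 - q i) * Real.log y)
        + (q i * x + (1 - q i) * y - lam i))
        = -((∑ i, lam i * q i) * Real.log x) - ((∑ i, lam i * (1 - q i)) * Real.log y)
          + ((∑ i, q i) * x + (∑ i, (1 - q i)) * y - ∑ i, lam i) := by
      rw [Finset.sum_add_distrib, Finset.sum_sub_distrib, Finset.sum_sub_distrib,
        Finset.sum_add_distrib]
      simp only [Finset.sum_neg_distrib, ← Finset.sum_mul]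
    rw [hsplit] at hstep
    rw [← hplam, ← h1p, hqsum, hdk, hsum1, hKx, hDy] at hstep
    calc ∑ i, Real.negMulLog (lam i) ≤ _ := hstep
    _ = -(p * Real.log x) - ((1 - p) * Real.log y) := by ring
  -- final rearrangement
  have hterm1 : -(p * Real.log x) = Real.negMulLog p + p * Real.log K := by
    by_cases hp' : p = 0
    · simp [hp', Real.negMulLog]
    · have hKpos : 0 < K := lt_of_lt_of_le (lt_of_le_of_ne hp0 (Ne.symm hp')) hpK
      rw [hxdef, Real.log_div hp' hKpos.ne']
      simp [Real.negMulLog]; ring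
  have hterm2 : -((1 - p) * Real.log y)
      = Real.negMulLog (1 - p) + (1 - p) * Real.log (Dr - K) := by
    by_cases hp' : 1 - p = 0
    · simp [hp', Real.negMulLog]
    · have hDKpos : 0 < Dr - K :=
        lt_of_lt_of_le (lt_of_le_of_ne (by linarith) (Ne.symm hp')) h1pDK
      rw [hydef, Real.log_div hp' hDKpos.ne']
      simp [Real.negMulLog]; ring
  linarith [hmain, hterm1, hterm2]
end

section
/- Under the i.i.d. distribution with single-letter probabilities t̄, the most likely type class is that of t itself: let d, n ≥ 1 and let t, t' : Fin d → ℕ satisfy ∑ i, t i = n and ∑ i, t' i = n. Then (Nat.multinomial Finset.univ t' : ℝ) · ∏ i, ((t i : ℝ)/n)^(t' i) ≤ (Nat.multinomial Finset.univ t : ℝ) · ∏ i, ((t i : ℝ)/n)^(t i). -/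
open Finset in
lemma pow_mul_factorial_le (a b : ℕ) : a ^ b * a.factorial ≤ a ^ a * b.factorial := by
  rcases le_total b a with h | h
  · have h1 : (a - (a - b)).factorial * a.descFactorial (a - b) = a.factorial :=
      Nat.factorial_mul_descFactorial (Nat.sub_le a b)
    rw [Nat.sub_sub_self h] at h1
    calc a ^ b * a.factorial = a ^ b * (b.factorial * a.descFactorial (a - b)) := by rw [h1]
      _ ≤ a ^ b * (b.factorial * a ^ (a - b)) := by
          exact Nat.mul_le_mul_left _ (Nat.mul_le_mul_left _ (Nat.descFactorial_le_pow a _))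
      _ = a ^ a * b.factorial := by
          rw [show a ^ a = a ^ b * a ^ (a - b) by rw [← pow_add]; congr 1; omega]; ring
  · have h1 : (b - (b - a)).factorial * b.descFactorial (b - a) = b.factorial :=
      Nat.factorial_mul_descFactorial (Nat.sub_le b a)
    rw [Nat.sub_sub_self h] at h1
    have h2 : a ^ (b - a) ≤ b.descFactorial (b - a) := by
      calc a ^ (b - a) ≤ (b + 1 - (b - a)) ^ (b - a) := by
            apply Nat.pow_le_pow_left; omega
        _ ≤ b.descFactorial (b - a) := Nat.pow_sub_le_descFactorial b _
    calc a ^ b * a.factorial = a ^ a * (a ^ (b - a) * a.factorial) := by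
          rw [← Nat.mul_assoc, ← Nat.pow_add, ← Nat.add_sub_assoc h, Nat.add_sub_cancel_left]
      _ ≤ a ^ a * (b.descFactorial (b - a) * a.factorial) := by
          exact Nat.mul_le_mul_left _ (Nat.mul_le_mul_right _ h2)
      _ = a ^ a * b.factorial := by rw [Nat.mul_comm (b.descFactorial _), h1]

/-- Under the i.i.d. distribution with single-letter probabilities `t̄`, the most likely
type class is that of `t` itself. -/
theorem own_type_most_likely {d n : ℕ} (hd : 1 ≤ d) (hn : 1 ≤ n)
    (t t' : Fin d → ℕ) (ht : ∑ i, t i = n) (ht' : ∑ i, t' i = n) :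
    (Nat.multinomial Finset.univ t' : ℝ) * ∏ i, ((t i : ℝ) / n) ^ t' i ≤
      (Nat.multinomial Finset.univ t : ℝ) * ∏ i, ((t i : ℝ) / n) ^ t i := by
  set A := Nat.multinomial Finset.univ t
  set A' := Nat.multinomial Finset.univ t'
  set F : ℕ := ∏ i, (t i).factorial
  set F' : ℕ := ∏ i, (t' i).factorial
  have hF : F * A = n.factorial := by
    simpa [F, A, ht] using Nat.multinomial_spec Finset.univ t
  have hF' : F' * A' = n.factorial := by
    simpa [F', A', ht'] using Nat.multinomial_spec Finset.univ t'
  have hFpos : 0 < F := Finset.prod_pos fun i _ => (t i).factorial_pos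
  have hF'pos : 0 < F' := Finset.prod_pos fun i _ => (t' i).factorial_pos
  have hprod : (∏ i, t i ^ t' i) * F ≤ (∏ i, t i ^ t i) * F' := by
    rw [← Finset.prod_mul_distrib, ← Finset.prod_mul_distrib]
    exact Finset.prod_le_prod' fun i _ => pow_mul_factorial_le (t i) (t' i)
  have key : A' * ∏ i, t i ^ t' i ≤ A * ∏ i, t i ^ t i := by
    have := Nat.mul_le_mul_left n.factorial hprod
    rw [← hF'] at this
    have h2 : (F' * F) * (A' * ∏ i, t i ^ t' i) ≤ (F' * F) * (A * ∏ i, t i ^ t i) := by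
      calc (F' * F) * (A' * ∏ i, t i ^ t' i) = F' * A' * ((∏ i, t i ^ t' i) * F) := by ring
        _ ≤ F' * A' * ((∏ i, t i ^ t i) * F') := this
        _ = (F' * F) * (A * ∏ i, t i ^ t i) := by rw [hF', ← hF]; ring
    exact Nat.le_of_mul_le_mul_left h2 (Nat.mul_pos hF'pos hFpos)
  have hrw : ∀ s : Fin d → ℕ, (∑ i, s i = n) →
      ∏ i, ((t i : ℝ) / n) ^ s i = (∏ i, (t i : ℝ) ^ s i) / (n : ℝ) ^ n := by
    intro s hs
    simp only [div_pow]
    rw [Finset.prod_div_distrib, Finset.prod_pow_eq_pow_sum, hs]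
  rw [hrw t' ht', hrw t ht, mul_div_assoc', mul_div_assoc',
    div_le_div_iff_of_pos_right (by positivity)]
  exact_mod_cast key
end

section
/- Probability of a type class: let d, n ≥ 1, let P : Fin d → ℝ satisfy 0 < P i for all i and ∑ i, P i = 1, and let t : Fin d → ℕ satisfy ∑ i, t i = n. Let S := ∑_{x ∈ T_t} ∏_{j : Fin n} P (x j), the total probability under the i.i.d. distribution P^{⊗n} of the set T_t of strings x : Fin n → Fin d of type t. Then Real.exp(−n·D(t̄‖P)) ≤ (n+1)^d · S and S ≤ Real.exp(−n·D(t̄‖P)). -/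
/-- The type of a string `x : Fin n → Fin d`: the number of occurrences of each symbol. -/
def typeCount {d n : ℕ} (x : Fin n → Fin d) (i : Fin d) : ℕ :=
  (Finset.univ.filter fun j => x j = i).card

open Finset Nat


lemma fact_le_aux (s m : ℕ) : (s + m)! ≤ s ! * (s + m) ^ m := by
  induction m with
  | zero => simp
  | succ m ih =>
      calc (s + (m+1))! = (s + m)! * (s + m + 1) := by
            rw [← Nat.add_assoc, Nat.factorial_succ]; ring
        _ ≤ s ! * (s + m) ^ m * (s + m + 1) := Nat.mul_le_mul_right _ ih
        _ ≤ s ! * (s + m + 1) ^ m * (s + m + 1) := by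
            exact Nat.mul_le_mul_right _ (Nat.mul_le_mul_left _
              (Nat.pow_le_pow_left (Nat.le_succ _) m))
        _ = s ! * (s + (m+1)) ^ (m+1) := by ring

lemma fact_pow_le (t s : ℕ) : t ! * t ^ s ≤ s ! * t ^ t := by
  rcases le_total t s with h | h
  · obtain ⟨m, rfl⟩ := Nat.exists_eq_add_of_le h
    calc t ! * t ^ (t + m) = t ! * t ^ m * t ^ t := by ring
      _ ≤ t ! * (t+1) ^ m * t ^ t := by
          exact Nat.mul_le_mul_right _ (Nat.mul_le_mul_left _
            (Nat.pow_le_pow_left (Nat.le_succ _) m))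
      _ ≤ (t + m)! * t ^ t := Nat.mul_le_mul_right _ Nat.factorial_mul_pow_le_factorial
  · obtain ⟨m, rfl⟩ := Nat.exists_eq_add_of_le h
    calc (s + m)! * (s+m) ^ s ≤ s ! * (s+m) ^ m * (s+m) ^ s :=
        Nat.mul_le_mul_right _ (fact_le_aux s m)
      _ = s ! * (s+m) ^ (s+m) := by rw [mul_assoc, ← pow_add, Nat.add_comm m s]

lemma prod_comp_typeCount {d n : ℕ} (x : Fin n → Fin d) (f : Fin d → ℝ) :
    ∏ j, f (x j) = ∏ i, f i ^ typeCount x i := by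
  rw [← Finset.prod_fiberwise' Finset.univ x f]
  exact Finset.prod_congr rfl fun i _ => by simp [Finset.prod_const, typeCount]

lemma sum_typeCount {d n : ℕ} (x : Fin n → Fin d) : ∑ i, typeCount x i = n := by
  simpa [typeCount] using
    (Finset.card_eq_sum_card_fiberwise (f := x) (s := Finset.univ) (t := Finset.univ)
      (fun j _ => Finset.mem_univ _)).symm

lemma sum_prod_filter {d n : ℕ} (s : Fin d → ℕ) (f : Fin d → ℝ) :
    ∑ x ∈ Finset.univ.filter (fun x : Fin n → Fin d => ∀ i, typeCount x i = s i),
        ∏ j, f (x j)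
      = ((Finset.univ.filter (fun x : Fin n → Fin d => ∀ i, typeCount x i = s i)).card : ℝ)
          * ∏ i, f i ^ s i := by
  rw [Finset.sum_congr rfl (fun x hx => ?_), Finset.sum_const, nsmul_eq_mul]
  rw [prod_comp_typeCount]
  exact Finset.prod_congr rfl fun i _ => by rw [(Finset.mem_filter.1 hx).2 i]

lemma exists_string {d n : ℕ} (s : Fin d → ℕ) (hs : ∑ i, s i = n) :
    ∃ x : Fin n → Fin d, ∀ i, typeCount x i = s i := by
  have hcard : Fintype.card (Σ i : Fin d, Fin (s i)) = Fintype.card (Fin n) := by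
    simp [hs]
  let e := Fintype.equivOfCardEq hcard
  refine ⟨fun j => (e.symm j).1, fun i => ?_⟩
  rw [typeCount, ← Fintype.card_subtype]
  have h1 : {j // (e.symm j).1 = i} ≃ {p : Σ i', Fin (s i') // p.1 = i} :=
    e.symm.subtypeEquiv fun j => Iff.rfl
  have h2 : {p : Σ i', Fin (s i') // p.1 = i} ≃ Fin (s i) :=
    { toFun := fun q => Fin.cast (congrArg s q.2) q.1.2
      invFun := fun a => ⟨⟨i, a⟩, rfl⟩
      left_inv := by rintro ⟨⟨i', a⟩, rfl⟩; rfl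
      right_inv := fun a => rfl }
  rw [Fintype.card_congr (h1.trans h2), Fintype.card_fin]

lemma exists_perm_of_typeCount_eq {d n : ℕ} {x y : Fin n → Fin d}
    (h : ∀ i, typeCount x i = typeCount y i) :
    ∃ σ : Equiv.Perm (Fin n), y ∘ σ = x := by
  have e : ∀ i, {j // x j = i} ≃ {j // y j = i} := fun i =>
    Fintype.equivOfCardEq (by
      rw [Fintype.card_subtype, Fintype.card_subtype]; exact h i)
  exact ⟨Equiv.ofFiberEquiv e, funext fun j => Equiv.ofFiberEquiv_map e j⟩

lemma card_typeClass {d n : ℕ} (s : Fin d → ℕ) (hs : ∑ i, s i = n) :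
    (Finset.univ.filter fun x : Fin n → Fin d => ∀ i, typeCount x i = s i).card
      * ∏ i, (s i)! = n ! := by
  classical
  obtain ⟨x₀, hx₀⟩ := exists_string s hs
  have hmem : ∀ σ : Equiv.Perm (Fin n),
      (x₀ ∘ σ) ∈ (Finset.univ.filter fun x : Fin n → Fin d => ∀ i, typeCount x i = s i) := by
    intro σ
    rw [Finset.mem_filter]
    refine ⟨Finset.mem_univ _, fun i => ?_⟩
    rw [show typeCount (x₀ ∘ ⇑σ) i = typeCount x₀ i from ?_, hx₀ i]
    rw [typeCount, typeCount, ← Fintype.card_subtype, ← Fintype.card_subtype]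
    exact Fintype.card_congr (σ.subtypeEquiv fun j => Iff.rfl)
  have key : ∀ x ∈ (Finset.univ.filter fun x : Fin n → Fin d => ∀ i, typeCount x i = s i),
      (Finset.univ.filter fun σ : Equiv.Perm (Fin n) => x₀ ∘ σ = x).card = ∏ i, (s i)! := by
    intro x hx
    rw [Finset.mem_filter] at hx
    obtain ⟨σ₀, hσ₀⟩ := exists_perm_of_typeCount_eq (fun i => (hx.2 i).trans (hx₀ i).symm)
    rw [← Fintype.card_subtype]
    have estab : {σ : Equiv.Perm (Fin n) // x₀ ∘ σ = x} ≃
        {σ : Equiv.Perm (Fin n) // x₀ ∘ σ = x₀} := by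
      refine Equiv.subtypeEquiv (Equiv.mulRight σ₀⁻¹) fun σ => ?_
      simp only [Equiv.coe_mulRight]
      constructor
      · intro h1
        funext j
        have h3 := congrFun h1 ((σ₀⁻¹ : Equiv.Perm (Fin n)) j)
        have h2 := congrFun hσ₀ ((σ₀⁻¹ : Equiv.Perm (Fin n)) j)
        simp only [Function.comp_apply, Equiv.Perm.mul_apply] at *
        rw [h3, ← h2]
        simp
      · intro h1
        funext j
        have h3 := congrFun h1 (σ₀ j)
        have h2 := congrFun hσ₀ j
        simp only [Function.comp_apply, Equiv.Perm.mul_apply] at *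
        simp at h3
        rw [h3, h2]
    rw [Fintype.card_congr estab, DomMulAct.stabilizer_card]
    refine Finset.prod_congr rfl fun i _ => ?_
    rw [Fintype.card_subtype]
    exact congrArg _ (hx₀ i)
  have hpart := Finset.card_eq_sum_card_fiberwise
      (f := fun σ : Equiv.Perm (Fin n) => x₀ ∘ σ)
      (s := Finset.univ)
      (t := Finset.univ.filter fun x : Fin n → Fin d => ∀ i, typeCount x i = s i)
      (fun σ _ => hmem σ)
  rw [Finset.card_univ, Fintype.card_perm, Fintype.card_fin,
    Finset.sum_congr rfl key, Finset.sum_const, smul_eq_mul] at hpart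
  exact hpart.symm

/-- **Probability of a type class.** The total `P^⊗n`-probability `S` of the set of strings
of type `t` satisfies `exp(-n D(t̄‖P)) ≤ (n+1)^d S` and `S ≤ exp(-n D(t̄‖P))`. -/
theorem type_class_probability_bounds {d n : ℕ} (hd : 1 ≤ d) (hn : 1 ≤ n)
    (P : Fin d → ℝ) (hP : ∀ i, 0 < P i) (hP1 : ∑ i, P i = 1)
    (t : Fin d → ℕ) (ht : ∑ i, t i = n) :
    (Real.exp (-(n : ℝ) * ∑ i, ((t i : ℝ) / n) * Real.log (((t i : ℝ) / n) / P i)) ≤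
        ((n : ℝ) + 1) ^ d *
          ∑ x ∈ Finset.univ.filter (fun x : Fin n → Fin d => ∀ i, typeCount x i = t i),
            ∏ j, P (x j)) ∧
      (∑ x ∈ Finset.univ.filter (fun x : Fin n → Fin d => ∀ i, typeCount x i = t i),
          ∏ j, P (x j)) ≤
        Real.exp (-(n : ℝ) * ∑ i, ((t i : ℝ) / n) * Real.log (((t i : ℝ) / n) / P i)) := by
  classical
  have hn0 : (0 : ℝ) < n := by exact_mod_cast hn
  set Q : Fin d → ℝ := fun i => (t i : ℝ) / n with hQdef
  have hQ0 : ∀ i, 0 ≤ Q i := fun i => by positivity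
  have hQ1 : ∑ i, Q i = 1 := by
    rw [hQdef, ← Finset.sum_div,
      show ∑ i, ((t i : ℝ)) = (n : ℝ) by exact_mod_cast congrArg Nat.cast ht]
    field_simp
  set C : ℝ := ∏ i, P i ^ t i with hCdef
  have hC : 0 < C := Finset.prod_pos fun i _ => pow_pos (hP i) _
  set q : ℝ := ∏ i, Q i ^ t i with hqdef
  have hqfac : ∀ i, 0 < Q i ^ t i := by
    intro i
    rcases Nat.eq_zero_or_pos (t i) with h | h
    · rw [h]; norm_num
    · exact pow_pos (div_pos (by exact_mod_cast h) hn0) _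
  have hq : 0 < q := Finset.prod_pos fun i _ => hqfac i
  set T := Finset.univ.filter (fun x : Fin n → Fin d => ∀ i, typeCount x i = t i) with hTdef
  have hS : ∑ x ∈ T, ∏ j, P (x j) = (T.card : ℝ) * C := sum_prod_filter t P
  have hSq : ∑ x ∈ T, ∏ j, Q (x j) = (T.card : ℝ) * q := sum_prod_filter t Q
  -- exp value
  have hexp : Real.exp (-(n : ℝ) * ∑ i, Q i * Real.log (Q i / P i)) = C / q := by
    have e1 : -(n : ℝ) * ∑ i, Q i * Real.log (Q i / P i) = Real.log (C / q) := by
      rw [Real.log_div hC.ne' hq.ne', hCdef, hqdef,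
        Real.log_prod (fun i _ => (pow_pos (hP i) _).ne'),
        Real.log_prod (fun i _ => (hqfac i).ne')]
      simp only [Real.log_pow]
      rw [← Finset.sum_sub_distrib, Finset.mul_sum]
      refine Finset.sum_congr rfl fun i _ => ?_
      rcases Nat.eq_zero_or_pos (t i) with h | h
      · simp [hQdef, h]
      · have hQpos : 0 < Q i := div_pos (by exact_mod_cast h) hn0
        have hni : (n : ℝ) * Q i = (t i : ℝ) := by rw [hQdef]; field_simp
        rw [Real.log_div hQpos.ne' (hP i).ne']
        linear_combination (Real.log (P i) - Real.log (Q i)) * hni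
    rw [e1, Real.exp_log (div_pos hC hq)]
  -- total probability one
  have htot : ∑ x : Fin n → Fin d, ∏ j, Q (x j) = 1 := by
    calc ∑ x : Fin n → Fin d, ∏ j, Q (x j)
        = ∑ p ∈ Fintype.piFinset fun _ : Fin n => (Finset.univ : Finset (Fin d)),
            ∏ j, Q (p j) := by rw [Fintype.piFinset_univ]
      _ = ∏ _j : Fin n, ∑ i, Q i := (Finset.prod_univ_sum _ _).symm
      _ = 1 := by simp [hQ1]
  have h1 : (T.card : ℝ) * q ≤ 1 := by
    rw [← hSq, ← htot]
    exact Finset.sum_le_sum_of_subset_of_nonneg (Finset.subset_univ T)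
      (fun x _ _ => Finset.prod_nonneg fun j _ => hQ0 _)
  -- lower bound
  set A := Finset.univ.image (fun x : Fin n → Fin d => typeCount x) with hAdef
  have hAfact : ∀ s : Fin d → ℕ,
      Finset.univ.filter (fun x : Fin n → Fin d => typeCount x = s)
        = Finset.univ.filter (fun x : Fin n → Fin d => ∀ i, typeCount x i = s i) :=
    fun s => by simp [funext_iff]
  have hpart : ∑ s ∈ A, ∑ x ∈ Finset.univ.filter
        (fun x : Fin n → Fin d => typeCount x = s), ∏ j, Q (x j)
      = ∑ x : Fin n → Fin d, ∏ j, Q (x j) :=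
    Finset.sum_fiberwise_of_maps_to (fun x _ => Finset.mem_image_of_mem _ (Finset.mem_univ x)) _
  have hterm : ∀ s ∈ A, ∑ x ∈ Finset.univ.filter
      (fun x : Fin n → Fin d => typeCount x = s), ∏ j, Q (x j) ≤ (T.card : ℝ) * q := by
    intro s hs
    obtain ⟨x₀, -, hx₀⟩ := Finset.mem_image.1 hs
    have hsn : ∑ i, s i = n := by rw [← hx₀]; exact sum_typeCount x₀
    rw [hAfact, sum_prod_filter]
    set Ms := (Finset.univ.filter (fun x : Fin n → Fin d => ∀ i, typeCount x i = s i)).card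
    have e1 : (Ms : ℝ) * ∏ i, ((s i)! : ℝ) = (n ! : ℝ) := by
      exact_mod_cast card_typeClass s hsn
    have e2 : (T.card : ℝ) * ∏ i, ((t i)! : ℝ) = (n ! : ℝ) := by
      exact_mod_cast card_typeClass t ht
    have e3 : ∀ (u : Fin d → ℕ), (∑ i, u i = n) →
        ∏ i, Q i ^ u i = (∏ i, (t i : ℝ) ^ u i) / (n : ℝ) ^ n := by
      intro u hu
      rw [hQdef]
      simp only [div_pow]
      rw [Finset.prod_div_distrib, Finset.prod_pow_eq_pow_sum, hu]
    have e4 : (∏ i, ((t i)! : ℝ) * (t i : ℝ) ^ s i) ≤ ∏ i, ((s i)! : ℝ) * (t i : ℝ) ^ t i := by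
      exact_mod_cast Finset.prod_le_prod' fun i (_ : i ∈ Finset.univ) => fact_pow_le (t i) (s i)
    rw [e3 s hsn, hqdef, e3 t ht]
    rw [← mul_div_assoc, ← mul_div_assoc]
    have key : (Ms : ℝ) * ∏ i, (t i : ℝ) ^ s i ≤ (T.card : ℝ) * ∏ i, (t i : ℝ) ^ t i := by
      have hpos : (0 : ℝ) < (∏ i, ((s i)! : ℝ)) * ∏ i, ((t i)! : ℝ) := by
        apply mul_pos <;> exact Finset.prod_pos fun i _ => by positivity
      rw [← mul_le_mul_iff_of_pos_right hpos]
      calc (Ms : ℝ) * (∏ i, (t i : ℝ) ^ s i) * ((∏ i, ((s i)! : ℝ)) * ∏ i, ((t i)! : ℝ))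
          = ((Ms : ℝ) * ∏ i, ((s i)! : ℝ)) * ((∏ i, ((t i)! : ℝ)) * ∏ i, (t i : ℝ) ^ s i) := by
            ring
        _ = (n ! : ℝ) * ∏ i, (((t i)! : ℝ) * (t i : ℝ) ^ s i) := by
            rw [e1, Finset.prod_mul_distrib]
        _ ≤ (n ! : ℝ) * ∏ i, (((s i)! : ℝ) * (t i : ℝ) ^ t i) := by
            exact mul_le_mul_of_nonneg_left e4 (by positivity)
        _ = ((T.card : ℝ) * ∏ i, ((t i)! : ℝ)) * ((∏ i, ((s i)! : ℝ)) * ∏ i, (t i : ℝ) ^ t i) := by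
            rw [e2, Finset.prod_mul_distrib]
        _ = (T.card : ℝ) * (∏ i, (t i : ℝ) ^ t i) * ((∏ i, ((s i)! : ℝ)) * ∏ i, ((t i)! : ℝ)) := by
            ring
    gcongr
  have hcardA : (A.card : ℝ) ≤ ((n : ℝ) + 1) ^ d := by
    have hnat : A.card ≤ (n + 1) ^ d := by
      have hle : ∀ s ∈ A, ∀ i, s i ≤ n := by
        intro s hs i
        obtain ⟨x₀, -, rfl⟩ := Finset.mem_image.1 hs
        calc typeCount x₀ i ≤ (Finset.univ : Finset (Fin n)).card :=
            Finset.card_filter_le _ _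
          _ = n := by simp
      calc A.card ≤ (Finset.univ : Finset (Fin d → Fin (n+1))).card := by
            apply Finset.card_le_card_of_injOn
              (fun s (i : Fin d) => (⟨min (s i) n, by omega⟩ : Fin (n+1)))
              (fun s _ => Finset.mem_univ _)
            intro s hsA s' hs'A hss
            funext i
            have h1 := congrFun hss i
            have h2 := hle s hsA i
            have h3 := hle s' hs'A i
            have := congrArg Fin.val h1
            simpa [Nat.min_eq_left h2, Nat.min_eq_left h3] using this
          _ = (n + 1) ^ d := by simp
    calc (A.card : ℝ) ≤ (((n + 1) ^ d : ℕ) : ℝ) := by exact_mod_cast hnat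
      _ = ((n : ℝ) + 1) ^ d := by push_cast; ring
  have h2 : (1 : ℝ) ≤ ((n : ℝ) + 1) ^ d * ((T.card : ℝ) * q) := by
    calc (1 : ℝ) = ∑ x : Fin n → Fin d, ∏ j, Q (x j) := htot.symm
      _ = ∑ s ∈ A, ∑ x ∈ Finset.univ.filter
            (fun x : Fin n → Fin d => typeCount x = s), ∏ j, Q (x j) := hpart.symm
      _ ≤ ∑ s ∈ A, (T.card : ℝ) * q := Finset.sum_le_sum hterm
      _ = (A.card : ℝ) * ((T.card : ℝ) * q) := by rw [Finset.sum_const, nsmul_eq_mul]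
      _ ≤ ((n : ℝ) + 1) ^ d * ((T.card : ℝ) * q) := by
          apply mul_le_mul_of_nonneg_right hcardA (by positivity)
  constructor
  · rw [hexp, hS, div_le_iff₀ hq]
    nlinarith [mul_le_mul_of_nonneg_right h2 hC.le]
  · rw [hexp, hS, le_div_iff₀ hq]
    nlinarith [mul_le_mul_of_nonneg_right h1 hC.le]
end

section
/- Large-deviation bound for atypical empirical distributions: let d, n ≥ 1, let P : Fin d → ℝ satisfy 0 ≤ P i for all i and ∑ i, P i = 1, and let δ ≥ 0. Then the sum, over all strings x : Fin n → Fin d whose empirical distribution satisfies ∑ i, |(t(x) i : ℝ)/n − P i| > δ, of the probability ∏_{j : Fin n} P (x j), is at most (n+1)^d · Real.exp(−n·δ²/2). -/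
lemma bernoulli_mgf (p : ℝ) (hp0 : 0 ≤ p) (hp1 : p ≤ 1) (s : ℝ) :
    1 - p + p * Real.exp s ≤ Real.exp (s * p + s ^ 2 / 8) := by
  set g : ℝ → ℝ := fun u => 1 - p + p * Real.exp u with hg
  have gpos : ∀ u, 0 < g u := by
    intro u
    rcases eq_or_lt_of_le hp0 with h | h
    · simp [hg, ← h]
    · have : 0 < p * Real.exp u := mul_pos h (Real.exp_pos u)
      have : (0:ℝ) ≤ 1 - p := by linarith
      simp only [hg]; nlinarith [Real.exp_pos u]
  set h : ℝ → ℝ := fun u => u * p + u ^ 2 / 8 - Real.log (g u) with hh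
  set h' : ℝ → ℝ := fun u => p + u / 4 - p * Real.exp u / g u with hh'
  have hd1 : ∀ u, HasDerivAt h (h' u) u := by
    intro u
    have hgd : HasDerivAt g (p * Real.exp u) u := by
      exact ((Real.hasDerivAt_exp u).const_mul p).const_add (1 - p)
    have hlog : HasDerivAt (fun u => Real.log (g u)) (p * Real.exp u / g u) u :=
      hgd.log (gpos u).ne'
    have h1 : HasDerivAt (fun u : ℝ => u * p + u ^ 2 / 8) (p + u / 4) u := by
      have := ((hasDerivAt_id u).mul_const p).add
        (((hasDerivAt_pow 2 u)).div_const 8)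
      refine this.congr_deriv ?_
      ring
    exact h1.sub hlog
  have hd2 : ∀ u, HasDerivAt h' (1 / 4 - p * (1 - p) * Real.exp u / (g u) ^ 2) u := by
    intro u
    have hgd : HasDerivAt g (p * Real.exp u) u := by
      exact ((Real.hasDerivAt_exp u).const_mul p).const_add (1 - p)
    have hnum : HasDerivAt (fun u => p * Real.exp u) (p * Real.exp u) u :=
      (Real.hasDerivAt_exp u).const_mul p
    have hdiv : HasDerivAt (fun u => p * Real.exp u / g u)
        ((p * Real.exp u * g u - p * Real.exp u * (p * Real.exp u)) / (g u) ^ 2) u :=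
      hnum.div hgd (gpos u).ne'
    have h1 : HasDerivAt (fun u : ℝ => p + u / 4) (1 / 4) u := by
      simpa using ((hasDerivAt_id u).div_const 4).const_add p
    refine (h1.sub hdiv).congr_deriv ?_
    rw [hg]
    ring
  have hpp : ∀ u, 0 ≤ 1 / 4 - p * (1 - p) * Real.exp u / (g u) ^ 2 := by
    intro u
    have hgu := gpos u
    rw [sub_nonneg, div_le_iff₀ (by positivity)]
    have hgeq : g u = (1 - p) + p * Real.exp u := by simp [hg]
    nlinarith [sq_nonneg ((1 - p) - p * Real.exp u)]
  have hmono : Monotone h' := monotone_of_deriv_nonneg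
    (fun u => (hd2 u).differentiableAt) (fun u => by rw [(hd2 u).deriv]; exact hpp u)
  have h'0 : h' 0 = 0 := by simp [hh', hg]
  have hdiffh : Differentiable ℝ h := fun u => (hd1 u).differentiableAt
  have h0 : h 0 = 0 := by simp [hh, hg]
  have key : 0 ≤ h s := by
    rcases le_total 0 s with hs | hs
    · have hm : MonotoneOn h (Set.Ici (0:ℝ)) := by
        apply monotoneOn_of_deriv_nonneg (convex_Ici 0) hdiffh.continuous.continuousOn
          hdiffh.differentiableOn
        intro u hu
        rw [(hd1 u).deriv]
        rw [interior_Ici] at hu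
        have := hmono hu.le
        rw [h'0] at this
        exact this
      have := hm Set.self_mem_Ici (Set.mem_Ici.mpr hs) hs
      linarith
    · have hm : AntitoneOn h (Set.Iic (0:ℝ)) := by
        apply antitoneOn_of_deriv_nonpos (convex_Iic 0) hdiffh.continuous.continuousOn
          hdiffh.differentiableOn
        intro u hu
        rw [(hd1 u).deriv]
        rw [interior_Iic] at hu
        have := hmono hu.le
        rw [h'0] at this
        exact this
      have := hm (Set.mem_Iic.mpr hs) Set.self_mem_Iic hs
      linarith
  have : Real.log (g s) ≤ s * p + s ^ 2 / 8 := by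
    simp only [hh] at key; linarith
  calc 1 - p + p * Real.exp s = g s := rfl
    _ ≤ Real.exp (s * p + s ^ 2 / 8) := (Real.log_le_iff_le_exp (gpos s)).mp this

open Classical in
lemma chernoff_subset {d n : ℕ} (P : Fin d → ℝ) (hP : ∀ i, 0 ≤ P i) (hP1 : ∑ i, P i = 1)
    (δ : ℝ) (hδ : 0 ≤ δ) (S : Finset (Fin d)) :
    ∑ x ∈ Finset.univ.filter (fun x : Fin n → Fin d =>
        (n : ℝ) * ((∑ i ∈ S, P i) + δ / 2) ≤ ((Finset.univ.filter fun j => x j ∈ S).card : ℝ)),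
      ∏ j, P (x j) ≤ Real.exp (-(n : ℝ) * δ ^ 2 / 2) := by
  classical
  set p := ∑ i ∈ S, P i with hp
  have hp0 : 0 ≤ p := Finset.sum_nonneg fun i _ => hP i
  have hp1 : p ≤ 1 := by
    rw [← hP1]
    exact Finset.sum_le_sum_of_subset_of_nonneg (Finset.subset_univ S) fun i _ _ => hP i
  set s : ℝ := 2 * δ with hs
  have hs0 : 0 ≤ s := by positivity
  set w : Fin d → ℝ := fun i => P i * Real.exp (s * (if i ∈ S then 1 else 0)) with hw
  have hw0 : ∀ i, 0 ≤ w i := fun i => mul_nonneg (hP i) (Real.exp_pos _).le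
  have step1 : ∀ x : Fin n → Fin d,
      ∏ j, P (x j) * Real.exp (s * (if x j ∈ S then 1 else 0))
        = (∏ j, P (x j)) * Real.exp (s * ((Finset.univ.filter fun j => x j ∈ S).card : ℝ)) := by
    intro x
    rw [Finset.prod_mul_distrib, ← Real.exp_sum]
    congr 1
    rw [← Finset.mul_sum]
    congr 1
    simp [Finset.sum_boole]
  have habs : ∀ x ∈ Finset.univ.filter (fun x : Fin n → Fin d =>
        (n : ℝ) * (p + δ / 2) ≤ ((Finset.univ.filter fun j => x j ∈ S).card : ℝ)),
      ∏ j, P (x j) ≤ Real.exp (-(s * ((n : ℝ) * (p + δ / 2)))) * ∏ j, w (x j) := by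
    intro x hx
    rw [Finset.mem_filter] at hx
    simp only [hw]
    rw [step1 x, ← mul_assoc, mul_comm (Real.exp _) (∏ j, P (x j)), mul_assoc, ← Real.exp_add]
    have h1 : (1:ℝ) ≤ Real.exp (-(s * ((n : ℝ) * (p + δ / 2)))
        + s * ((Finset.univ.filter fun j => x j ∈ S).card : ℝ)) := by
      rw [← Real.exp_zero]
      apply Real.exp_le_exp.mpr
      nlinarith [hx.2]
    nlinarith [Finset.prod_nonneg (fun j (_ : j ∈ Finset.univ) => hP (x j)), h1]
  have step2 : ∑ x ∈ Finset.univ.filter (fun x : Fin n → Fin d =>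
        (n : ℝ) * (p + δ / 2) ≤ ((Finset.univ.filter fun j => x j ∈ S).card : ℝ)),
      ∏ j, P (x j)
      ≤ Real.exp (-(s * ((n : ℝ) * (p + δ / 2)))) * (∑ i, w i) ^ n := by
    calc _ ≤ ∑ x ∈ Finset.univ.filter (fun x : Fin n → Fin d =>
          (n : ℝ) * (p + δ / 2) ≤ ((Finset.univ.filter fun j => x j ∈ S).card : ℝ)),
        Real.exp (-(s * ((n : ℝ) * (p + δ / 2)))) * ∏ j, w (x j) := Finset.sum_le_sum habs
      _ ≤ ∑ x : Fin n → Fin d, Real.exp (-(s * ((n : ℝ) * (p + δ / 2)))) * ∏ j, w (x j) := by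
          apply Finset.sum_le_sum_of_subset_of_nonneg (Finset.filter_subset _ _)
          intro x _ _
          exact mul_nonneg (Real.exp_pos _).le (Finset.prod_nonneg fun j _ => hw0 (x j))
      _ = Real.exp (-(s * ((n : ℝ) * (p + δ / 2)))) * (∑ i, w i) ^ n := by
          rw [← Finset.mul_sum, Fintype.sum_pow]
  have hwsum : ∑ i, w i = 1 - p + p * Real.exp s := by
    simp only [hw]
    rw [← Finset.sum_filter_add_sum_filter_not Finset.univ (· ∈ S)]
    have h1 : ∑ i ∈ Finset.univ.filter (· ∈ S), P i * Real.exp (s * if i ∈ S then 1 else 0)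
        = p * Real.exp s := by
      rw [Finset.filter_mem_eq_inter, Finset.univ_inter]
      rw [Finset.sum_congr rfl (fun i hi => by rw [if_pos hi, mul_one]), ← Finset.sum_mul, hp]
    have h2 : ∑ i ∈ Finset.univ.filter (¬ · ∈ S), P i * Real.exp (s * if i ∈ S then 1 else 0)
        = 1 - p := by
      rw [Finset.sum_congr rfl (fun i hi => by
        rw [if_neg (Finset.mem_filter.mp hi).2, mul_zero, Real.exp_zero, mul_one])]
      have := Finset.sum_filter_add_sum_filter_not Finset.univ (· ∈ S) P
      rw [Finset.filter_mem_eq_inter, Finset.univ_inter] at this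
      rw [← hp] at this
      linarith [hP1 ▸ this]
    rw [h1, h2]; ring
  have hmgf : (∑ i, w i) ^ n ≤ Real.exp ((n : ℝ) * (s * p + s ^ 2 / 8)) := by
    rw [hwsum]
    calc (1 - p + p * Real.exp s) ^ n ≤ Real.exp (s * p + s ^ 2 / 8) ^ n := by
          apply pow_le_pow_left₀ _ (bernoulli_mgf p hp0 hp1 s)
          nlinarith [Real.exp_pos s, Real.add_one_le_exp s]
      _ = Real.exp ((n : ℝ) * (s * p + s ^ 2 / 8)) := by
          rw [← Real.exp_nat_mul]
  calc _ ≤ Real.exp (-(s * ((n : ℝ) * (p + δ / 2)))) * (∑ i, w i) ^ n := step2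
    _ ≤ Real.exp (-(s * ((n : ℝ) * (p + δ / 2)))) * Real.exp ((n : ℝ) * (s * p + s ^ 2 / 8)) :=
        by exact mul_le_mul_of_nonneg_left hmgf (Real.exp_pos _).le
    _ = Real.exp (-(n : ℝ) * δ ^ 2 / 2) := by
        rw [← Real.exp_add]
        congr 1
        rw [hs]
        ring

open Classical in
/-- **Large-deviation bound for atypical empirical distributions.** The `P^⊗n`-probability
that the empirical distribution is farther than `δ` from `P` in total variation is at
most `(n+1)^d exp(-n δ²/2)`. -/
theorem atypical_probability_bound {d n : ℕ} (hd : 1 ≤ d) (hn : 1 ≤ n)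
    (P : Fin d → ℝ) (hP : ∀ i, 0 ≤ P i) (hP1 : ∑ i, P i = 1)
    (δ : ℝ) (hδ : 0 ≤ δ) :
    ∑ x ∈ Finset.univ.filter
        (fun x : Fin n → Fin d => δ < ∑ i, |(typeCount x i : ℝ) / n - P i|),
      ∏ j, P (x j) ≤
      ((n : ℝ) + 1) ^ d * Real.exp (-(n : ℝ) * δ ^ 2 / 2) := by

  classical
  have hn0 : (0:ℝ) < n := by exact_mod_cast hn
  set E : Finset (Fin d) → Finset (Fin n → Fin d) := fun S =>
    Finset.univ.filter (fun x : Fin n → Fin d =>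
      (n : ℝ) * ((∑ i ∈ S, P i) + δ / 2) ≤ ((Finset.univ.filter fun j => x j ∈ S).card : ℝ))
    with hE
  set A := Finset.univ.filter
      (fun x : Fin n → Fin d => δ < ∑ i, |(typeCount x i : ℝ) / n - P i|) with hA
  have hg0 : ∀ x : Fin n → Fin d, 0 ≤ ∏ j, P (x j) :=
    fun x => Finset.prod_nonneg fun j _ => hP (x j)
  -- each atypical string lies in some E S
  have hmem : ∀ x ∈ A, ∃ S : Finset (Fin d), x ∈ E S := by
    intro x hx
    rw [hA, Finset.mem_filter] at hx
    set f : Fin d → ℝ := fun i => (typeCount x i : ℝ) / n - P i with hf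
    have htot : ∑ i, typeCount x i = n := by
      have := Finset.card_eq_sum_card_fiberwise
        (s := (Finset.univ : Finset (Fin n))) (t := Finset.univ) (f := x)
        (fun j _ => Finset.mem_univ (x j))
      simpa [typeCount] using this.symm
    have hsumf : ∑ i, f i = 0 := by
      have : ∑ i, ((typeCount x i : ℝ) / n) = 1 := by
        rw [← Finset.sum_div]
        rw [div_eq_one_iff_eq hn0.ne']
        exact_mod_cast htot
      simp only [hf, Finset.sum_sub_distrib, this, hP1, sub_self]
    refine ⟨Finset.univ.filter (fun i => P i < (typeCount x i : ℝ) / n), ?_⟩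
    rw [hE, Finset.mem_filter]
    refine ⟨Finset.mem_univ x, ?_⟩
    set S := Finset.univ.filter (fun i => P i < (typeCount x i : ℝ) / n) with hS
    have hsplit := Finset.sum_filter_add_sum_filter_not Finset.univ
      (fun i => P i < (typeCount x i : ℝ) / n) f
    have habs : ∑ i, |f i| = ∑ i ∈ S, f i - ∑ i ∈ Finset.univ.filter
        (fun i => ¬ P i < (typeCount x i : ℝ) / n), f i := by
      rw [← Finset.sum_filter_add_sum_filter_not Finset.univ
        (fun i => P i < (typeCount x i : ℝ) / n) (fun i => |f i|)]
      rw [sub_eq_add_neg, ← Finset.sum_neg_distrib]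
      congr 1
      · exact Finset.sum_congr rfl fun i hi => abs_of_pos
          (by have := (Finset.mem_filter.mp hi).2; simp only [hf]; linarith)
      · exact Finset.sum_congr rfl fun i hi => abs_of_nonpos
          (by have := (Finset.mem_filter.mp hi).2; simp only [hf]; push_neg at this; linarith)
    have hkey : δ / 2 < ∑ i ∈ S, f i := by
      have h2 : ∑ i ∈ S, f i + ∑ i ∈ Finset.univ.filter
          (fun i => ¬ P i < (typeCount x i : ℝ) / n), f i = 0 := by
        rw [hsplit]; exact hsumf
      have := hx.2
      rw [habs] at this
      linarith
    -- card of filter = sum of typeCounts over S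
    have hcard : ((Finset.univ.filter fun j => x j ∈ S).card : ℝ)
        = ∑ i ∈ S, (typeCount x i : ℝ) := by
      have := Finset.card_eq_sum_card_fiberwise
        (s := Finset.univ.filter fun j => x j ∈ S) (t := S) (f := x)
        (fun j hj => (Finset.mem_filter.mp hj).2)
      have h2 : ∀ i ∈ S, ((Finset.univ.filter fun j => x j ∈ S).filter
          (fun j => x j = i)).card = typeCount x i := by
        intro i hi
        unfold typeCount
        congr 1
        rw [Finset.filter_filter]
        apply Finset.filter_congr
        intro j _
        constructor
        · exact fun h => h.2
        · exact fun h => ⟨h ▸ hi, h⟩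
      rw [this, Finset.sum_congr rfl h2]
      push_cast
      ring
    rw [hcard]
    have : ∑ i ∈ S, (typeCount x i : ℝ) = (n:ℝ) * ((∑ i ∈ S, P i) + ∑ i ∈ S, f i) := by
      rw [← Finset.sum_add_distrib]
      rw [Finset.mul_sum]
      apply Finset.sum_congr rfl
      intro i _
      simp only [hf]
      field_simp
      ring
    rw [this]
    have := mul_le_mul_of_nonneg_left (le_of_lt hkey) hn0.le
    nlinarith
  -- union bound
  have hub : ∑ x ∈ A, ∏ j, P (x j)
      ≤ ∑ S : Finset (Fin d), ∑ x ∈ E S, ∏ j, P (x j) := by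
    have h1 : ∑ x ∈ A, ∏ j, P (x j)
        ≤ ∑ x ∈ A, ∑ S : Finset (Fin d), if x ∈ E S then ∏ j, P (x j) else 0 := by
      apply Finset.sum_le_sum
      intro x hx
      obtain ⟨S, hS⟩ := hmem x hx
      calc ∏ j, P (x j) = if x ∈ E S then ∏ j, P (x j) else 0 := by rw [if_pos hS]
        _ ≤ _ := Finset.single_le_sum
            (f := fun S' : Finset (Fin d) => if x ∈ E S' then ∏ j, P (x j) else 0)
            (fun S' _ => by by_cases h : x ∈ E S' <;> simp [h, hg0 x]) (Finset.mem_univ S)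
    calc _ ≤ _ := h1
      _ ≤ ∑ x : Fin n → Fin d, ∑ S : Finset (Fin d),
            if x ∈ E S then ∏ j, P (x j) else 0 := by
          apply Finset.sum_le_sum_of_subset_of_nonneg (Finset.filter_subset _ _)
          intro x _ _
          apply Finset.sum_nonneg
          intro S _
          by_cases h : x ∈ E S <;> simp [h, hg0 x]
      _ = ∑ S : Finset (Fin d), ∑ x ∈ E S, ∏ j, P (x j) := by
          rw [Finset.sum_comm]
          apply Finset.sum_congr rfl
          intro S _
          rw [Finset.sum_ite_mem, Finset.univ_inter]
  calc ∑ x ∈ A, ∏ j, P (x j)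
      ≤ ∑ S : Finset (Fin d), ∑ x ∈ E S, ∏ j, P (x j) := hub
    _ ≤ ∑ _S : Finset (Fin d), Real.exp (-(n : ℝ) * δ ^ 2 / 2) := by
        apply Finset.sum_le_sum
        intro S _
        exact chernoff_subset P hP hP1 δ hδ S
    _ = (2:ℝ) ^ d * Real.exp (-(n : ℝ) * δ ^ 2 / 2) := by
        rw [Finset.sum_const, Finset.card_univ, Fintype.card_finset, Fintype.card_fin,
          nsmul_eq_mul]
        push_cast
        ring
    _ ≤ ((n : ℝ) + 1) ^ d * Real.exp (-(n : ℝ) * δ ^ 2 / 2) := by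
        apply mul_le_mul_of_nonneg_right _ (Real.exp_pos _).le
        apply pow_le_pow_left₀ (by norm_num)
        have : (1:ℝ) ≤ n := by exact_mod_cast hn
        linarith
end

section
/- Continuity of Shannon entropy in total variation: let d ≥ 1 and let p, q : Fin d → ℝ be probability distributions (entries nonnegative, summing to 1) with ∑ i, |p i − q i| ≤ δ. Then |H(p) − H(q)| ≤ η(δ) + δ·log d. -/
private lemma negMulLog_le_inv_e {x : ℝ} (hx : 0 ≤ x) :
    Real.negMulLog x ≤ 1 / Real.exp 1 := by
  rcases eq_or_lt_of_le hx with h | h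
  · rw [← h]
    simp [Real.negMulLog]
    positivity
  · have key : -Real.log x ≤ Real.exp (-Real.log x - 1) := by
      have := Real.add_one_le_exp (-Real.log x - 1)
      linarith
  -- negMulLog x = (-log x) * x
    have hrw : Real.negMulLog x = (-Real.log x) * x := by
      rw [Real.negMulLog]; ring
    rw [hrw]
    calc (-Real.log x) * x ≤ Real.exp (-Real.log x - 1) * x :=
          mul_le_mul_of_nonneg_right key hx
      _ = Real.exp (-Real.log x - 1) * Real.exp (Real.log x) := by rw [Real.exp_log h]
      _ = Real.exp (-1) := by rw [← Real.exp_add]; ring_nf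
      _ = 1 / Real.exp 1 := by rw [Real.exp_neg, one_div]

private lemma negMulLog_add_le {y t : ℝ} (hy : 0 ≤ y) (ht : 0 ≤ t) :
    Real.negMulLog (y + t) ≤ Real.negMulLog y + Real.negMulLog t := by
  rcases eq_or_lt_of_le hy with hy0 | hy0
  · rw [← hy0]; simp
  rcases eq_or_lt_of_le ht with ht0 | ht0
  · rw [← ht0]; simp
  have h1 : Real.log y ≤ Real.log (y + t) := Real.log_le_log hy0 (by linarith)
  have h2 : Real.log t ≤ Real.log (y + t) := Real.log_le_log ht0 (by linarith)
  simp only [Real.negMulLog]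
  nlinarith [mul_le_mul_of_nonneg_left h1 hy0.le, mul_le_mul_of_nonneg_left h2 ht0.le]

private lemma negMulLog_monoOn : MonotoneOn Real.negMulLog (Set.Icc 0 (1 / Real.exp 1)) := by
  apply monotoneOn_of_deriv_nonneg (convex_Icc _ _)
  · exact Real.continuous_negMulLog.continuousOn
  · rw [interior_Icc]
    intro x hx
    exact (Real.differentiableAt_negMulLog_iff.mpr (ne_of_gt hx.1)).differentiableWithinAt
  · rw [interior_Icc]
    intro x hx
    rw [Real.deriv_negMulLog (ne_of_gt hx.1)]
    have hlog : Real.log x ≤ Real.log (1 / Real.exp 1) := Real.log_le_log hx.1 hx.2.le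
    rw [one_div, Real.log_inv, Real.log_exp] at hlog
    linarith

private lemma negMulLog_one_sub_le {t : ℝ} (ht : 0 ≤ t) (ht1 : t < 1) :
    Real.negMulLog (1 - t) ≤ t := by
  have h1t : 0 < 1 - t := by linarith
  have hlog : Real.log (1 - t)⁻¹ ≤ (1 - t)⁻¹ - 1 :=
    Real.log_le_sub_one_of_pos (by positivity)
  rw [Real.log_inv] at hlog
  have hneg : -Real.log (1 - t) ≤ t / (1 - t) := by
    have : (1 - t)⁻¹ - 1 = t / (1 - t) := by field_simp; ring
    linarith [this ▸ hlog]
  have : Real.negMulLog (1 - t) = (1 - t) * (-Real.log (1 - t)) := by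
    rw [Real.negMulLog]; ring
  rw [this]
  calc (1 - t) * (-Real.log (1 - t)) ≤ (1 - t) * (t / (1 - t)) :=
        mul_le_mul_of_nonneg_left hneg h1t.le
    _ = t := by field_simp

private lemma le_negMulLog {t : ℝ} (ht : 0 ≤ t) (hte : t ≤ 1 / Real.exp 1) :
    t ≤ Real.negMulLog t := by
  rcases eq_or_lt_of_le ht with h | h
  · rw [← h]; simp
  have hlog : Real.log t ≤ -1 := by
    have := Real.log_le_log h hte
    rwa [one_div, Real.log_inv, Real.log_exp] at this
  have : Real.negMulLog t = t * (-Real.log t) := by rw [Real.negMulLog]; ring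
  rw [this]
  nlinarith

private lemma negMulLog_lower {y t : ℝ} (hy : 0 ≤ y) (ht : 0 ≤ t)
    (hte : t ≤ 1 / Real.exp 1) (hyt : y + t ≤ 1) :
    Real.negMulLog y ≤ Real.negMulLog (y + t) + Real.negMulLog t := by
  rcases eq_or_lt_of_le ht with ht0 | ht0
  · rw [← ht0]; simp
  have ht1 : t < 1 := lt_of_le_of_lt hte (by
    rw [div_lt_one (Real.exp_pos 1)]
    exact lt_of_lt_of_le one_lt_two (by nlinarith [Real.add_one_le_exp (1:ℝ)]))
  have hmono : MonotoneOn (fun z => Real.negMulLog z - Real.negMulLog (z + t))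
      (Set.Icc 0 (1 - t)) := by
    apply monotoneOn_of_deriv_nonneg (convex_Icc _ _)
    · exact (Real.continuous_negMulLog.sub
        (Real.continuous_negMulLog.comp (continuous_id.add continuous_const))).continuousOn
    · rw [interior_Icc]
      intro x hx
      have h1 : DifferentiableAt ℝ Real.negMulLog x :=
        Real.differentiableAt_negMulLog_iff.mpr (ne_of_gt hx.1)
      have h2 : DifferentiableAt ℝ (fun z => Real.negMulLog (z + t)) x := by
        have := (Real.differentiableAt_negMulLog_iff.mpr
          (ne_of_gt (by linarith [hx.1] : (0:ℝ) < x + t))).comp x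
          ((differentiableAt_id.add_const t))
        exact this
      exact (h1.sub h2).differentiableWithinAt
    · rw [interior_Icc]
      intro x hx
      have h1 : HasDerivAt Real.negMulLog (-Real.log x - 1) x :=
        Real.hasDerivAt_negMulLog (ne_of_gt hx.1)
      have h2 : HasDerivAt (fun z => Real.negMulLog (z + t))
          (-Real.log (x + t) - 1) x := by
        have hxt : (0:ℝ) < x + t := by linarith [hx.1]
        have := (Real.hasDerivAt_negMulLog (ne_of_gt hxt)).comp x
          ((hasDerivAt_id x).add_const t)
        simpa [Function.comp_def] using this
      have hderiv : deriv (fun z => Real.negMulLog z - Real.negMulLog (z + t)) x =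
          -Real.log x - 1 - (-Real.log (x + t) - 1) := (h1.sub h2).deriv
      rw [hderiv]
      have : Real.log x ≤ Real.log (x + t) := Real.log_le_log hx.1 (by linarith)
      linarith
  have hkey := hmono (Set.mem_Icc.mpr ⟨hy, by linarith⟩)
    (Set.mem_Icc.mpr ⟨by linarith, le_refl _⟩) (by linarith)
  simp only [sub_add_cancel, Real.negMulLog_one] at hkey
  have h1 : Real.negMulLog (1 - t) ≤ t := negMulLog_one_sub_le ht ht1
  have h2 : t ≤ Real.negMulLog t := le_negMulLog ht hte
  linarith

private lemma negMulLog_inv_e : Real.negMulLog (1 / Real.exp 1) = 1 / Real.exp 1 := by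
  rw [Real.negMulLog, one_div, Real.log_inv, Real.log_exp]
  ring

private lemma pointwise_bound {x y : ℝ} (hx0 : 0 ≤ x) (hx1 : x ≤ 1)
    (hy0 : 0 ≤ y) (hy1 : y ≤ 1) :
    |Real.negMulLog x - Real.negMulLog y| ≤
      Real.negMulLog (min |x - y| (1 / Real.exp 1)) := by
  wlog h : y ≤ x with H
  · rw [abs_sub_comm, abs_sub_comm x y]
    exact H hy0 hy1 hx0 hx1 (le_of_not_ge h)
  have habs : |x - y| = x - y := abs_of_nonneg (by linarith)
  rw [habs]
  rcases le_or_gt (x - y) (1 / Real.exp 1) with hte | hte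
  · rw [min_eq_left hte]
    rw [abs_sub_le_iff]
    constructor
    · have := negMulLog_add_le hy0 (by linarith : (0:ℝ) ≤ x - y)
      have hyx : y + (x - y) = x := by ring
      rw [hyx] at this
      linarith
    · have := negMulLog_lower hy0 (by linarith : (0:ℝ) ≤ x - y) hte
        (by linarith : y + (x - y) ≤ 1)
      have hyx : y + (x - y) = x := by ring
      rw [hyx] at this
      linarith
  · rw [min_eq_right hte.le, negMulLog_inv_e]
    rw [abs_sub_le_iff]
    constructor
    · have := negMulLog_le_inv_e hx0
      have := Real.negMulLog_nonneg hy0 hy1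
      linarith
    · have := negMulLog_le_inv_e hy0
      have := Real.negMulLog_nonneg hx0 hx1
      linarith

private lemma sum_negMulLog_le {d : ℕ} (a : Fin d → ℝ) (ha : ∀ i, 0 ≤ a i) :
    ∑ i, Real.negMulLog (a i) ≤
      Real.negMulLog (∑ i, a i) + (∑ i, a i) * Real.log d := by
  set A := ∑ i, a i with hA
  have hA0 : 0 ≤ A := Finset.sum_nonneg fun i _ => ha i
  rcases eq_or_lt_of_le hA0 with h0 | h0
  · have hz : ∀ i ∈ Finset.univ, a i = 0 :=
      (Finset.sum_eq_zero_iff_of_nonneg (fun i _ => ha i)).mp h0.symm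
    have : ∑ i, Real.negMulLog (a i) = 0 := by
      apply Finset.sum_eq_zero
      intro i hi
      rw [hz i hi, Real.negMulLog_zero]
    rw [this, ← h0]
    simp
  · have hd : 0 < d := by
      rcases Nat.eq_zero_or_pos d with h | h
      · subst h
        simp [hA] at h0
      · exact h
    have hdR : (0:ℝ) < (d:ℝ) := by exact_mod_cast hd
    have key : ∀ i, Real.negMulLog (a i) ≤
        a i * Real.log d - a i * Real.log A + (A / d - a i) := by
      intro i
      rcases eq_or_lt_of_le (ha i) with hz | hz
      · rw [← hz]
        simp
        positivity
      · have hlog : Real.log (A / (a i * d)) ≤ A / (a i * d) - 1 :=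
          Real.log_le_sub_one_of_pos (by positivity)
        have hexp : Real.log (A / (a i * d)) =
            Real.log A - Real.log (a i) - Real.log d := by
          rw [Real.log_div (ne_of_gt h0) (by positivity),
            Real.log_mul (ne_of_gt hz) (ne_of_gt hdR)]
          ring
        rw [hexp] at hlog
        have hmul := mul_le_mul_of_nonneg_left hlog hz.le
        have hval : a i * (A / (a i * d) - 1) = A / d - a i := by
          field_simp
        rw [hval] at hmul
        rw [Real.negMulLog]
        nlinarith
    calc ∑ i, Real.negMulLog (a i)
        ≤ ∑ i, (a i * Real.log d - a i * Real.log A + (A / d - a i)) :=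
          Finset.sum_le_sum fun i _ => key i
      _ = A * Real.log d - A * Real.log A + ((d : ℝ) * (A / d) - A) := by
          rw [Finset.sum_add_distrib, Finset.sum_sub_distrib, Finset.sum_sub_distrib,
            ← Finset.sum_mul, ← Finset.sum_mul, ← hA, Finset.sum_const,
            Finset.card_univ, Fintype.card_fin, nsmul_eq_mul]
      _ = Real.negMulLog A + A * Real.log d := by
          rw [Real.negMulLog]
          field_simp
          ring

/-- **Continuity of Shannon entropy in total variation.** If `∑ i, |p i - q i| ≤ δ` for
probability distributions `p`, `q` on `Fin d`, then `|H(p) - H(q)| ≤ η δ + δ log d`. -/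
theorem shannon_entropy_continuity {d : ℕ} (hd : 1 ≤ d)
    (p q : Fin d → ℝ)
    (hp0 : ∀ i, 0 ≤ p i) (hp1 : ∑ i, p i = 1)
    (hq0 : ∀ i, 0 ≤ q i) (hq1 : ∑ i, q i = 1)
    (δ : ℝ) (hpq : ∑ i, |p i - q i| ≤ δ) :
    |(∑ i, Real.negMulLog (p i)) - ∑ i, Real.negMulLog (q i)| ≤
      eta δ + δ * Real.log d := by
  have hδ0 : 0 ≤ δ :=
    le_trans (Finset.sum_nonneg fun i _ => abs_nonneg _) hpq
  have hdR : (1:ℝ) ≤ (d:ℝ) := by exact_mod_cast hd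
  have hlogd : 0 ≤ Real.log d := Real.log_nonneg hdR
  set a : Fin d → ℝ := fun i => min |p i - q i| (1 / Real.exp 1) with ha
  have ha0 : ∀ i, 0 ≤ a i := fun i => le_min (abs_nonneg _) (by positivity)
  have hp1i : ∀ i, p i ≤ 1 := by
    intro i
    rw [← hp1]
    exact Finset.single_le_sum (fun j _ => hp0 j) (Finset.mem_univ i)
  have hq1i : ∀ i, q i ≤ 1 := by
    intro i
    rw [← hq1]
    exact Finset.single_le_sum (fun j _ => hq0 j) (Finset.mem_univ i)
  have step1 : |(∑ i, Real.negMulLog (p i)) - ∑ i, Real.negMulLog (q i)| ≤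
      ∑ i, Real.negMulLog (a i) := by
    rw [← Finset.sum_sub_distrib]
    refine (Finset.abs_sum_le_sum_abs _ _).trans (Finset.sum_le_sum fun i _ => ?_)
    exact pointwise_bound (hp0 i) (hp1i i) (hq0 i) (hq1i i)
  have hAδ : (∑ i, a i) ≤ δ :=
    le_trans (Finset.sum_le_sum fun i _ => min_le_left _ _) hpq
  have hA0 : (0:ℝ) ≤ ∑ i, a i := Finset.sum_nonneg fun i _ => ha0 i
  have step2 := sum_negMulLog_le a ha0
  have step3 : Real.negMulLog (∑ i, a i) ≤ eta δ := by
    unfold eta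
    split_ifs with h
    · have := negMulLog_monoOn (Set.mem_Icc.mpr ⟨hA0, le_trans hAδ h⟩)
        (Set.mem_Icc.mpr ⟨hδ0, h⟩) hAδ
      rwa [Real.negMulLog] at this
    · exact negMulLog_le_inv_e hA0
  have step4 : (∑ i, a i) * Real.log d ≤ δ * Real.log d :=
    mul_le_mul_of_nonneg_right hAδ hlogd
  linarith
end

section
/- Gilbert–Varshamov-type code existence: for all natural numbers k, N, D with 1 ≤ D, there exists a finite set C of codewords c : Fin k → Fin N such that any two distinct elements of C have Hamming distance at least D, and N^k ≤ C.card · ∑_{j < D} (Nat.choose k j) · (N − 1)^j. -/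
open Finset

/-- Cardinality of the Hamming ball of radius `r`. -/
lemma hamming_ball_card (k N r : ℕ) (c : Fin k → Fin N) :
    (Finset.univ.filter fun x : Fin k → Fin N => hammingDist c x ≤ r).card
      = ∑ j ∈ Finset.range (r + 1), Nat.choose k j * (N - 1) ^ j := by
  classical
  have hdist : ∀ x : Fin k → Fin N,
      hammingDist c x = (Finset.univ.filter fun i => x i ≠ c i).card := by
    intro x
    rw [hammingDist_comm]
    rfl
  -- fiber over each support set S
  have hfiber : ∀ S : Finset (Fin k),
      (Finset.univ.filter fun x : Fin k → Fin N =>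
        (Finset.univ.filter fun i => x i ≠ c i) = S).card = (N - 1) ^ S.card := by
    intro S
    have hiff : ∀ x : Fin k → Fin N,
        ((Finset.univ.filter fun i => x i ≠ c i) = S) ↔ (∀ i, x i ≠ c i ↔ i ∈ S) := by
      intro x
      constructor
      · intro h i
        rw [← h]
        simp
      · intro h
        ext i
        simp [h i]
    calc (Finset.univ.filter fun x : Fin k → Fin N =>
            (Finset.univ.filter fun i => x i ≠ c i) = S).card
        = Fintype.card {x : Fin k → Fin N // ∀ i, x i ≠ c i ↔ i ∈ S} := by
          rw [Fintype.card_subtype]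
          apply Finset.card_bij (fun x _ => x)
          · intro x hx; simp only [mem_filter, mem_univ, true_and] at hx ⊢
            exact (hiff x).mp hx
          · intro x _ y _ h; exact h
          · intro x hx; simp only [mem_filter, mem_univ, true_and] at hx
            exact ⟨x, by simp only [mem_filter, mem_univ, true_and]; exact (hiff x).mpr hx, rfl⟩
      _ = Fintype.card (∀ i : Fin k, {y : Fin N // y ≠ c i ↔ i ∈ S}) :=
          Fintype.card_congr (Equiv.subtypePiEquivPi (p := fun i y => y ≠ c i ↔ i ∈ S))
      _ = ∏ i : Fin k, Fintype.card {y : Fin N // y ≠ c i ↔ i ∈ S} := Fintype.card_pi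
      _ = ∏ i : Fin k, (if i ∈ S then N - 1 else 1) := by
          apply Finset.prod_congr rfl
          intro i _
          by_cases hi : i ∈ S
          · have : Fintype.card {y : Fin N // y ≠ c i ↔ i ∈ S}
                = Fintype.card {y : Fin N // y ≠ c i} := by
              apply Fintype.card_congr
              apply Equiv.subtypeEquivRight
              intro y; simp [hi]
            rw [this, if_pos hi]
            have h1 : Fintype.card {y : Fin N // ¬ (y = c i)} =
                Fintype.card (Fin N) - Fintype.card {y : Fin N // y = c i} :=
              Fintype.card_subtype_compl _
            simp only [Fintype.card_subtype_eq, Fintype.card_fin] at h1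
            exact h1
          · have : Fintype.card {y : Fin N // y ≠ c i ↔ i ∈ S}
                = Fintype.card {y : Fin N // y = c i} := by
              apply Fintype.card_congr
              apply Equiv.subtypeEquivRight
              intro y
              simp [hi]
            rw [this, if_neg hi, Fintype.card_subtype_eq]
      _ = (N - 1) ^ S.card := by
          rw [← Finset.prod_filter]
          simp [Finset.prod_const]
  -- group the ball by support sets
  have hmaps : ∀ x ∈ (Finset.univ.filter fun x : Fin k → Fin N => hammingDist c x ≤ r),
      (Finset.univ.filter fun i => x i ≠ c i) ∈
        (Finset.univ.filter fun S : Finset (Fin k) => S.card ≤ r) := by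
    intro x hx
    simp only [mem_filter, mem_univ, true_and] at hx ⊢
    rw [← hdist x]; exact hx
  rw [Finset.card_eq_sum_card_fiberwise hmaps]
  have hfib2 : ∀ S ∈ (Finset.univ.filter fun S : Finset (Fin k) => S.card ≤ r),
      ((Finset.univ.filter fun x : Fin k → Fin N => hammingDist c x ≤ r).filter
        (fun x => (Finset.univ.filter fun i => x i ≠ c i) = S)).card = (N - 1) ^ S.card := by
    intro S hS
    simp only [mem_filter, mem_univ, true_and] at hS
    rw [← hfiber S]
    congr 1
    ext x
    simp only [mem_filter, mem_univ, true_and, and_iff_right_iff_imp]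
    intro h
    rw [hdist x, h]
    exact hS
  rw [Finset.sum_congr rfl hfib2]
  -- group support sets by cardinality
  have hmaps2 : ∀ S ∈ (Finset.univ.filter fun S : Finset (Fin k) => S.card ≤ r),
      S.card ∈ Finset.range (r + 1) := by
    intro S hS
    simp only [mem_filter, mem_univ, true_and] at hS
    simpa [Nat.lt_succ_iff] using hS
  rw [← Finset.sum_fiberwise_of_maps_to hmaps2 (fun S => (N - 1) ^ S.card)]
  apply Finset.sum_congr rfl
  intro j hj
  simp only [mem_range, Nat.lt_succ_iff] at hj
  have hset : ((Finset.univ.filter fun S : Finset (Fin k) => S.card ≤ r).filter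
      (fun S => S.card = j)) = Finset.powersetCard j (Finset.univ : Finset (Fin k)) := by
    ext S
    simp only [mem_filter, mem_univ, true_and, Finset.mem_powersetCard_univ]
    constructor
    · rintro ⟨_, h⟩; exact h
    · intro h; exact ⟨h ▸ hj, h⟩
  rw [hset]
  calc ∑ S ∈ Finset.powersetCard j (Finset.univ : Finset (Fin k)), (N - 1) ^ S.card
      = ∑ _S ∈ Finset.powersetCard j (Finset.univ : Finset (Fin k)), (N - 1) ^ j :=
        Finset.sum_congr rfl (fun S hS => by rw [Finset.mem_powersetCard_univ.mp hS])
    _ = Nat.choose k j * (N - 1) ^ j := by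
        rw [Finset.sum_const, Finset.card_powersetCard, Finset.card_univ, Fintype.card_fin,
          smul_eq_mul]

/-- **Gilbert–Varshamov-type code existence.** For any `k`, `N`, `D ≥ 1` there is a code
`C ⊆ (Fin k → Fin N)` with minimum Hamming distance at least `D` such that
`N^k ≤ |C| · ∑_{j < D} (k choose j)(N-1)^j`. -/
theorem gilbert_varshamov_code_exists (k N D : ℕ) (hD : 1 ≤ D) :
    ∃ C : Finset (Fin k → Fin N),
      (∀ c ∈ C, ∀ c' ∈ C, c ≠ c' → D ≤ hammingDist c c') ∧
      N ^ k ≤ C.card * ∑ j ∈ Finset.range D, Nat.choose k j * (N - 1) ^ j := by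
  classical
  obtain ⟨C, hCT, hCmax⟩ :=
    (Finset.univ.filter (fun C : Finset (Fin k → Fin N) =>
      ∀ c ∈ C, ∀ c' ∈ C, c ≠ c' → D ≤ hammingDist c c')).exists_max_image Finset.card
      ⟨∅, by simp⟩
  rw [Finset.mem_filter] at hCT
  have hCgood := hCT.2
  refine ⟨C, hCgood, ?_⟩
  -- every word is within distance D - 1 of some codeword
  have hcover : (Finset.univ : Finset (Fin k → Fin N)) ⊆
      C.biUnion (fun c => Finset.univ.filter fun x => hammingDist c x ≤ D - 1) := by
    intro x _
    rw [Finset.mem_biUnion]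
    by_contra hx
    push_neg at hx
    simp only [mem_filter, mem_univ, true_and, not_le] at hx
    -- no codeword is within distance D - 1 of x, so insert x C is good
    have hxC : x ∉ C := fun h => by
      have := hx x h
      simp [hammingDist_self] at this
    have hins : ∀ c ∈ insert x C, ∀ c' ∈ insert x C, c ≠ c' → D ≤ hammingDist c c' := by
      intro c hc c' hc' hne
      rw [Finset.mem_insert] at hc hc'
      rcases hc with rfl | hc <;> rcases hc' with rfl | hc'
      · exact absurd rfl hne
      · rw [hammingDist_comm]
        have := hx c' hc'
        omega
      · have := hx c hc
        omega
      · exact hCgood c hc c' hc' hne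
    have hle := hCmax _ (Finset.mem_filter.mpr ⟨Finset.mem_univ _, hins⟩)
    rw [Finset.card_insert_of_notMem hxC] at hle
    omega
  have hcard := Finset.card_le_card hcover
  rw [Finset.card_univ, Fintype.card_pi] at hcard
  simp only [Fintype.card_fin, Finset.prod_const, Finset.card_univ, Fintype.card_fin] at hcard
  calc N ^ k ≤ (C.biUnion (fun c => Finset.univ.filter fun x => hammingDist c x ≤ D - 1)).card :=
        hcard
    _ ≤ ∑ c ∈ C, (Finset.univ.filter fun x => hammingDist c x ≤ D - 1).card :=
        Finset.card_biUnion_le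
    _ = ∑ c ∈ C, ∑ j ∈ Finset.range D, Nat.choose k j * (N - 1) ^ j := by
        apply Finset.sum_congr rfl
        intro c _
        rw [hamming_ball_card, Nat.sub_add_cancel hD]
    _ = C.card * ∑ j ∈ Finset.range D, Nat.choose k j * (N - 1) ^ j := by
        rw [Finset.sum_const, smul_eq_mul]
end

section
/- Derandomization of shared randomness: let X and R be finite types, let e : X → R → ℝ satisfy 0 ≤ e x r ≤ 1 for all x and r, and let w : R → ℝ be probability weights (0 ≤ w r for all r and ∑ r, w r = 1) such that for every x, ∑ r, w r · e x r ≤ ε. If m : ℕ satisfies (Fintype.card X : ℝ) · Real.exp(−m·ε²/2) < 1, then there exists f : Fin m → R such that for every x : X, ∑_{i : Fin m} e x (f i) ≤ 2·ε·m. -/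
open Finset Real

/-- **Derandomization of shared randomness.** If for every message `x` the average error
over shared randomness `r ∼ w` is at most `ε`, and `card X · exp(-m ε² / 2) < 1`, then
there are `m` fixed samples of the randomness whose total error is at most `2 ε m`
simultaneously for every message. -/
theorem derandomize_shared_randomness {X R : Type*} [Fintype X] [Fintype R]
    (e : X → R → ℝ) (he0 : ∀ x r, 0 ≤ e x r) (he1 : ∀ x r, e x r ≤ 1)
    (w : R → ℝ) (hw0 : ∀ r, 0 ≤ w r) (hw1 : ∑ r, w r = 1)
    (ε : ℝ) (havg : ∀ x, ∑ r, w r * e x r ≤ ε)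
    (m : ℕ) (hm : (Fintype.card X : ℝ) * Real.exp (-(m : ℝ) * ε ^ 2 / 2) < 1) :
    ∃ f : Fin m → R, ∀ x, ∑ i, e x (f i) ≤ 2 * ε * m := by
  have hRne : Nonempty R := by
    by_contra h
    rw [not_nonempty_iff] at h
    simp [Finset.univ_eq_empty] at hw1
  obtain ⟨r0⟩ := hRne
  by_cases hXe : IsEmpty X
  · exact ⟨fun _ => r0, fun x => (hXe.false x).elim⟩
  rw [not_isEmpty_iff] at hXe
  have hcard : (1:ℝ) ≤ Fintype.card X := by exact_mod_cast Fintype.card_pos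
  have hε : 0 < ε := by
    obtain ⟨x⟩ := hXe
    have h1 : 0 ≤ ∑ r, w r * e x r :=
      Finset.sum_nonneg fun r _ => mul_nonneg (hw0 r) (he0 x r)
    have h2 := havg x
    rcases lt_or_ge 0 ε with h | h
    · exact h
    exfalso
    have hε0 : ε = 0 := le_antisymm h (le_trans h1 h2)
    rw [hε0] at hm
    norm_num at hm
    have := Fintype.card_pos_iff.mpr ⟨x⟩
    omega
  by_cases hhalf : (1:ℝ)/2 ≤ ε
  · refine ⟨fun _ => r0, fun x => ?_⟩
    calc ∑ _i : Fin m, e x r0 ≤ ∑ _i : Fin m, 1 :=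
          Finset.sum_le_sum fun i _ => he1 x r0
      _ = m := by simp
      _ ≤ 2*ε*m := by nlinarith [Nat.cast_nonneg (α := ℝ) m]
  push_neg at hhalf
  set t := Real.log 2 with ht
  have h2t : Real.exp t = 2 := Real.exp_log (by norm_num)
  have htpos : 0 < t := Real.log_pos one_lt_two
  have htbig : 0.6931471803 < t := Real.log_two_gt_d9
  set P : (Fin m → R) → ℝ := fun f => ∏ i, w (f i) with hP
  have hPnn : ∀ f, 0 ≤ P f := fun f => Finset.prod_nonneg fun i _ => hw0 _
  have hPsum : ∑ f : Fin m → R, P f = 1 := by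
    have h := Finset.prod_univ_sum (fun _ : Fin m => (Finset.univ : Finset R))
      (fun _ r => w r)
    rw [Fintype.piFinset_univ] at h
    rw [hP, ← h, hw1]
    simp
  -- key per-x Chernoff bound
  have key : ∀ x : X, ∑ f ∈ Finset.univ.filter (fun f : Fin m → R => 2*ε*m < ∑ i, e x (f i)), P f
      ≤ Real.exp (-(m : ℝ) * ε ^ 2 / 2) := by
    intro x
    -- pointwise convexity bound
    have hexp : ∀ r, Real.exp (t * e x r) ≤ 1 + e x r := by
      intro r
      have hz0 := he0 x r
      have hz1 := he1 x r
      have hc := convexOn_exp.2 (Set.mem_univ (0:ℝ)) (Set.mem_univ t)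
        (by linarith : (0:ℝ) ≤ 1 - e x r) hz0 (by ring)
      simp only [smul_eq_mul, mul_zero, zero_add, Real.exp_zero, h2t] at hc
      calc Real.exp (t * e x r) = Real.exp (e x r * t) := by ring_nf
        _ ≤ (1 - e x r) * 1 + e x r * 2 := hc
        _ = 1 + e x r := by ring
    have hmom : ∑ r, w r * Real.exp (t * e x r) ≤ Real.exp ε := by
      calc ∑ r, w r * Real.exp (t * e x r) ≤ ∑ r, w r * (1 + e x r) :=
            Finset.sum_le_sum fun r _ => mul_le_mul_of_nonneg_left (hexp r) (hw0 r)
        _ = (∑ r, w r) + ∑ r, w r * e x r := by rw [← Finset.sum_add_distrib]; ring_nf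
        _ ≤ 1 + ε := by rw [hw1]; linarith [havg x]
        _ ≤ Real.exp ε := by linarith [Real.add_one_le_exp ε]
    have hmomnn : 0 ≤ ∑ r, w r * Real.exp (t * e x r) :=
      Finset.sum_nonneg fun r _ => mul_nonneg (hw0 r) (Real.exp_pos _).le
    calc ∑ f ∈ Finset.univ.filter (fun f : Fin m → R => 2*ε*m < ∑ i, e x (f i)), P f
        ≤ ∑ f ∈ Finset.univ.filter (fun f : Fin m → R => 2*ε*m < ∑ i, e x (f i)),
            P f * Real.exp (t * ((∑ i, e x (f i)) - 2*ε*m)) := by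
          refine Finset.sum_le_sum fun f hf => ?_
          rw [Finset.mem_filter] at hf
          have : (1:ℝ) ≤ Real.exp (t * ((∑ i, e x (f i)) - 2*ε*m)) := by
            rw [← Real.exp_zero]
            exact Real.exp_le_exp.2 (by nlinarith [hf.2])
          nlinarith [hPnn f]
      _ ≤ ∑ f : Fin m → R, P f * Real.exp (t * ((∑ i, e x (f i)) - 2*ε*m)) := by
          refine Finset.sum_le_sum_of_subset_of_nonneg (Finset.filter_subset _ _)
            fun f _ _ => mul_nonneg (hPnn f) (Real.exp_pos _).le
      _ = Real.exp (-(t * (2*ε*m))) *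
            ∑ f : Fin m → R, ∏ i, (w (f i) * Real.exp (t * e x (f i))) := by
          rw [Finset.mul_sum]
          refine Finset.sum_congr rfl fun f _ => ?_
          rw [Finset.prod_mul_distrib]
          have : ∏ i, Real.exp (t * e x (f i)) = Real.exp (∑ i, t * e x (f i)) :=
            (Real.exp_sum _ _).symm
          rw [this, ← Finset.mul_sum, hP]
          rw [mul_sub, Real.exp_sub, Real.exp_neg]
          ring
      _ = Real.exp (-(t * (2*ε*m))) * (∑ r, w r * Real.exp (t * e x r)) ^ m := by
          congr 1
          have h := Finset.prod_univ_sum (fun _ : Fin m => (Finset.univ : Finset R))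
            (fun _ r => w r * Real.exp (t * e x r))
          rw [Fintype.piFinset_univ] at h
          rw [← h]
          simp
      _ ≤ Real.exp (-(t * (2*ε*m))) * (Real.exp ε) ^ m := by
          exact mul_le_mul_of_nonneg_left (pow_le_pow_left₀ hmomnn hmom m)
            (Real.exp_pos _).le
      _ = Real.exp (ε * m - t * (2*ε*m)) := by
          rw [← Real.exp_nat_mul, ← Real.exp_add]
          ring_nf
      _ ≤ Real.exp (-(m : ℝ) * ε ^ 2 / 2) := by
          refine Real.exp_le_exp.2 ?_
          have hmnn : (0:ℝ) ≤ m := Nat.cast_nonneg m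
          nlinarith [mul_nonneg (mul_nonneg hmnn hε.le)
            (by linarith : (0:ℝ) ≤ 2*t - 1 - ε/2)]
  by_contra hcon
  push_neg at hcon
  have h1 : (1:ℝ) ≤ ∑ x : X,
      ∑ f ∈ Finset.univ.filter (fun f : Fin m → R => 2*ε*m < ∑ i, e x (f i)), P f := by
    have hstep : ∀ f : Fin m → R,
        P f ≤ ∑ x : X, if 2*ε*m < ∑ i, e x (f i) then P f else 0 := by
      intro f
      obtain ⟨x, hx⟩ := hcon f
      have hxmem : x ∈ (Finset.univ : Finset X) := Finset.mem_univ x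
      have := Finset.single_le_sum
        (f := fun x : X => if 2*ε*m < ∑ i, e x (f i) then P f else 0)
        (fun y _ => by split_ifs; exacts [hPnn f, le_rfl]) hxmem
      simpa [if_pos hx] using this
    calc (1:ℝ) = ∑ f : Fin m → R, P f := hPsum.symm
      _ ≤ ∑ f : Fin m → R, ∑ x : X, if 2*ε*m < ∑ i, e x (f i) then P f else 0 :=
          Finset.sum_le_sum fun f _ => hstep f
      _ = ∑ x : X, ∑ f : Fin m → R, if 2*ε*m < ∑ i, e x (f i) then P f else 0 :=
          Finset.sum_comm
      _ = _ := by
          refine Finset.sum_congr rfl fun x _ => ?_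
          rw [Finset.sum_filter]
  have h2 : ∑ x : X,
      ∑ f ∈ Finset.univ.filter (fun f : Fin m → R => 2*ε*m < ∑ i, e x (f i)), P f
      ≤ (Fintype.card X : ℝ) * Real.exp (-(m : ℝ) * ε ^ 2 / 2) := by
    calc _ ≤ ∑ _x : X, Real.exp (-(m : ℝ) * ε ^ 2 / 2) :=
          Finset.sum_le_sum fun x _ => key x
      _ = _ := by rw [Finset.sum_const, Finset.card_univ, nsmul_eq_mul]
  linarith
end

section
/- Randomization by discrete Weyl (generalized Pauli) operators: let d ≥ 1, let ω := Complex.exp(2·π·I/d), let X : Matrix (Fin d) (Fin d) ℂ be the cyclic shift matrix with entries X i j = 1 if i = j + 1 (addition in Fin d) and 0 otherwise, and let Z := Matrix.diagonal (fun j => ω^(j : ℕ)). Then for every M : Matrix (Fin d) (Fin d) ℂ, ∑_{a : Fin d} ∑_{b : Fin d} (X^(a:ℕ) * Z^(b:ℕ)) * M * (X^(a:ℕ) * Z^(b:ℕ))ᴴ = (d · M.trace) • (1 : Matrix (Fin d) (Fin d) ℂ). Equivalently, (1/d²)·∑_{a,b} U_{ab} M U_{ab}† equals (trace(M)/d)·I,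 so the uniform Weyl twirl sends every state to the maximally mixed state. -/
open Matrix

/-- **Randomization by discrete Weyl (generalized Pauli) operators.** The uniform Weyl
twirl sends every matrix `M` to `(tr M / d) · I` (stated here without the `1/d²`
normalization): `∑_{a,b} (X^a Z^b) M (X^a Z^b)ᴴ = (d · tr M) • 1`. -/
theorem weyl_twirl {d : ℕ} [NeZero d] (hd : 1 ≤ d)
    (ω : ℂ) (hω : ω = Complex.exp (2 * (Real.pi : ℂ) * Complex.I / (d : ℂ)))
    (X Z : Matrix (Fin d) (Fin d) ℂ)
    (hX : ∀ i j : Fin d, X i j = if i = j + 1 then 1 else 0)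
    (hZ : Z = Matrix.diagonal fun j : Fin d => ω ^ (j : ℕ))
    (M : Matrix (Fin d) (Fin d) ℂ) :
    ∑ a : Fin d, ∑ b : Fin d,
        X ^ (a : ℕ) * Z ^ (b : ℕ) * M * (X ^ (a : ℕ) * Z ^ (b : ℕ))ᴴ =
      ((d : ℂ) * M.trace) • (1 : Matrix (Fin d) (Fin d) ℂ) := by
  have hdne : d ≠ 0 := NeZero.ne d
  have hprim : IsPrimitiveRoot ω d := by
    rw [hω]; exact Complex.isPrimitiveRoot_exp d hdne
  have hωabs : ∀ k : ℕ, ‖ω ^ k‖ = 1 := by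
    intro k
    have hω' : ω = Complex.exp ((2 * Real.pi / d : ℝ) * Complex.I) := by
      rw [hω]; push_cast; ring
    rw [norm_pow, hω', Complex.norm_exp_ofReal_mul_I, one_pow]
  -- powers of X
  open Fin.NatCast Fin.CommRing in
  have hXpow : ∀ (n : ℕ) (i j : Fin d), (X ^ n) i j = if i = j + (n : Fin d) then 1 else 0 := by
    intro n
    induction n with
    | zero => intro i j; simp [Matrix.one_apply]
    | succ n ih =>
      intro i j
      rw [pow_succ, Matrix.mul_apply]
      simp only [ih, hX, mul_ite, mul_one, mul_zero, Finset.sum_ite_eq',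
        Finset.mem_univ, if_true]
      have : j + 1 + (n : Fin d) = j + ((n + 1 : ℕ) : Fin d) := by push_cast; ring
      rw [this]
  -- entries of U = X^a Z^b
  open Fin.NatCast Fin.CommRing in
  have hU : ∀ (a b : Fin d) (i j : Fin d),
      (X ^ (a : ℕ) * Z ^ (b : ℕ)) i j
        = (if j = i - a then 1 else 0) * (ω ^ (j : ℕ)) ^ (b : ℕ) := by
    intro a b i j
    rw [hZ, Matrix.diagonal_pow, Matrix.mul_diagonal, hXpow, Fin.cast_val_eq_self,
      Pi.pow_apply]
    congr 1
    exact if_congr (by rw [eq_sub_iff_add_eq, eq_comm]) rfl rfl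
  -- entries of the conjugated matrix
  have hEntry : ∀ (a b : Fin d) (i j : Fin d),
      (X ^ (a : ℕ) * Z ^ (b : ℕ) * M * (X ^ (a : ℕ) * Z ^ (b : ℕ))ᴴ) i j
        = (ω ^ ((i - a : Fin d) : ℕ) * (starRingEnd ℂ) (ω ^ ((j - a : Fin d) : ℕ))) ^ (b : ℕ)
            * M (i - a) (j - a) := by
    intro a b i j
    simp only [Matrix.mul_apply, Matrix.conjTranspose_apply, hU,
      apply_ite (star : ℂ → ℂ), star_zero, star_one, ite_mul, one_mul, zero_mul,
      mul_ite, mul_zero, Finset.sum_ite_eq', Finset.mem_univ, if_true]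
    simp only [mul_pow, star_pow, starRingEnd_apply, star_mul', star_one]
    ring
  -- geometric sums of roots of unity
  have hgeom : ∀ i' j' : Fin d,
      (∑ b : Fin d, (ω ^ (i' : ℕ) * (starRingEnd ℂ) (ω ^ (j' : ℕ))) ^ (b : ℕ))
        = if i' = j' then (d : ℂ) else 0 := by
    intro i' j'
    set ζ : ℂ := ω ^ (i' : ℕ) * (starRingEnd ℂ) (ω ^ (j' : ℕ)) with hζ
    rw [Fin.sum_univ_eq_sum_range (fun b => ζ ^ b) d]
    by_cases h : i' = j'
    · subst h
      have h1 : ζ = 1 := by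
        rw [hζ, Complex.mul_conj']
        norm_cast
        rw [hωabs, one_pow]
      simp [h1]
    · rw [if_neg h]
      have hne0 : ω ^ (j' : ℕ) ≠ 0 := by
        intro h0
        have := hωabs (j' : ℕ); rw [h0] at this; simp at this
      have hinv : (starRingEnd ℂ) (ω ^ (j' : ℕ)) = (ω ^ (j' : ℕ))⁻¹ :=
        (Complex.inv_eq_conj (hωabs _)).symm
      have hζne : ζ ≠ 1 := by
        rw [hζ, hinv]
        intro h1
        have : ω ^ (i' : ℕ) = ω ^ (j' : ℕ) := by
          field_simp at h1
          exact h1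
        exact h (Fin.ext (hprim.pow_inj i'.isLt j'.isLt this))
      have hζd : ζ ^ d = 1 := by
        rw [hζ, hinv, mul_pow, inv_pow, ← pow_mul, ← pow_mul, mul_comm (i' : ℕ) d,
          mul_comm (j' : ℕ) d, pow_mul, pow_mul, hprim.pow_eq_one, one_pow, one_pow,
          inv_one, mul_one]
      rw [geom_sum_eq hζne, hζd, sub_self, zero_div]
  -- put it together
  ext i j
  simp only [Matrix.sum_apply, hEntry, Matrix.smul_apply, Matrix.one_apply, smul_eq_mul]
  have hswap : ∀ a : Fin d, (∑ b : Fin d,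
      (ω ^ ((i - a : Fin d) : ℕ) * (starRingEnd ℂ) (ω ^ ((j - a : Fin d) : ℕ))) ^ (b : ℕ)
        * M (i - a) (j - a))
      = (if i = j then (d : ℂ) else 0) * M (i - a) (j - a) := by
    intro a
    rw [← Finset.sum_mul, hgeom]
    congr 1
    exact if_congr sub_left_inj rfl rfl
  rw [Finset.sum_congr rfl fun a _ => hswap a]
  by_cases h : i = j
  · subst h
    simp only [eq_self_iff_true, if_true, mul_one]
    rw [← Finset.mul_sum]
    congr 1
    have htr : M.trace = ∑ k, M k k := rfl
    rw [htr]
    exact Fintype.sum_equiv (Equiv.subLeft i) (fun a => M (i - a) (i - a))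
      (fun k => M k k) (fun a => by simp)
  · simp [h]
end
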